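/- arXiv:2111.01062 — 2 statements merged into one kernel-verified Lean document; each statement's English description precedes it below -/
import Mathlib

section
/- The function 𝒫_V(z,λ)=det(D_V(z)−λI) is a Laurent polynomial in z_1,…,z_d and a polynomial in λ; that is, (z,λ)↦(z_1^{Q/q_1}⋯z_d^{Q/q_d})·𝒫_V(z,λ) extends to a polynomial function on ℂ^{d+1}. Moreover, as a polynomial in λ it has degree exactly Q with leading coefficient (−1)^Q, and for each j=1,…,d its degree in z_j and in z_j^{−1} is exactly Q/q_j, the monomials z_j^{Q/q_j} and z_j^{−Q/q_j} appearing in 𝒫_V with coefficient ±1. -/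
noncomputable section

/-- The discrete Laplacian on `ℤ^d`: `(Δu)(n) = Σ_{‖n'-n‖₁ = 1} u(n')`. -/
def discLap {d : ℕ} (u : (Fin d → ℤ) → ℂ) (n : Fin d → ℤ) : ℂ :=
  ∑ j : Fin d, (u (Function.update n j (n j + 1)) + u (Function.update n j (n j - 1)))

/-- Reduction of an integer modulo `q`, as an element of `Fin q`. -/
def fem (q : ℕ+) (a : ℤ) : Fin (q : ℕ) :=
  ⟨(a % ((q : ℕ) : ℤ)).toNat, by
    have hq : (0:ℤ) < ((q : ℕ) : ℤ) := by exact_mod_cast q.pos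
    have h1 : 0 ≤ a % ((q : ℕ) : ℤ) := Int.emod_nonneg a (ne_of_gt hq)
    have h2 : a % ((q : ℕ) : ℤ) < ((q : ℕ) : ℤ) := Int.emod_lt_of_pos a hq
    omega⟩

/-- Extension of a function on the fundamental domain `W` to `ℤ^d` using the
Floquet boundary conditions `u(n + qⱼ eⱼ) = zⱼ u(n)`. -/
def extendBC {d : ℕ} (q : Fin d → ℕ+) (z : Fin d → ℂ)
    (u : (∀ j, Fin ((q j : ℕ))) → ℂ) : (Fin d → ℤ) → ℂ :=
  fun n => (∏ j, z j ^ (n j / ((q j : ℕ) : ℤ))) * u (fun j => fem (q j) (n j))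

/-- The matrix `D_V(z)` of the Floquet reduction of `-Δ + V` to the fundamental domain. -/
def DVmat {d : ℕ} (q : Fin d → ℕ+) (V : (Fin d → ℤ) → ℂ) (z : Fin d → ℂ) :
    Matrix (∀ j, Fin ((q j : ℕ))) (∀ j, Fin ((q j : ℕ))) ℂ :=
  fun n n' =>
    -(discLap (extendBC q z (Pi.single n' 1)) (fun j => ((n j : ℕ) : ℤ)))
      + V (fun j => ((n j : ℕ) : ℤ)) * (if n = n' then 1 else 0)

/-- `𝒫_V(z, λ) = det(D_V(z) - λ I)`. -/
def scriptP {d : ℕ} (q : Fin d → ℕ+) (V : (Fin d → ℤ) → ℂ) (z : Fin d → ℂ)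
    (lam : ℂ) : ℂ :=
  Matrix.det (DVmat q V z - lam • (1 : Matrix (∀ j, Fin ((q j : ℕ))) (∀ j, Fin ((q j : ℕ))) ℂ))

/-- `Γ`-periodicity for a complex-valued function on `ℤ^d`. -/
def IsPeriodic {d : ℕ} (q : Fin d → ℕ+) (V : (Fin d → ℤ) → ℂ) : Prop :=
  ∀ (n : Fin d → ℤ) (j : Fin d), V (Function.update n j (n j + ((q j : ℕ) : ℤ))) = V n

/-- `Γ`-periodicity for a real-valued function on `ℤ^d`. -/
def IsPeriodicR {d : ℕ} (q : Fin d → ℕ+) (V : (Fin d → ℤ) → ℝ) : Prop :=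
  ∀ (n : Fin d → ℤ) (j : Fin d), V (Function.update n j (n j + ((q j : ℕ) : ℤ))) = V n

/-- `ρ_m = e^{2πi m / q}`. -/
def rho (q : ℕ+) (m : ℕ) : ℂ :=
  Complex.exp (2 * (Real.pi : ℂ) * Complex.I * (m : ℂ) / ((q : ℕ) : ℂ))

/-- The discrete Fourier transform `V̂(l)` of a periodic potential. -/
def dft {d : ℕ} (q : Fin d → ℕ+) (V : (Fin d → ℤ) → ℂ) (l : Fin d → ℤ) : ℂ :=
  (1 / ((∏ j, (q j : ℕ) : ℕ) : ℂ)) * ∑ n : (∀ j, Fin ((q j : ℕ))),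
    V (fun j => ((n j : ℕ) : ℤ)) *
      Complex.exp (-(2 * (Real.pi : ℂ) * Complex.I) * ∑ j, (l j : ℂ) * ((n j : ℕ) : ℂ) / ((q j : ℕ) : ℂ))

/-- The diagonal matrix `A(z)` with entries `-Σⱼ (ρʲ_{nⱼ} zⱼ + 1/(ρʲ_{nⱼ} zⱼ))`. -/
def Amat {d : ℕ} (q : Fin d → ℕ+) (z : Fin d → ℂ) :
    Matrix (∀ j, Fin ((q j : ℕ))) (∀ j, Fin ((q j : ℕ))) ℂ :=
  Matrix.diagonal fun n => -(∑ j, (rho (q j) (n j) * z j + (rho (q j) (n j) * z j)⁻¹))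

/-- The matrix `B_V` with entries `V̂(n - n')`. -/
def Bmat {d : ℕ} (q : Fin d → ℕ+) (V : (Fin d → ℤ) → ℂ) :
    Matrix (∀ j, Fin ((q j : ℕ))) (∀ j, Fin ((q j : ℕ))) ℂ :=
  fun n n' => dft q V (fun j => ((n j : ℕ) : ℤ) - ((n' j : ℕ) : ℤ))

/-- The average `[V]` of a periodic potential. -/
def avgPot {d : ℕ} (q : Fin d → ℕ+) (V : (Fin d → ℤ) → ℂ) : ℂ :=
  (1 / ((∏ j, (q j : ℕ) : ℕ) : ℂ)) * ∑ n : (∀ j, Fin ((q j : ℕ))), V (fun j => ((n j : ℕ) : ℤ))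

/-- The Fermi variety `F_λ(V)`. -/
def FermiVariety {d : ℕ} (q : Fin d → ℕ+) (V : (Fin d → ℤ) → ℂ) (lam : ℂ) :
    Set (Fin d → ℂ) :=
  {k | ∃ u : (Fin d → ℤ) → ℂ, u ≠ 0 ∧
    (∀ n, -(discLap u n) + V n * u n = lam * u n) ∧
    (∀ (n : Fin d → ℤ) (j : Fin d),
      u (Function.update n j (n j + ((q j : ℕ) : ℤ)))
        = Complex.exp (2 * (Real.pi : ℂ) * Complex.I * k j) * u n)}

/-- Floquet isospectrality of two real periodic potentials. -/
def FloquetIso {d : ℕ} (q : Fin d → ℕ+) (V Y : (Fin d → ℤ) → ℝ) : Prop :=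
  ∀ k : Fin d → ℝ,
    spectrum ℂ (DVmat q (fun n => ((V n : ℝ) : ℂ))
        (fun j => Complex.exp (2 * (Real.pi : ℂ) * Complex.I * (k j : ℂ))))
      = spectrum ℂ (DVmat q (fun n => ((Y n : ℝ) : ℂ))
        (fun j => Complex.exp (2 * (Real.pi : ℂ) * Complex.I * (k j : ℂ))))

/-- A function on `(ℂ^*)^d` given by a Laurent polynomial. -/
def IsLaurent {d : ℕ} (f : (Fin d → ℂ) → ℂ) : Prop :=
  ∃ c : (Fin d → ℤ) →₀ ℂ, ∀ z : Fin d → ℂ, (∀ j, z j ≠ 0) →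
    f z = c.sum fun a C => C * ∏ j, z j ^ a j

/-- A Laurent monomial `C z₁^{a₁} ⋯ z_d^{a_d}` with `C ≠ 0`. -/
def IsMonomial {d : ℕ} (f : (Fin d → ℂ) → ℂ) : Prop :=
  ∃ (C : ℂ) (a : Fin d → ℤ), C ≠ 0 ∧ ∀ z : Fin d → ℂ, (∀ j, z j ≠ 0) →
    f z = C * ∏ j, z j ^ a j

/-- Irreducibility of a Laurent polynomial: no factorization into two non-monomial
Laurent polynomials. -/
def LaurentIrreducible {d : ℕ} (h : (Fin d → ℂ) → ℂ) : Prop :=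
  ¬ ∃ f g : (Fin d → ℂ) → ℂ, IsLaurent f ∧ IsLaurent g ∧
      ¬ IsMonomial f ∧ ¬ IsMonomial g ∧
      ∀ z : Fin d → ℂ, (∀ j, z j ≠ 0) → h z = f z * g z

namespace Stmt1

variable {d : ℕ} (q : Fin d → ℕ+)

abbrev GG (d : ℕ) := (Fin d → ℤ) × ℕ
abbrev AA (d : ℕ) := AddMonoidAlgebra ℂ (GG d)

instance (d : ℕ) : CoeFun (AA d) (fun _ => GG d → ℂ) := ⟨fun f => f.coeff⟩

abbrev _root_.AddMonoidAlgebra.support {R M : Type*} [Semiring R] (f : AddMonoidAlgebra R M) :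
    Finset M := f.coeff.support

abbrev _root_.AddMonoidAlgebra.sum {R M N : Type*} [Semiring R] [AddCommMonoid N]
    (f : AddMonoidAlgebra R M) (g : M → R → N) : N := f.coeff.sum g

abbrev II (q : Fin d → ℕ+) := ∀ j : Fin d, Fin ((q j : ℕ))

instance (j : Fin d) : NeZero ((q j : ℕ)) := ⟨(q j).pos.ne'⟩

lemma val_add_one {m : ℕ} [NeZero m] (a : Fin m) :
    ((a + 1 : Fin m) : ℕ) = if (a : ℕ) + 1 = m then 0 else (a : ℕ) + 1 := by
  have hm : 0 < m := Nat.pos_of_ne_zero (NeZero.ne m)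
  have ha : (a : ℕ) < m := a.isLt
  rw [Fin.val_add, Fin.val_one']
  rcases Nat.lt_or_ge ((a : ℕ) + 1) m with h | h
  · rw [if_neg (by omega)]
    rcases Nat.lt_or_ge 1 m with h1 | h1
    · rw [Nat.mod_eq_of_lt h1, Nat.mod_eq_of_lt h]
    · interval_cases m <;> omega
  · have : (a : ℕ) + 1 = m := by omega
    rw [if_pos this]
    rcases Nat.lt_or_ge 1 m with h1 | h1
    · rw [Nat.mod_eq_of_lt h1, this, Nat.mod_self]
    · interval_cases m <;> simp
lemma val_sub_one {m : ℕ} [NeZero m] (a : Fin m) :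
    ((a - 1 : Fin m) : ℕ) = if (a : ℕ) = 0 then m - 1 else (a : ℕ) - 1 := by
  have hm : 0 < m := Nat.pos_of_ne_zero (NeZero.ne m)
  have ha : (a : ℕ) < m := a.isLt
  rw [Fin.sub_def]
  simp only [Fin.val_one']
  rcases Nat.lt_or_ge 1 m with h1 | h1
  · rw [Nat.mod_eq_of_lt h1]
    rcases eq_or_ne (a : ℕ) 0 with h | h
    · rw [if_pos h, h]
      simp [Nat.mod_eq_of_lt (show m - 1 < m by omega)]
    · rw [if_neg h]
      have : (m - 1) + (a : ℕ) = m + ((a:ℕ) - 1) := by omega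
      rw [this, Nat.add_mod_left, Nat.mod_eq_of_lt (by omega)]
  · interval_cases m
    revert a
    decide


def nZ (n : II q) : Fin d → ℤ := fun j => ((n j : ℕ) : ℤ)

def wp (n : II q) (i : Fin d) : ℤ := if (n i : ℕ) + 1 = (q i : ℕ) then 1 else 0
def wm (n : II q) (i : Fin d) : ℤ := if (n i : ℕ) = 0 then -1 else 0

lemma fem_val (j : Fin d) (n : Fin ((q j : ℕ))) : fem (q j) (((n : ℕ) : ℤ)) = n := by
  have h := n.isLt
  apply Fin.ext
  simp only [fem]
  rw [Int.emod_eq_of_lt (by positivity) (by exact_mod_cast h)]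
  simp

lemma fem_succ (j : Fin d) (n : Fin ((q j : ℕ))) :
    fem (q j) (((n : ℕ) : ℤ) + 1) = n + 1 := by
  have h := n.isLt
  have hq := (q j).pos
  apply Fin.ext
  simp only [fem]
  rw [val_add_one]
  split_ifs with hw
  · rw [show ((n:ℕ):ℤ) + 1 = ((q j : ℕ) : ℤ) by exact_mod_cast hw]
    simp
  · rw [Int.emod_eq_of_lt (by positivity) (by push_cast; omega)]
    omega

lemma fem_pred (j : Fin d) (n : Fin ((q j : ℕ))) :
    fem (q j) (((n : ℕ) : ℤ) - 1) = n - 1 := by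
  have h := n.isLt
  have hq := (q j).pos
  apply Fin.ext
  simp only [fem]
  rw [val_sub_one]
  split_ifs with hw
  · rw [hw]
    have e : ((0:ℕ):ℤ) - 1 = (((q j :ℕ):ℤ) - 1) + ((q j : ℕ):ℤ) * (-1) := by ring
    rw [e, Int.add_mul_emod_self_left, Int.emod_eq_of_lt (by push_cast; omega) (by omega)]
    omega
  · rw [Int.emod_eq_of_lt (by push_cast; omega) (by push_cast; omega)]
    omega

lemma div_self' (j : Fin d) (n : Fin ((q j : ℕ))) : ((n : ℕ) : ℤ) / ((q j : ℕ) : ℤ) = 0 :=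
  Int.ediv_eq_zero_of_lt (by positivity) (by exact_mod_cast n.isLt)

lemma div_succ (j : Fin d) (n : Fin ((q j : ℕ))) :
    (((n : ℕ) : ℤ) + 1) / ((q j : ℕ) : ℤ) = if (n : ℕ) + 1 = (q j : ℕ) then 1 else 0 := by
  have h := n.isLt
  have hq := (q j).pos
  split_ifs with hw
  · rw [show ((n:ℕ):ℤ) + 1 = ((q j : ℕ) : ℤ) by exact_mod_cast hw]
    simp [Int.ediv_self]
  · exact Int.ediv_eq_zero_of_lt (by positivity) (by push_cast; omega)

lemma div_pred (j : Fin d) (n : Fin ((q j : ℕ))) :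
    (((n : ℕ) : ℤ) - 1) / ((q j : ℕ) : ℤ) = if (n : ℕ) = 0 then -1 else 0 := by
  have h := n.isLt
  have hq := (q j).pos
  have hqz : ((q j : ℕ) : ℤ) ≠ 0 := by positivity
  split_ifs with hw
  · rw [hw]
    have e : ((0:ℕ):ℤ) - 1 = (((q j :ℕ):ℤ) - 1) + ((q j : ℕ):ℤ) * (-1) := by ring
    rw [e, Int.add_mul_ediv_left _ _ hqz,
      Int.ediv_eq_zero_of_lt (by push_cast; omega) (by omega)]
    ring
  · exact Int.ediv_eq_zero_of_lt (by push_cast; omega) (by push_cast; omega)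

lemma extend_plus (z : Fin d → ℂ) (n n' : II q) (i : Fin d) :
    extendBC q z (Pi.single n' 1) (Function.update (nZ q n) i (nZ q n i + 1))
      = (if n' = Function.update n i (n i + 1) then z i ^ (wp q n i) else 0) := by
  rw [extendBC]
  have h1 : (∏ j, z j ^ (Function.update (nZ q n) i (nZ q n i + 1) j / ((q j : ℕ) : ℤ)))
      = z i ^ (wp q n i) := by
    rw [Finset.prod_eq_single i]
    · rw [Function.update_self, nZ]
      rw [div_succ]
      rfl
    · intro b _ hb
      rw [Function.update_of_ne hb, nZ, div_self', zpow_zero]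
    · intro h; exact absurd (Finset.mem_univ i) h
  have e : (fun j => fem (q j) (Function.update (nZ q n) i (nZ q n i + 1) j))
      = Function.update n i (n i + 1) := by
    funext j
    rcases eq_or_ne j i with rfl | hj
    · rw [Function.update_self, Function.update_self, nZ, fem_succ]
    · rw [Function.update_of_ne hj, Function.update_of_ne hj, nZ, fem_val]
  rw [h1, e, Pi.single_apply, mul_ite, mul_one, mul_zero]
  exact if_congr eq_comm rfl rfl

lemma extend_minus (z : Fin d → ℂ) (n n' : II q) (i : Fin d) :
    extendBC q z (Pi.single n' 1) (Function.update (nZ q n) i (nZ q n i - 1))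
      = (if n' = Function.update n i (n i - 1) then z i ^ (wm q n i) else 0) := by
  rw [extendBC]
  have h1 : (∏ j, z j ^ (Function.update (nZ q n) i (nZ q n i - 1) j / ((q j : ℕ) : ℤ)))
      = z i ^ (wm q n i) := by
    rw [Finset.prod_eq_single i]
    · rw [Function.update_self, nZ]
      rw [div_pred]
      rfl
    · intro b _ hb
      rw [Function.update_of_ne hb, nZ, div_self', zpow_zero]
    · intro h; exact absurd (Finset.mem_univ i) h
  have e : (fun j => fem (q j) (Function.update (nZ q n) i (nZ q n i - 1) j))
      = Function.update n i (n i - 1) := by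
    funext j
    rcases eq_or_ne j i with rfl | hj
    · rw [Function.update_self, Function.update_self, nZ, fem_pred]
    · rw [Function.update_of_ne hj, Function.update_of_ne hj, nZ, fem_val]
  rw [h1, e, Pi.single_apply, mul_ite, mul_one, mul_zero]
  exact if_congr eq_comm rfl rfl

lemma DV_apply (V : (Fin d → ℤ) → ℂ) (z : Fin d → ℂ) (n n' : II q) :
    DVmat q V z n n' = V (nZ q n) * (if n = n' then 1 else 0)
      - ∑ i, ((if n' = Function.update n i (n i + 1) then z i ^ (wp q n i) else 0)
            + (if n' = Function.update n i (n i - 1) then z i ^ (wm q n i) else 0)) := by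
  rw [DVmat, discLap]
  have : ∀ i : Fin d,
      extendBC q z (Pi.single n' 1) (Function.update (fun j => ((n j : ℕ):ℤ)) i ((fun j => ((n j : ℕ):ℤ)) i + 1))
        + extendBC q z (Pi.single n' 1) (Function.update (fun j => ((n j : ℕ):ℤ)) i ((fun j => ((n j : ℕ):ℤ)) i - 1))
      = (if n' = Function.update n i (n i + 1) then z i ^ (wp q n i) else 0)
        + (if n' = Function.update n i (n i - 1) then z i ^ (wm q n i) else 0) := by
    intro i
    rw [show (fun j => ((n j : ℕ):ℤ)) = nZ q n from rfl, extend_plus, extend_minus]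
  rw [Finset.sum_congr rfl (fun i _ => this i)]
  rw [show (fun j => ((n j : ℕ):ℤ)) = nZ q n from rfl]
  ring






def ment (V : (Fin d → ℤ) → ℂ) (n n' : II q) : AA d :=
  (if n' = n then
      AddMonoidAlgebra.single ((0 : Fin d → ℤ), (1:ℕ)) (-1 : ℂ)
        + AddMonoidAlgebra.single ((0 : Fin d → ℤ), (0:ℕ)) (V (nZ q n))
    else 0)
  + ∑ i : Fin d,
      ((if n' = Function.update n i (n i + 1) then
          AddMonoidAlgebra.single ((Pi.single i (wp q n i) : Fin d → ℤ), (0:ℕ)) (-1 : ℂ) else 0)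
       + (if n' = Function.update n i (n i - 1) then
          AddMonoidAlgebra.single ((Pi.single i (wm q n i) : Fin d → ℤ), (0:ℕ)) (-1 : ℂ) else 0))

def phiMon (z : Fin d → ℂ) (lam : ℂ) (hz : ∀ j, z j ≠ 0) : Multiplicative (GG d) →* ℂ where
  toFun := fun x => (∏ j, z j ^ ((Multiplicative.toAdd x).1 j)) * lam ^ (Multiplicative.toAdd x).2
  map_one' := by simp
  map_mul' := by
    intro x y
    show (∏ j, z j ^ ((Multiplicative.toAdd x).1 j + (Multiplicative.toAdd y).1 j))
        * lam ^ ((Multiplicative.toAdd x).2 + (Multiplicative.toAdd y).2) = _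
    rw [pow_add]
    rw [Finset.prod_congr rfl (fun j _ => zpow_add₀ (hz j) _ _), Finset.prod_mul_distrib]
    ring

def phi (z : Fin d → ℂ) (lam : ℂ) (hz : ∀ j, z j ≠ 0) : AA d →+* ℂ :=
  ((AddMonoidAlgebra.lift ℂ ℂ (GG d)) (phiMon z lam hz)).toRingHom

lemma phi_single (z : Fin d → ℂ) (lam : ℂ) (hz : ∀ j, z j ≠ 0) (a : GG d) (c : ℂ) :
    phi z lam hz (AddMonoidAlgebra.single a c) = c * (∏ j, z j ^ (a.1 j)) * lam ^ a.2 := by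
  show ((AddMonoidAlgebra.lift ℂ ℂ (GG d)) (phiMon z lam hz)) (AddMonoidAlgebra.single a c) = _
  rw [AddMonoidAlgebra.lift_single]
  show c * ((∏ j, z j ^ (a.1 j)) * lam ^ a.2) = _
  ring

lemma prod_zpow_single (z : Fin d → ℂ) (i : Fin d) (w : ℤ) :
    (∏ j, z j ^ ((Pi.single i w : Fin d → ℤ) j)) = z i ^ w := by
  rw [Finset.prod_eq_single i]
  · rw [Pi.single_eq_same]
  · intro b _ hb
    rw [Pi.single_eq_of_ne hb, zpow_zero]
  · intro h; exact absurd (Finset.mem_univ i) h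

lemma phi_ment (V : (Fin d → ℤ) → ℂ) (z : Fin d → ℂ) (lam : ℂ) (hz : ∀ j, z j ≠ 0)
    (n n' : II q) :
    phi z lam hz (ment q V n n')
      = (DVmat q V z - lam • (1 : Matrix (II q) (II q) ℂ)) n n' := by
  have hite : ∀ (c : Prop) (_ : Decidable c) (x : AA d),
      phi z lam hz (if c then x else 0) = if c then phi z lam hz x else 0 := by
    intro c hc x
    split_ifs <;> simp
  rw [Matrix.sub_apply, Matrix.smul_apply, Matrix.one_apply, DV_apply, ment, map_add, map_sum]
  rw [hite, map_add, phi_single, phi_single]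
  have e1 : ∀ i : Fin d,
      phi z lam hz ((if n' = Function.update n i (n i + 1) then
          AddMonoidAlgebra.single ((Pi.single i (wp q n i) : Fin d → ℤ), (0:ℕ)) (-1 : ℂ) else 0)
       + (if n' = Function.update n i (n i - 1) then
          AddMonoidAlgebra.single ((Pi.single i (wm q n i) : Fin d → ℤ), (0:ℕ)) (-1 : ℂ) else 0))
      = -((if n' = Function.update n i (n i + 1) then z i ^ (wp q n i) else 0)
          + (if n' = Function.update n i (n i - 1) then z i ^ (wm q n i) else 0)) := by
    intro i
    rw [map_add, hite, hite, phi_single, phi_single]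
    rw [prod_zpow_single, prod_zpow_single]
    split_ifs <;> ring
  rw [Finset.sum_congr rfl (fun i _ => e1 i)]
  simp only [Finset.prod_const_one, pow_zero, pow_one, mul_one]
  have e2 : (if n = n' then (1:ℂ) else 0) = (if n' = n then 1 else 0) := by
    simp [eq_comm]
  rw [e2, Finset.sum_neg_distrib]
  split_ifs with h <;>
    simp only [Pi.zero_apply, zpow_zero, Finset.prod_const_one, smul_eq_mul, mul_one, mul_zero] <;>
    ring




def cdet (V : (Fin d → ℤ) → ℂ) : AA d := (Matrix.of (ment q V)).det

lemma phi_cdet (V : (Fin d → ℤ) → ℂ) (z : Fin d → ℂ) (lam : ℂ) (hz : ∀ j, z j ≠ 0) :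
    phi z lam hz (cdet q V) = scriptP q V z lam := by
  rw [cdet, RingHom.map_det, scriptP]
  congr 1
  ext n n'
  rw [RingHom.mapMatrix_apply, Matrix.map_apply, Matrix.of_apply]
  exact phi_ment q V z lam hz n n'

lemma scriptP_sum (V : (Fin d → ℤ) → ℂ) (z : Fin d → ℂ) (lam : ℂ) (hz : ∀ j, z j ≠ 0) :
    scriptP q V z lam = (cdet q V).sum fun a C => C * (∏ j, z j ^ (a.1 j)) * lam ^ a.2 := by
  rw [← phi_cdet q V z lam hz]
  show ((AddMonoidAlgebra.lift ℂ ℂ (GG d)) (phiMon z lam hz)) (cdet q V) = _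
  rw [AddMonoidAlgebra.lift_apply]
  apply Finsupp.sum_congr
  intro a _
  show (cdet q V) a • ((∏ j, z j ^ (a.1 j)) * lam ^ a.2) = _
  rw [smul_eq_mul]
  ring

-- generic weight machinery
lemma mem_support_mul {f g : AA d} {x : GG d} (h : x ∈ (f * g).support) :
    ∃ a ∈ f.support, ∃ b ∈ g.support, a + b = x :=
  Finset.mem_add.1 (AddMonoidAlgebra.support_coeff_mul_subset f g h)

lemma mem_support_prod {ι : Type} [DecidableEq ι] {s : Finset ι} {f : ι → AA d} {x : GG d}
    (h : x ∈ (∏ i ∈ s, f i).support) :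
    ∃ g : ι → GG d, (∀ i ∈ s, g i ∈ (f i).support) ∧ x = ∑ i ∈ s, g i := by
  induction s using Finset.induction_on generalizing x with
  | empty =>
    refine ⟨fun _ => 0, by simp, ?_⟩
    rw [Finset.prod_empty, AddMonoidAlgebra.one_def] at h
    have := Finsupp.support_single_subset h
    simp only [Finset.mem_singleton] at this
    simp [this]
  | @insert a s' ha ih =>
    rw [Finset.prod_insert ha] at h
    obtain ⟨a₁, h₁, bb, h₂, rfl⟩ := mem_support_mul h
    obtain ⟨g, hg, rfl⟩ := ih h₂
    refine ⟨fun i => if i = a then a₁ else g i, ?_, ?_⟩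
    · intro i hi
      dsimp only
      rcases Finset.mem_insert.1 hi with rfl | hi'
      · simp [h₁]
      · rw [if_neg (by rintro rfl; exact ha hi')]
        exact hg i hi'
    · rw [Finset.sum_insert ha]
      rw [if_pos rfl]
      congr 1
      apply Finset.sum_congr rfl
      intro i hi'
      rw [if_neg (by rintro rfl; exact ha hi')]

lemma weight_le_of_mem_support_prod {ι : Type} [DecidableEq ι] (w : GG d →+ ℤ) {s : Finset ι}
    {f : ι → AA d} {b : ι → ℤ} (hb : ∀ i ∈ s, ∀ y ∈ (f i).support, w y ≤ b i)
    {x : GG d} (hx : x ∈ (∏ i ∈ s, f i).support) : w x ≤ ∑ i ∈ s, b i := by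
  obtain ⟨g, hg, rfl⟩ := mem_support_prod hx
  rw [map_sum]
  exact Finset.sum_le_sum fun i hi => hb i hi _ (hg i hi)

lemma eq_of_weight_eq_sum {ι : Type} [DecidableEq ι] (w : GG d →+ ℤ) {s : Finset ι}
    {f : ι → AA d} {b : ι → ℤ} {gg : ι → GG d}
    (hb : ∀ i ∈ s, ∀ y ∈ (f i).support, w y ≤ b i)
    (hu : ∀ i ∈ s, ∀ y ∈ (f i).support, w y = b i → y = gg i)
    {x : GG d} (hx : x ∈ (∏ i ∈ s, f i).support) (hwx : w x = ∑ i ∈ s, b i) :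
    x = ∑ i ∈ s, gg i := by
  obtain ⟨g, hg, rfl⟩ := mem_support_prod hx
  rw [map_sum] at hwx
  have hall : ∀ i ∈ s, w (g i) = b i :=
    (Finset.sum_eq_sum_iff_of_le (fun i hi => hb i hi _ (hg i hi))).1 hwx
  exact Finset.sum_congr rfl fun i hi => hu i hi _ (hg i hi) (hall i hi)

lemma mul_apply_top (w : GG d →+ ℤ) {f g : AA d} {m l : ℤ} {u v : GG d}
    (hf : ∀ y ∈ f.support, w y ≤ m) (hfu : ∀ y ∈ f.support, w y = m → y = u)
    (hg : ∀ y ∈ g.support, w y ≤ l) (hgv : ∀ y ∈ g.support, w y = l → y = v)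
    (hu : w u = m) (hv : w v = l) :
    (f * g) (u + v) = f u * g v := by
  classical
  rw [AddMonoidAlgebra.mul_apply]
  have step : ∀ a₁ ∈ f.support,
      (Finsupp.sum g.coeff fun a₂ b₂ => if a₁ + a₂ = u + v then f a₁ * b₂ else 0)
        = if a₁ = u then f u * g v else 0 := by
    intro a₁ h₁
    by_cases ha : a₁ = u
    · subst ha
      rw [if_pos rfl, Finsupp.sum]
      have e : ∀ a₂ ∈ g.support, (if a₁ + a₂ = a₁ + v then f a₁ * g a₂ else 0)
          = if a₂ = v then f a₁ * g a₂ else 0 := by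
        intro a₂ _
        congr 1
        simp [add_right_inj]
      rw [Finset.sum_congr rfl e, Finset.sum_ite_eq' g.support v (fun a₂ => f a₁ * g a₂)]
      split_ifs with hv'
      · rfl
      · rw [Finsupp.notMem_support_iff.1 hv', mul_zero]
    · rw [if_neg ha, Finsupp.sum]
      apply Finset.sum_eq_zero
      intro a₂ h₂
      rw [if_neg]
      intro hc
      have hw1 : w a₁ ≤ m := hf _ h₁
      have hw2 : w a₂ ≤ l := hg _ h₂
      have hsum : w a₁ + w a₂ = m + l := by
        rw [← map_add, hc, map_add, hu, hv]
      have : w a₁ = m := by omega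
      exact ha (hfu _ h₁ this)
  rw [Finsupp.sum, Finset.sum_congr rfl step, Finset.sum_ite_eq' f.support u
    (fun _ => f u * g v)]
  split_ifs with hu'
  · rfl
  · rw [Finsupp.notMem_support_iff.1 hu', zero_mul]

lemma prod_apply_top {ι : Type} [DecidableEq ι] (w : GG d →+ ℤ) {s : Finset ι} {f : ι → AA d}
    {b : ι → ℤ} {gg : ι → GG d}
    (hb : ∀ i ∈ s, ∀ y ∈ (f i).support, w y ≤ b i)
    (hu : ∀ i ∈ s, ∀ y ∈ (f i).support, w y = b i → y = gg i)
    (hw : ∀ i ∈ s, w (gg i) = b i) :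
    (∏ i ∈ s, f i) (∑ i ∈ s, gg i) = ∏ i ∈ s, (f i) (gg i) := by
  classical
  induction s using Finset.induction_on with
  | empty =>
    rw [Finset.prod_empty, Finset.sum_empty, Finset.prod_empty, AddMonoidAlgebra.one_def]
    exact Finsupp.single_eq_same
  | @insert a s' ha ih =>
    rw [Finset.prod_insert ha, Finset.sum_insert ha, Finset.prod_insert ha]
    have hmem : ∀ i ∈ s', i ∈ insert a s' := fun i hi => Finset.mem_insert_of_mem hi
    rw [mul_apply_top w (hb a (Finset.mem_insert_self a s')) (hu a (Finset.mem_insert_self a s'))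
      (fun y hy => weight_le_of_mem_support_prod w (fun i hi => hb i (hmem i hi)) hy)
      (fun y hy hwy => eq_of_weight_eq_sum w (fun i hi => hb i (hmem i hi))
        (fun i hi => hu i (hmem i hi)) hy hwy)
      (hw a (Finset.mem_insert_self a s'))
      (by rw [map_sum]; exact Finset.sum_congr rfl fun i hi => hw i (hmem i hi))]
    rw [ih (fun i hi => hb i (hmem i hi)) (fun i hi => hu i (hmem i hi))
      (fun i hi => hw i (hmem i hi))]

lemma det_eq_sum_perm (F : Matrix (II q) (II q) (AA d)) :
    F.det = ∑ τ : Equiv.Perm (II q), ((Equiv.Perm.sign τ : ℤ) • ∏ i, F i (τ i) : AA d) := by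
  rw [← Matrix.det_transpose, Matrix.det_apply']
  apply Finset.sum_congr rfl
  intro τ _
  rw [zsmul_eq_mul]
  rfl

lemma det_apply_top (w : GG d →+ ℤ) (F : Matrix (II q) (II q) (AA d)) (b : II q → ℤ)
    (gg : II q → GG d) (sg : Equiv.Perm (II q))
    (hb : ∀ n n', ∀ y ∈ (F n n').support, w y ≤ b n)
    (hu : ∀ n, ∀ y ∈ (F n (sg n)).support, w y = b n → y = gg n)
    (hw : ∀ n, w (gg n) = b n)
    (hforce : ∀ τ : Equiv.Perm (II q), (∀ n, ∃ y ∈ (F n (τ n)).support, w y = b n) → τ = sg) :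
    F.det (∑ n, gg n) = ((Equiv.Perm.sign sg : ℤ) : ℂ) * ∏ n, (F n (sg n)) (gg n) := by
  classical
  rw [det_eq_sum_perm, AddMonoidAlgebra.coeff_sum, Finsupp.finset_sum_apply]
  rw [Finset.sum_eq_single sg]
  · rw [AddMonoidAlgebra.coeff_smul, Finsupp.smul_apply,
      prod_apply_top w (fun i _ => hb i (sg i)) (fun i _ => hu i) (fun i _ => hw i)]
    rw [zsmul_eq_mul]
  · intro τ _ hτ
    rw [AddMonoidAlgebra.coeff_smul, Finsupp.smul_apply]
    have hz : (∏ i, F i (τ i)) (∑ n, gg n) = 0 := by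
      by_contra hne
      have hxmem : (∑ n, gg n) ∈ (∏ i : II q, F i (τ i)).support := Finsupp.mem_support_iff.2 hne
      obtain ⟨g, hg, hdecomp⟩ := mem_support_prod hxmem
      have hwsum : ∑ n, w (g n) = ∑ n, b n := by
        rw [← map_sum, ← hdecomp, map_sum]
        exact Finset.sum_congr rfl fun n _ => hw n
      have hall := (Finset.sum_eq_sum_iff_of_le
        (fun n _ => hb n (τ n) _ (hg n (Finset.mem_univ n)))).1 hwsum
      exact hτ (hforce τ (fun n => ⟨g n, hg n (Finset.mem_univ n), hall n (Finset.mem_univ n)⟩))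
    rw [hz, smul_zero]
  · intro h
    exact absurd (Finset.mem_univ sg) h

-- ## structural facts
lemma add_one_eq_self_iff {m : ℕ} [NeZero m] (a : Fin m) : a + 1 = a ↔ m = 1 := by
  have h := a.isLt
  rw [Fin.ext_iff, val_add_one]
  split_ifs with hc <;> omega

lemma sub_one_eq_self_iff {m : ℕ} [NeZero m] (a : Fin m) : a - 1 = a ↔ m = 1 := by
  have h := a.isLt
  rw [Fin.ext_iff, val_sub_one]
  split_ifs with hc <;> omega

lemma add_one_eq_sub_one_iff {m : ℕ} [NeZero m] (a : Fin m) :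
    a + 1 = a - 1 ↔ m = 1 ∨ m = 2 := by
  have h := a.isLt
  rw [Fin.ext_iff, val_add_one, val_sub_one]
  split_ifs with h1 h2 <;> omega

lemma sub_one_add_one {m : ℕ} [NeZero m] (a : Fin m) : a - 1 + 1 = a := by
  rw [sub_add_cancel]

lemma add_one_sub_one {m : ℕ} [NeZero m] (a : Fin m) : a + 1 - 1 = a := by
  rw [add_sub_cancel_right]

def shiftP (j : Fin d) : Equiv.Perm (II q) where
  toFun n := Function.update n j (n j + 1)
  invFun n := Function.update n j (n j - 1)
  left_inv n := by
    simp only [Function.update_self]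
    rw [add_one_sub_one, Function.update_idem, Function.update_eq_self]
  right_inv n := by
    simp only [Function.update_self]
    rw [sub_one_add_one, Function.update_idem, Function.update_eq_self]

lemma shiftP_apply (j : Fin d) (n : II q) : shiftP q j n = Function.update n j (n j + 1) := rfl

def shiftM (j : Fin d) : Equiv.Perm (II q) where
  toFun n := Function.update n j (n j - 1)
  invFun n := Function.update n j (n j + 1)
  left_inv n := by
    simp only [Function.update_self]
    rw [sub_one_add_one, Function.update_idem, Function.update_eq_self]
  right_inv n := by
    simp only [Function.update_self]
    rw [add_one_sub_one, Function.update_idem, Function.update_eq_self]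

lemma shiftM_apply (j : Fin d) (n : II q) : shiftM q j n = Function.update n j (n j - 1) := rfl

-- master support lemma
lemma ment_support (V : (Fin d → ℤ) → ℂ) (n n' : II q) {x : GG d}
    (hx : x ∈ (ment q V n n').support) :
    (n' = n ∧ (x = (0, 0) ∨ x = (0, 1)))
    ∨ (∃ i, n' = Function.update n i (n i + 1) ∧ x = (Pi.single i (wp q n i), 0))
    ∨ (∃ i, n' = Function.update n i (n i - 1) ∧ x = (Pi.single i (wm q n i), 0)) := by
  classical
  rw [ment] at hx
  rcases Finset.mem_union.1 (Finsupp.support_add hx) with h | h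
  · by_cases hd : n' = n
    · rw [if_pos hd] at h
      rcases Finset.mem_union.1 (Finsupp.support_add h) with h1 | h1
      · exact Or.inl ⟨hd, Or.inr (Finset.mem_singleton.1 (Finsupp.support_single_subset h1))⟩
      · exact Or.inl ⟨hd, Or.inl (Finset.mem_singleton.1 (Finsupp.support_single_subset h1))⟩
    · rw [if_neg hd] at h
      simp at h
  · obtain ⟨i, _, hi⟩ := Finset.mem_biUnion.1 (Finsupp.support_finset_sum (by
      have h' : x ∈ (AddMonoidAlgebra.coeff (∑ i : Fin d, _ : AA d)).support := h
      rw [AddMonoidAlgebra.coeff_sum] at h'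
      exact h'))
    rcases Finset.mem_union.1 (Finsupp.support_add hi) with h2 | h2
    · by_cases hc : n' = Function.update n i (n i + 1)
      · rw [if_pos hc] at h2
        exact Or.inr (Or.inl ⟨i, hc, Finset.mem_singleton.1 (Finsupp.support_single_subset h2)⟩)
      · rw [if_neg hc] at h2
        simp at h2
    · by_cases hc : n' = Function.update n i (n i - 1)
      · rw [if_pos hc] at h2
        exact Or.inr (Or.inr ⟨i, hc, Finset.mem_singleton.1 (Finsupp.support_single_subset h2)⟩)
      · rw [if_neg hc] at h2
        simp at h2

lemma ite_apply_ms (c : Prop) [Decidable c] (f : AA d) (x : GG d) :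
    (if c then f else 0) x = if c then f x else 0 := by split_ifs <;> rfl

lemma ment_apply (V : (Fin d → ℤ) → ℂ) (n n' : II q) (y : GG d) :
    ment q V n n' y
      = (if n' = n then ((if ((0:Fin d → ℤ),(1:ℕ)) = y then (-1:ℂ) else 0)
            + (if ((0:Fin d → ℤ),(0:ℕ)) = y then V (nZ q n) else 0)) else 0)
      + ∑ i, ((if n' = Function.update n i (n i + 1) then
                (if ((Pi.single i (wp q n i) : Fin d → ℤ), (0:ℕ)) = y then (-1:ℂ) else 0) else 0)
            + (if n' = Function.update n i (n i - 1) then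
                (if ((Pi.single i (wm q n i) : Fin d → ℤ), (0:ℕ)) = y then (-1:ℂ) else 0) else 0)) := by
  rw [ment, AddMonoidAlgebra.coeff_add, Finsupp.add_apply, AddMonoidAlgebra.coeff_sum,
    Finsupp.finset_sum_apply, ite_apply_ms]
  congr 1
  · by_cases h : n' = n
    · rw [if_pos h, if_pos h, AddMonoidAlgebra.coeff_add, Finsupp.add_apply,
        AddMonoidAlgebra.coeff_single, AddMonoidAlgebra.coeff_single, Finsupp.single_apply,
        Finsupp.single_apply]
    · rw [if_neg h, if_neg h]
  · apply Finset.sum_congr rfl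
    intro i _
    rw [AddMonoidAlgebra.coeff_add, Finsupp.add_apply, ite_apply_ms, ite_apply_ms,
      AddMonoidAlgebra.coeff_single, AddMonoidAlgebra.coeff_single, Finsupp.single_apply,
      Finsupp.single_apply]

-- counting
lemma card_fiber (j : Fin d) (v : Fin ((q j : ℕ))) :
    (Finset.univ.filter (fun n : II q => n j = v)).card
      = (∏ i, (q i : ℕ)) / ((q j : ℕ)) := by
  classical
  have hcard : ∀ v' : Fin ((q j : ℕ)),
      (Finset.univ.filter (fun n : II q => n j = v')).card
        = (Finset.univ.filter (fun n : II q => n j = v)).card := by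
    intro v'
    apply Finset.card_nbij' (fun n => Function.update n j v) (fun n => Function.update n j v')
    · intro a ha
      simp [Function.update_self]
    · intro a ha
      simp [Function.update_self]
    · intro a ha
      dsimp only
      have h : a j = v' := by simpa using ha
      rw [Function.update_idem, ← h, Function.update_eq_self]
    · intro a ha
      dsimp only
      have h : a j = v := by simpa using ha
      rw [Function.update_idem, ← h, Function.update_eq_self]
  have htot : (∏ i, (q i : ℕ)) = Fintype.card (II q) := by
    rw [Fintype.card_pi]
    exact (Finset.prod_congr rfl fun i _ => (Fintype.card_fin _).symm)
  have hfib : Fintype.card (II q)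
      = ∑ v' : Fin ((q j : ℕ)), (Finset.univ.filter (fun n : II q => n j = v')).card := by
    rw [← Finset.card_univ]
    exact Finset.card_eq_sum_card_fiberwise (fun x _ => Finset.mem_univ (x j))
  have : (∏ i, (q i : ℕ))
      = (q j : ℕ) * (Finset.univ.filter (fun n : II q => n j = v)).card := by
    rw [htot, hfib, Finset.sum_congr rfl (fun v' _ => hcard v')]
    simp [Finset.sum_const, mul_comm]
  rw [this, Nat.mul_div_cancel_left _ (q j).pos]

-- ## lambda instantiation
def QQ : ℕ := ∏ i, (q i : ℕ)

lemma Q_card : Fintype.card (II q) = QQ q := by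
  rw [Fintype.card_pi, QQ]
  exact Finset.prod_congr rfl fun i _ => Fintype.card_fin _

def wLam : GG d →+ ℤ where
  toFun x := (x.2 : ℤ)
  map_zero' := rfl
  map_add' x y := by
    show ((x.2 + y.2 : ℕ) : ℤ) = _
    push_cast
    rfl

def wj (j : Fin d) : GG d →+ ℤ where
  toFun x := x.1 j
  map_zero' := rfl
  map_add' x y := rfl

lemma mem_support_det {F : Matrix (II q) (II q) (AA d)} {x : GG d} (hx : x ∈ F.det.support) :
    ∃ τ : Equiv.Perm (II q), x ∈ (∏ i, F i (τ i)).support := by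
  classical
  rw [det_eq_sum_perm] at hx
  have hx' : x ∈ (AddMonoidAlgebra.coeff _).support := hx
  rw [AddMonoidAlgebra.coeff_sum] at hx'
  obtain ⟨τ, _, h⟩ := Finset.mem_biUnion.1 (Finsupp.support_finset_sum hx')
  exact ⟨τ, Finsupp.support_smul h⟩

lemma cdet_support (V : (Fin d → ℤ) → ℂ) {x : GG d} (hx : x ∈ (cdet q V).support) :
    ∃ τ : Equiv.Perm (II q), ∃ g : II q → GG d,
      (∀ n, g n ∈ (ment q V n (τ n)).support) ∧ x = ∑ n, g n := by
  obtain ⟨τ, hτ⟩ := mem_support_det q hx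
  obtain ⟨g, hg, rfl⟩ := mem_support_prod hτ
  exact ⟨τ, g, fun n => hg n (Finset.mem_univ n), rfl⟩

-- per-entry facts
lemma entry_snd_le (V : (Fin d → ℤ) → ℂ) (n n' : II q) {y : GG d}
    (hy : y ∈ (ment q V n n').support) : y.2 ≤ 1 := by
  rcases ment_support q V n n' hy with ⟨_, rfl | rfl⟩ | ⟨i, _, rfl⟩ | ⟨i, _, rfl⟩ <;> simp

lemma entry_snd_eq_one (V : (Fin d → ℤ) → ℂ) (n n' : II q) {y : GG d}
    (hy : y ∈ (ment q V n n').support) (h1 : y.2 = 1) : n' = n ∧ y = (0, 1) := by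
  rcases ment_support q V n n' hy with ⟨hd, rfl | rfl⟩ | ⟨i, _, rfl⟩ | ⟨i, _, rfl⟩ <;>
    simp at h1 ⊢ <;> exact hd

lemma entry_wj_le (V : (Fin d → ℤ) → ℂ) (j : Fin d) (n n' : II q) {y : GG d}
    (hy : y ∈ (ment q V n n').support) : y.1 j ≤ wp q n j := by
  have hwp : (0:ℤ) ≤ wp q n j := by rw [wp]; split_ifs <;> omega
  have hwm : wm q n j ≤ 0 := by rw [wm]; split_ifs <;> omega
  rcases ment_support q V n n' hy with ⟨_, rfl | rfl⟩ | ⟨i, _, rfl⟩ | ⟨i, _, rfl⟩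
  · simpa using hwp
  · simpa using hwp
  · rcases eq_or_ne i j with rfl | hij
    · simp
    · have hz : (Pi.single i (wp q n i) : Fin d → ℤ) j = 0 := Pi.single_eq_of_ne hij.symm _
      simpa [hz] using hwp
  · rcases eq_or_ne i j with rfl | hij
    · have : wm q n i ≤ 0 := by rw [wm]; split_ifs <;> omega
      simpa using le_trans this hwp
    · have hz : (Pi.single i (wm q n i) : Fin d → ℤ) j = 0 := Pi.single_eq_of_ne hij.symm _
      simpa [hz] using hwp

lemma entry_wj_ge (V : (Fin d → ℤ) → ℂ) (j : Fin d) (n n' : II q) {y : GG d}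
    (hy : y ∈ (ment q V n n').support) : wm q n j ≤ y.1 j := by
  have hwp : (0:ℤ) ≤ wp q n j := by rw [wp]; split_ifs <;> omega
  have hwm : wm q n j ≤ 0 := by rw [wm]; split_ifs <;> omega
  rcases ment_support q V n n' hy with ⟨_, rfl | rfl⟩ | ⟨i, _, rfl⟩ | ⟨i, _, rfl⟩
  · simpa using hwm
  · simpa using hwm
  · rcases eq_or_ne i j with rfl | hij
    · have : (0:ℤ) ≤ wp q n i := by rw [wp]; split_ifs <;> omega
      simpa using le_trans hwm this
    · have hz : (Pi.single i (wp q n i) : Fin d → ℤ) j = 0 := Pi.single_eq_of_ne hij.symm _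
      simpa [hz] using hwm
  · rcases eq_or_ne i j with rfl | hij
    · simp
    · have hz : (Pi.single i (wm q n i) : Fin d → ℤ) j = 0 := Pi.single_eq_of_ne hij.symm _
      simpa [hz] using hwm

def vlast (j : Fin d) : Fin ((q j : ℕ)) := ⟨(q j : ℕ) - 1, by have := (q j).pos; omega⟩

lemma sum_wp (j : Fin d) :
    ∑ n : II q, wp q n j = ((QQ q / ((q j : ℕ)) : ℕ) : ℤ) := by
  classical
  have : ∀ n : II q, wp q n j = if n j = vlast q j then (1:ℤ) else 0 := by
    intro n
    rw [wp]
    have hlt := (n j).isLt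
    have : (n j : ℕ) + 1 = (q j : ℕ) ↔ n j = vlast q j := by
      rw [Fin.ext_iff]
      show _ ↔ ((n j : ℕ) = (q j : ℕ) - 1)
      omega
    simp [this]
  rw [Finset.sum_congr rfl fun n _ => this n, Finset.sum_boole, card_fiber q j (vlast q j)]
  rfl

lemma sum_wm (j : Fin d) :
    ∑ n : II q, wm q n j = -((QQ q / ((q j : ℕ)) : ℕ) : ℤ) := by
  classical
  have : ∀ n : II q, wm q n j = -(if n j = (⟨0, (q j).pos⟩ : Fin ((q j :ℕ))) then (1:ℤ) else 0) := by
    intro n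
    rw [wm]
    have : (n j : ℕ) = 0 ↔ n j = (⟨0, (q j).pos⟩ : Fin ((q j :ℕ))) := by
      rw [Fin.ext_iff]
    simp [this]
    split_ifs with h1 <;> simp [h1]
  rw [Finset.sum_congr rfl fun n _ => this n, Finset.sum_neg_distrib, Finset.sum_boole,
    card_fiber q j ⟨0, (q j).pos⟩]
  rfl

lemma cdet_support_bounds (V : (Fin d → ℤ) → ℂ) {a : GG d} (ha : a ∈ (cdet q V).support) :
    (∀ j, |a.1 j| ≤ ((QQ q / ((q j : ℕ)) : ℕ) : ℤ)) ∧ a.2 ≤ QQ q := by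
  obtain ⟨τ, g, hg, rfl⟩ := cdet_support q V ha
  constructor
  · intro j
    have h1 : (∑ n, g n).1 j = ∑ n, (g n).1 j := by
      rw [Prod.fst_sum, Finset.sum_apply]
    rw [abs_le, h1]
    constructor
    · calc -(((QQ q / ((q j : ℕ)) : ℕ)) : ℤ) = ∑ n : II q, wm q n j := (sum_wm q j).symm
        _ ≤ ∑ n, (g n).1 j := Finset.sum_le_sum fun n _ => entry_wj_ge q V j n (τ n) (hg n)
    · calc ∑ n, (g n).1 j ≤ ∑ n : II q, wp q n j :=
            Finset.sum_le_sum fun n _ => entry_wj_le q V j n (τ n) (hg n)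
        _ = _ := sum_wp q j
  · have h2 : (∑ n, g n).2 = ∑ n, (g n).2 := by
      rw [Prod.snd_sum]
    rw [h2]
    calc ∑ n, (g n).2 ≤ ∑ _n : II q, 1 :=
          Finset.sum_le_sum fun n _ => entry_snd_le q V n (τ n) (hg n)
      _ = QQ q := by rw [Finset.sum_const, smul_eq_mul, mul_one, Finset.card_univ, Q_card]

lemma cdet_lam_unique (V : (Fin d → ℤ) → ℂ) {a : GG d} (ha : a ∈ (cdet q V).support)
    (h2 : a.2 = QQ q) : a = (0, QQ q) := by
  obtain ⟨τ, g, hg, rfl⟩ := cdet_support q V ha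
  have hsnd : (∑ n, g n).2 = ∑ n, (g n).2 := by
    rw [Prod.snd_sum]
  have hsum : ∑ n, (g n).2 = ∑ _n : II q, 1 := by
    rw [← hsnd, h2, Finset.sum_const, smul_eq_mul, mul_one, Finset.card_univ, Q_card]
  have hall := (Finset.sum_eq_sum_iff_of_le
    (fun n _ => entry_snd_le q V n (τ n) (hg n))).1 hsum
  have hone : ∀ n, g n = ((0 : Fin d → ℤ), (1:ℕ)) := fun n =>
    (entry_snd_eq_one q V n (τ n) (hg n) (hall n (Finset.mem_univ n))).2
  rw [Finset.sum_congr rfl fun n _ => hone n, Finset.sum_const, Finset.card_univ, Q_card]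
  rw [Prod.smul_mk, smul_zero, smul_eq_mul, mul_one]

lemma ment_diag_lam (V : (Fin d → ℤ) → ℂ) (n : II q) :
    ment q V n n ((0 : Fin d → ℤ), (1:ℕ)) = -1 := by
  rw [ment_apply, if_pos rfl, if_pos rfl, if_neg (show ¬((0:Fin d → ℤ),(0:ℕ)) = ((0:Fin d → ℤ),(1:ℕ)) by simp [Prod.ext_iff])]
  have hz : ∀ i : Fin d,
      ((if n = Function.update n i (n i + 1) then
          (if ((Pi.single i (wp q n i) : Fin d → ℤ), (0:ℕ)) = ((0:Fin d → ℤ),(1:ℕ)) then (-1:ℂ) else 0) else 0)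
        + (if n = Function.update n i (n i - 1) then
          (if ((Pi.single i (wm q n i) : Fin d → ℤ), (0:ℕ)) = ((0:Fin d → ℤ),(1:ℕ)) then (-1:ℂ) else 0) else 0)) = 0 := by
    intro i
    rw [if_neg (show ¬((Pi.single i (wp q n i) : Fin d → ℤ), (0:ℕ)) = ((0:Fin d → ℤ),(1:ℕ)) by
      simp [Prod.ext_iff]), if_neg (show ¬((Pi.single i (wm q n i) : Fin d → ℤ), (0:ℕ)) = ((0:Fin d → ℤ),(1:ℕ)) by
      simp [Prod.ext_iff])]
    split_ifs <;> simp
  rw [Finset.sum_congr rfl fun i _ => hz i, Finset.sum_const_zero]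
  ring

lemma cdet_lam_top (V : (Fin d → ℤ) → ℂ) :
    cdet q V ((0 : Fin d → ℤ), QQ q) = (-1 : ℂ) ^ (QQ q) := by
  classical
  have hgg : (∑ _n : II q, ((0 : Fin d → ℤ), (1:ℕ))) = ((0 : Fin d → ℤ), QQ q) := by
    rw [Finset.sum_const, Finset.card_univ, Q_card, Prod.smul_mk, smul_zero, smul_eq_mul, mul_one]
  have hb : ∀ n n' : II q, ∀ y ∈ (Matrix.of (ment q V) n n').support, wLam y ≤ (1:ℤ) := by
    intro n n' y hy
    have := entry_snd_le q V n n' hy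
    show ((y.2 : ℕ) : ℤ) ≤ 1
    omega
  have hu : ∀ n : II q, ∀ y ∈ (Matrix.of (ment q V) n ((1 : Equiv.Perm (II q)) n)).support,
      wLam y = 1 → y = ((0 : Fin d → ℤ), (1:ℕ)) := by
    intro n y hy h1
    have h2 : y.2 = 1 := by
      have : ((y.2 : ℕ) : ℤ) = 1 := h1
      omega
    exact (entry_snd_eq_one q V n _ hy h2).2
  have hforce : ∀ τ : Equiv.Perm (II q),
      (∀ n, ∃ y ∈ (Matrix.of (ment q V) n (τ n)).support, wLam y = 1) → τ = 1 := by
    intro τ hτ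
    apply Equiv.ext
    intro n
    obtain ⟨y, hy, h1⟩ := hτ n
    have h2 : y.2 = 1 := by
      have : ((y.2 : ℕ) : ℤ) = 1 := h1
      omega
    exact (entry_snd_eq_one q V n (τ n) hy h2).1
  have h := det_apply_top q wLam (Matrix.of (ment q V)) (fun _ => 1)
    (fun _ => ((0 : Fin d → ℤ), (1:ℕ))) 1 hb hu (fun n => rfl) hforce
  rw [hgg] at h
  rw [cdet, h, Equiv.Perm.sign_one]
  have hv : ∀ n : II q, (Matrix.of (ment q V) n ((1 : Equiv.Perm (II q)) n))
      ((fun _ : II q => ((0:Fin d → ℤ),(1:ℕ))) n) = -1 := fun n => ment_diag_lam q V n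
  rw [Finset.prod_congr rfl fun n _ => hv n, Finset.prod_const, Finset.card_univ, Q_card]
  simp

-- ## z_j forward instantiation
lemma update_same_inj {n : II q} {j : Fin d} {a b : Fin ((q j : ℕ))}
    (h : Function.update n j a = Function.update n j b) : a = b := by
  have := congrFun h j
  rwa [Function.update_self, Function.update_self] at this

lemma wp_nonneg (n : II q) (j : Fin d) : (0:ℤ) ≤ wp q n j := by
  rw [wp]; split_ifs <;> omega
lemma wp_le_one (n : II q) (j : Fin d) : wp q n j ≤ 1 := by
  rw [wp]; split_ifs <;> omega
lemma wm_nonpos (n : II q) (j : Fin d) : wm q n j ≤ 0 := by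
  rw [wm]; split_ifs <;> omega

lemma q_one_of_plus_fix {n : II q} {j : Fin d} (h : Function.update n j (n j + 1) = n) :
    (q j : ℕ) = 1 := by
  have := congrFun h j
  rw [Function.update_self] at this
  exact (add_one_eq_self_iff (n j)).1 this

lemma wp_one_of_q_one {n : II q} {j : Fin d} (h : (q j : ℕ) = 1) : wp q n j = 1 := by
  have := (n j).isLt
  rw [wp, if_pos (by omega)]

lemma ment_shiftP_unique (V : (Fin d → ℤ) → ℂ) (j : Fin d) (n : II q) {y : GG d}
    (hy : y ∈ (ment q V n (Function.update n j (n j + 1))).support)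
    (hw : y.1 j = wp q n j) : y = (Pi.single j (wp q n j), 0) := by
  have hjlt := (n j).isLt
  rcases ment_support q V n _ hy with ⟨hd, hv⟩ | ⟨i, hc, rfl⟩ | ⟨i, hc, rfl⟩
  · exfalso
    have hq1 := q_one_of_plus_fix q hd
    have hwp1 := wp_one_of_q_one q (n := n) (j := j) hq1
    rw [hwp1] at hw
    rcases hv with rfl | rfl <;> simp at hw
  · rcases eq_or_ne i j with rfl | hij
    · rfl
    · exfalso
      have h1 := congrFun hc j
      rw [Function.update_self, Function.update_of_ne hij.symm] at h1
      have hq1 := (add_one_eq_self_iff (n j)).1 h1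
      have hwp1 := wp_one_of_q_one q (n := n) (j := j) hq1
      have hz : (Pi.single i (wp q n i) : Fin d → ℤ) j = 0 := Pi.single_eq_of_ne hij.symm _
      rw [show ((Pi.single i (wp q n i) : Fin d → ℤ), (0:ℕ)).1 j = 0 from hz, hwp1] at hw
      simp at hw
  · exfalso
    rcases eq_or_ne i j with rfl | hij
    · have hval : n i + 1 = n i - 1 := update_same_inj q hc
      have h12 := (add_one_eq_sub_one_iff (n i)).1 hval
      have hwj : wm q n i = wp q n i := by
        have hz : (Pi.single i (wm q n i) : Fin d → ℤ) i = wm q n i := Pi.single_eq_same _ _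
        rw [show ((Pi.single i (wm q n i) : Fin d → ℤ), (0:ℕ)).1 i = wm q n i from hz] at hw
        exact hw
      have hilt := (n i).isLt
      rw [wp, wm] at hwj
      rcases h12 with h1 | h2 <;> split_ifs at hwj <;> omega
    · have h1 := congrFun hc j
      rw [Function.update_self, Function.update_of_ne hij.symm] at h1
      have hq1 := (add_one_eq_self_iff (n j)).1 h1
      have hwp1 := wp_one_of_q_one q (n := n) (j := j) hq1
      have hz : (Pi.single i (wm q n i) : Fin d → ℤ) j = 0 := Pi.single_eq_of_ne hij.symm _
      rw [show ((Pi.single i (wm q n i) : Fin d → ℤ), (0:ℕ)).1 j = 0 from hz, hwp1] at hw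
      simp at hw

lemma force_shiftP (V : (Fin d → ℤ) → ℂ) (j : Fin d) (τ : Equiv.Perm (II q))
    (hτ : ∀ n : II q, ∃ y ∈ (ment q V n (τ n)).support, y.1 j = wp q n j) :
    τ = shiftP q j := by
  have hwrap : ∀ n : II q, (n j : ℕ) + 1 = (q j : ℕ) → τ n = Function.update n j (n j + 1) := by
    intro n hn
    obtain ⟨y, hy, hwy⟩ := hτ n
    have hwp1 : wp q n j = 1 := by rw [wp, if_pos hn]
    rw [hwp1] at hwy
    rcases ment_support q V n _ hy with ⟨hd, hv⟩ | ⟨i, hc, rfl⟩ | ⟨i, hc, rfl⟩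
    · exfalso; rcases hv with rfl | rfl <;> simp at hwy
    · rcases eq_or_ne i j with rfl | hij
      · exact hc
      · exfalso
        have hz : (Pi.single i (wp q n i) : Fin d → ℤ) j = 0 := Pi.single_eq_of_ne hij.symm _
        rw [show ((Pi.single i (wp q n i) : Fin d → ℤ), (0:ℕ)).1 j = 0 from hz] at hwy
        simp at hwy
    · exfalso
      rcases eq_or_ne i j with rfl | hij
      · have hz : (Pi.single i (wm q n i) : Fin d → ℤ) i = wm q n i := Pi.single_eq_same _ _
        rw [show ((Pi.single i (wm q n i) : Fin d → ℤ), (0:ℕ)).1 i = wm q n i from hz] at hwy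
        rw [wm] at hwy
        split_ifs at hwy <;> omega
      · have hz : (Pi.single i (wm q n i) : Fin d → ℤ) j = 0 := Pi.single_eq_of_ne hij.symm _
        rw [show ((Pi.single i (wm q n i) : Fin d → ℤ), (0:ℕ)).1 j = 0 from hz] at hwy
        simp at hwy
  have key : ∀ m : ℕ, ∀ n : II q, ((n j :ℕ) + 1 = (q j :ℕ) ∨ (n j :ℕ) < m) →
      τ n = Function.update n j (n j + 1) := by
    intro m
    induction m with
    | zero =>
      intro n hn
      rcases hn with hn | hn
      · exact hwrap n hn
      · omega
    | succ m ih =>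
      intro n hn
      rcases hn with hn | hn
      · exact hwrap n hn
      by_cases hwrapc : (n j :ℕ) + 1 = (q j :ℕ)
      · exact hwrap n hwrapc
      have hjlt := (n j).isLt
      have hqpos := (q j).pos
      have hq2 : 2 ≤ (q j : ℕ) := by omega
      have hwp0 : wp q n j = 0 := by rw [wp, if_neg hwrapc]
      obtain ⟨y, hy, hwy⟩ := hτ n
      rw [hwp0] at hwy
      have hcontra : ∀ col : II q, τ n = col → col j = n j → False := by
        intro col hcol hcj
        have hprevj : (Function.update col j (col j - 1)) j = n j - 1 := by
          rw [Function.update_self, hcj]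
        have hih : τ (Function.update col j (col j - 1))
            = Function.update (Function.update col j (col j - 1)) j
                ((Function.update col j (col j - 1)) j + 1) := by
          apply ih
          rw [hprevj, val_sub_one]
          split_ifs with h0 <;> omega
        have hτprev : τ (Function.update col j (col j - 1)) = col := by
          rw [hih, hprevj, sub_one_add_one, Function.update_idem, ← hcj,
            Function.update_eq_self]
        have hpn : Function.update col j (col j - 1) = n := τ.injective (hτprev.trans hcol.symm)
        have hval : n j - 1 = n j := by
          rw [← hprevj, hpn]
        have hq1 := (sub_one_eq_self_iff (n j)).1 hval
        omega
      rcases ment_support q V n _ hy with ⟨hd, hv⟩ | ⟨i, hc, rfl⟩ | ⟨i, hc, rfl⟩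
      · exact (hcontra n hd rfl).elim
      · rcases eq_or_ne i j with rfl | hij
        · exact hc
        · exact (hcontra _ hc (by rw [Function.update_of_ne hij.symm])).elim
      · rcases eq_or_ne i j with rfl | hij
        · -- backward hop in direction i; weight 0 forces n i ≠ 0
          exfalso
          have hz : (Pi.single i (wm q n i) : Fin d → ℤ) i = wm q n i := Pi.single_eq_same _ _
          rw [show ((Pi.single i (wm q n i) : Fin d → ℤ), (0:ℕ)).1 i = wm q n i from hz] at hwy
          have hnj0 : (n i : ℕ) ≠ 0 := by
            rw [wm] at hwy
            intro h0
            rw [if_pos h0] at hwy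
            omega
          have hprevj : (Function.update n i (n i - 1 - 1)) i = n i - 1 - 1 :=
            Function.update_self _ _ _
          have hv1 : ((n i - 1 : Fin ((q i :ℕ))) : ℕ) = (n i : ℕ) - 1 := by
            rw [val_sub_one, if_neg hnj0]
          have hih : τ (Function.update n i (n i - 1 - 1))
              = Function.update (Function.update n i (n i - 1 - 1)) i
                  ((Function.update n i (n i - 1 - 1)) i + 1) := by
            apply ih
            rw [hprevj, val_sub_one, hv1]
            split_ifs with h0 <;> omega
          have hτprev : τ (Function.update n i (n i - 1 - 1)) = Function.update n i (n i - 1) := by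
            rw [hih, hprevj, sub_one_add_one, Function.update_idem]
          have hpn : Function.update n i (n i - 1 - 1) = n := τ.injective (hτprev.trans hc.symm)
          have hval : n i - 1 - 1 = n i := by
            have := congrFun hpn i
            rwa [Function.update_self] at this
          have hvv : ((n i - 1 - 1 : Fin ((q i :ℕ))) : ℕ) = (n i : ℕ) := by rw [hval]
          rw [val_sub_one, hv1] at hvv
          split_ifs at hvv <;> omega
        · exact (hcontra _ hc (by rw [Function.update_of_ne hij.symm])).elim
  apply Equiv.ext
  intro n
  rw [shiftP_apply]
  exact key ((q j :ℕ)) n (Or.inr (n j).isLt)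

lemma ment_shiftP_value (V : (Fin d → ℤ) → ℂ) (j : Fin d) (n : II q) :
    ment q V n (Function.update n j (n j + 1)) ((Pi.single j (wp q n j) : Fin d → ℤ), (0:ℕ))
      = -1 := by
  have hjlt := (n j).isLt
  rw [ment_apply]
  have hdiag : (if Function.update n j (n j + 1) = n then
      ((if ((0:Fin d → ℤ),(1:ℕ)) = ((Pi.single j (wp q n j) : Fin d → ℤ), (0:ℕ)) then (-1:ℂ) else 0)
        + (if ((0:Fin d → ℤ),(0:ℕ)) = ((Pi.single j (wp q n j) : Fin d → ℤ), (0:ℕ)) then V (nZ q n) else 0)) else 0) = 0 := by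
    by_cases hd : Function.update n j (n j + 1) = n
    · rw [if_pos hd]
      have hq1 := q_one_of_plus_fix q hd
      have hwp1 := wp_one_of_q_one q (n := n) (j := j) hq1
      rw [if_neg (by simp [Prod.ext_iff]), if_neg ?hne]
      · ring
      case hne =>
        intro h
        have h2 : (0 : Fin d → ℤ) j = (Pi.single j (wp q n j) : Fin d → ℤ) j :=
          congrFun (Prod.ext_iff.1 h).1 j
        simp only [Pi.zero_apply, Pi.single_eq_same, hwp1] at h2
        exact absurd h2.symm one_ne_zero
    · rw [if_neg hd]
  rw [hdiag, zero_add]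
  rw [Finset.sum_eq_single j]
  · rw [if_pos rfl, if_pos rfl]
    have hminus : (if Function.update n j (n j + 1) = Function.update n j (n j - 1) then
        (if ((Pi.single j (wm q n j) : Fin d → ℤ), (0:ℕ)) = ((Pi.single j (wp q n j) : Fin d → ℤ), (0:ℕ)) then (-1:ℂ) else 0) else 0) = 0 := by
      by_cases hcc : Function.update n j (n j + 1) = Function.update n j (n j - 1)
      · rw [if_pos hcc, if_neg ?hne2]
        case hne2 =>
          intro h
          have h2 : (Pi.single j (wm q n j) : Fin d → ℤ) j = (Pi.single j (wp q n j) : Fin d → ℤ) j :=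
            congrFun (Prod.ext_iff.1 h).1 j
          simp only [Pi.single_eq_same] at h2
          have h12 := (add_one_eq_sub_one_iff (n j)).1 (update_same_inj q hcc)
          rw [wm, wp] at h2
          rcases h12 with h1 | h1 <;> split_ifs at h2 <;> omega
      · rw [if_neg hcc]
    rw [hminus]
    ring
  · intro i _ hij
    have hplus : (if Function.update n j (n j + 1) = Function.update n i (n i + 1) then
        (if ((Pi.single i (wp q n i) : Fin d → ℤ), (0:ℕ)) = ((Pi.single j (wp q n j) : Fin d → ℤ), (0:ℕ)) then (-1:ℂ) else 0) else 0) = 0 := by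
      by_cases hcc : Function.update n j (n j + 1) = Function.update n i (n i + 1)
      · rw [if_pos hcc, if_neg ?hne3]
        case hne3 =>
          intro h
          have h1 := congrFun hcc j
          rw [Function.update_self, Function.update_of_ne hij.symm] at h1
          have hq1 := (add_one_eq_self_iff (n j)).1 h1
          have h1' := congrFun hcc i
          rw [Function.update_self, Function.update_of_ne hij] at h1'
          have hqi1 := (add_one_eq_self_iff (n i)).1 h1'.symm
          have h2 : (Pi.single i (wp q n i) : Fin d → ℤ) i = (Pi.single j (wp q n j) : Fin d → ℤ) i :=
            congrFun (Prod.ext_iff.1 h).1 i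
          rw [Pi.single_eq_same, Pi.single_eq_of_ne hij] at h2
          have := wp_one_of_q_one q (n := n) (j := i) hqi1
          omega
      · rw [if_neg hcc]
    have hminus : (if Function.update n j (n j + 1) = Function.update n i (n i - 1) then
        (if ((Pi.single i (wm q n i) : Fin d → ℤ), (0:ℕ)) = ((Pi.single j (wp q n j) : Fin d → ℤ), (0:ℕ)) then (-1:ℂ) else 0) else 0) = 0 := by
      by_cases hcc : Function.update n j (n j + 1) = Function.update n i (n i - 1)
      · rw [if_pos hcc, if_neg ?hne4]
        case hne4 =>
          intro h
          have h1 := congrFun hcc j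
          rw [Function.update_self, Function.update_of_ne hij.symm] at h1
          have hq1 := (add_one_eq_self_iff (n j)).1 h1
          have h1' := congrFun hcc i
          rw [Function.update_self, Function.update_of_ne hij] at h1'
          have hqi1 := (sub_one_eq_self_iff (n i)).1 h1'.symm
          have h2 : (Pi.single i (wm q n i) : Fin d → ℤ) i = (Pi.single j (wp q n j) : Fin d → ℤ) i :=
            congrFun (Prod.ext_iff.1 h).1 i
          rw [Pi.single_eq_same, Pi.single_eq_of_ne hij] at h2
          have hilt := (n i).isLt
          rw [wm] at h2
          split_ifs at h2 <;> omega
      · rw [if_neg hcc]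
    rw [hplus, hminus]
    ring
  · intro h
    exact absurd (Finset.mem_univ j) h

lemma sum_ggP (j : Fin d) :
    (∑ n : II q, ((Pi.single j (wp q n j) : Fin d → ℤ), (0:ℕ)))
      = ((Pi.single j ((QQ q / ((q j : ℕ)) : ℕ) : ℤ) : Fin d → ℤ), (0:ℕ)) := by
  have hfst : (∑ n : II q, ((Pi.single j (wp q n j) : Fin d → ℤ), (0:ℕ))).1
      = (Pi.single j ((QQ q / ((q j : ℕ)) : ℕ) : ℤ) : Fin d → ℤ) := by
    rw [Prod.fst_sum]
    funext i
    rw [Finset.sum_apply]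
    rcases eq_or_ne i j with rfl | hij
    · simp only [Pi.single_eq_same]
      exact sum_wp q i
    · rw [Pi.single_eq_of_ne hij]
      exact Finset.sum_eq_zero fun n _ => Pi.single_eq_of_ne hij _
  have hsnd : (∑ n : II q, ((Pi.single j (wp q n j) : Fin d → ℤ), (0:ℕ))).2 = 0 := by
    rw [Prod.snd_sum]
    exact Finset.sum_const_zero
  exact Prod.ext hfst hsnd

lemma pm_one_mul {a b : ℂ} (ha : a = 1 ∨ a = -1) (hb : b = 1 ∨ b = -1) :
    a * b = 1 ∨ a * b = -1 := by
  rcases ha with rfl | rfl <;> rcases hb with rfl | rfl <;> simp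

lemma neg_one_pow_pm (k : ℕ) : ((-1:ℂ))^k = 1 ∨ ((-1:ℂ))^k = -1 :=
  k.even_or_odd.imp Even.neg_one_pow Odd.neg_one_pow

lemma cdet_zj_top (V : (Fin d → ℤ) → ℂ) (j : Fin d) :
    cdet q V ((Pi.single j ((QQ q / ((q j : ℕ)) : ℕ) : ℤ) : Fin d → ℤ), 0) = 1
      ∨ cdet q V ((Pi.single j ((QQ q / ((q j : ℕ)) : ℕ) : ℤ) : Fin d → ℤ), 0) = -1 := by
  classical
  have hb : ∀ n n' : II q, ∀ y ∈ (Matrix.of (ment q V) n n').support, wj j y ≤ wp q n j :=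
    fun n n' y hy => entry_wj_le q V j n n' hy
  have hu : ∀ n : II q, ∀ y ∈ (Matrix.of (ment q V) n (shiftP q j n)).support,
      wj j y = wp q n j → y = ((Pi.single j (wp q n j) : Fin d → ℤ), (0:ℕ)) :=
    fun n y hy hwy => ment_shiftP_unique q V j n hy hwy
  have hwgg : ∀ n : II q, wj j ((Pi.single j (wp q n j) : Fin d → ℤ), (0:ℕ)) = wp q n j :=
    fun n => Pi.single_eq_same _ _
  have hforce : ∀ τ : Equiv.Perm (II q),
      (∀ n, ∃ y ∈ (Matrix.of (ment q V) n (τ n)).support, wj j y = wp q n j) → τ = shiftP q j :=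
    fun τ hτ => force_shiftP q V j τ hτ
  have h := det_apply_top q (wj j) (Matrix.of (ment q V)) (fun n => wp q n j)
    (fun n => ((Pi.single j (wp q n j) : Fin d → ℤ), (0:ℕ))) (shiftP q j) hb hu hwgg hforce
  rw [sum_ggP] at h
  rw [cdet, h]
  have hv : ∀ n : II q, (Matrix.of (ment q V) n (shiftP q j n))
      ((fun n : II q => ((Pi.single j (wp q n j) : Fin d → ℤ), (0:ℕ))) n) = -1 :=
    fun n => ment_shiftP_value q V j n
  rw [Finset.prod_congr rfl fun n _ => hv n, Finset.prod_const, Finset.card_univ, Q_card]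
  apply pm_one_mul
  · rcases Int.units_eq_one_or (Equiv.Perm.sign (shiftP q j)) with hs | hs <;> rw [hs] <;> simp
  · exact neg_one_pow_pm _

-- ## z_j backward instantiation
def wjm (j : Fin d) : GG d →+ ℤ where
  toFun x := -(x.1 j)
  map_zero' := by simp
  map_add' x y := by
    show -((x.1 + y.1) j) = _
    simp [Pi.add_apply]
    ring

lemma q_one_of_minus_fix {n : II q} {j : Fin d} (h : Function.update n j (n j - 1) = n) :
    (q j : ℕ) = 1 := by
  have := congrFun h j
  rw [Function.update_self] at this
  exact (sub_one_eq_self_iff (n j)).1 this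

lemma wm_neg_one_of_q_one {n : II q} {j : Fin d} (h : (q j : ℕ) = 1) : wm q n j = -1 := by
  have := (n j).isLt
  rw [wm, if_pos (by omega)]

lemma ment_shiftM_unique (V : (Fin d → ℤ) → ℂ) (j : Fin d) (n : II q) {y : GG d}
    (hy : y ∈ (ment q V n (Function.update n j (n j - 1))).support)
    (hw : y.1 j = wm q n j) : y = (Pi.single j (wm q n j), 0) := by
  have hjlt := (n j).isLt
  rcases ment_support q V n _ hy with ⟨hd, hv⟩ | ⟨i, hc, rfl⟩ | ⟨i, hc, rfl⟩
  · exfalso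
    have hq1 := q_one_of_minus_fix q hd
    have hwm1 := wm_neg_one_of_q_one q (n := n) (j := j) hq1
    rw [hwm1] at hw
    rcases hv with rfl | rfl <;> simp at hw
  · exfalso
    rcases eq_or_ne i j with rfl | hij
    · have hval : n i + 1 = n i - 1 := (update_same_inj q hc.symm)
      have h12 := (add_one_eq_sub_one_iff (n i)).1 hval
      have hilt := (n i).isLt
      have hwj : wp q n i = wm q n i := by
        have hz : (Pi.single i (wp q n i) : Fin d → ℤ) i = wp q n i := Pi.single_eq_same _ _
        rw [show ((Pi.single i (wp q n i) : Fin d → ℤ), (0:ℕ)).1 i = wp q n i from hz] at hw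
        exact hw
      rw [wp, wm] at hwj
      rcases h12 with h1 | h1 <;> split_ifs at hwj <;> omega
    · have h1 := congrFun hc j
      rw [Function.update_self, Function.update_of_ne hij.symm] at h1
      have hq1 := (sub_one_eq_self_iff (n j)).1 h1
      have hwm1 := wm_neg_one_of_q_one q (n := n) (j := j) hq1
      have hz : (Pi.single i (wp q n i) : Fin d → ℤ) j = 0 := Pi.single_eq_of_ne hij.symm _
      rw [show ((Pi.single i (wp q n i) : Fin d → ℤ), (0:ℕ)).1 j = 0 from hz, hwm1] at hw
      simp at hw
  · rcases eq_or_ne i j with rfl | hij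
    · rfl
    · exfalso
      have h1 := congrFun hc j
      rw [Function.update_self, Function.update_of_ne hij.symm] at h1
      have hq1 := (sub_one_eq_self_iff (n j)).1 h1
      have hwm1 := wm_neg_one_of_q_one q (n := n) (j := j) hq1
      have hz : (Pi.single i (wm q n i) : Fin d → ℤ) j = 0 := Pi.single_eq_of_ne hij.symm _
      rw [show ((Pi.single i (wm q n i) : Fin d → ℤ), (0:ℕ)).1 j = 0 from hz, hwm1] at hw
      simp at hw

lemma force_shiftM (V : (Fin d → ℤ) → ℂ) (j : Fin d) (τ : Equiv.Perm (II q))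
    (hτ : ∀ n : II q, ∃ y ∈ (ment q V n (τ n)).support, y.1 j = wm q n j) :
    τ = shiftM q j := by
  have hwrap : ∀ n : II q, (n j : ℕ) = 0 → τ n = Function.update n j (n j - 1) := by
    intro n hn
    obtain ⟨y, hy, hwy⟩ := hτ n
    have hwm1 : wm q n j = -1 := by rw [wm, if_pos hn]
    rw [hwm1] at hwy
    rcases ment_support q V n _ hy with ⟨hd, hv⟩ | ⟨i, hc, rfl⟩ | ⟨i, hc, rfl⟩
    · exfalso; rcases hv with rfl | rfl <;> simp at hwy
    · exfalso
      rcases eq_or_ne i j with rfl | hij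
      · have hz : (Pi.single i (wp q n i) : Fin d → ℤ) i = wp q n i := Pi.single_eq_same _ _
        rw [show ((Pi.single i (wp q n i) : Fin d → ℤ), (0:ℕ)).1 i = wp q n i from hz] at hwy
        rw [wp] at hwy
        split_ifs at hwy <;> omega
      · have hz : (Pi.single i (wp q n i) : Fin d → ℤ) j = 0 := Pi.single_eq_of_ne hij.symm _
        rw [show ((Pi.single i (wp q n i) : Fin d → ℤ), (0:ℕ)).1 j = 0 from hz] at hwy
        simp at hwy
    · rcases eq_or_ne i j with rfl | hij
      · exact hc
      · exfalso
        have hz : (Pi.single i (wm q n i) : Fin d → ℤ) j = 0 := Pi.single_eq_of_ne hij.symm _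
        rw [show ((Pi.single i (wm q n i) : Fin d → ℤ), (0:ℕ)).1 j = 0 from hz] at hwy
        simp at hwy
  have key : ∀ m : ℕ, ∀ n : II q, ((n j :ℕ) = 0 ∨ (q j :ℕ) ≤ (n j :ℕ) + m) →
      τ n = Function.update n j (n j - 1) := by
    intro m
    induction m with
    | zero =>
      intro n hn
      rcases hn with hn | hn
      · exact hwrap n hn
      · have := (n j).isLt; omega
    | succ m ih =>
      intro n hn
      rcases hn with hn | hn
      · exact hwrap n hn
      by_cases h0 : (n j : ℕ) = 0
      · exact hwrap n h0
      have hjlt := (n j).isLt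
      have hqpos := (q j).pos
      have hq2 : 2 ≤ (q j : ℕ) := by omega
      have hwm0 : wm q n j = 0 := by rw [wm, if_neg h0]
      obtain ⟨y, hy, hwy⟩ := hτ n
      rw [hwm0] at hwy
      have hcontra : ∀ col : II q, τ n = col → col j = n j → False := by
        intro col hcol hcj
        have hnextj : (Function.update col j (col j + 1)) j = n j + 1 := by
          rw [Function.update_self, hcj]
        have hih : τ (Function.update col j (col j + 1))
            = Function.update (Function.update col j (col j + 1)) j
                ((Function.update col j (col j + 1)) j - 1) := by
          apply ih
          rw [hnextj, val_add_one]
          split_ifs with hv0 <;> omega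
        have hτnext : τ (Function.update col j (col j + 1)) = col := by
          rw [hih, hnextj, add_one_sub_one, Function.update_idem, ← hcj,
            Function.update_eq_self]
        have hpn : Function.update col j (col j + 1) = n := τ.injective (hτnext.trans hcol.symm)
        have hval : n j + 1 = n j := by
          rw [← hnextj, hpn]
        have hq1 := (add_one_eq_self_iff (n j)).1 hval
        omega
      rcases ment_support q V n _ hy with ⟨hd, hv⟩ | ⟨i, hc, rfl⟩ | ⟨i, hc, rfl⟩
      · exact (hcontra n hd rfl).elim
      · rcases eq_or_ne i j with rfl | hij
        · -- forward hop in direction i; weight 0 forces (n i)+1 ≠ q i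
          exfalso
          have hz : (Pi.single i (wp q n i) : Fin d → ℤ) i = wp q n i := Pi.single_eq_same _ _
          rw [show ((Pi.single i (wp q n i) : Fin d → ℤ), (0:ℕ)).1 i = wp q n i from hz] at hwy
          have hnc : (n i : ℕ) + 1 ≠ (q i : ℕ) := by
            rw [wp] at hwy
            intro hcc
            rw [if_pos hcc] at hwy
            omega
          have hv1 : ((n i + 1 : Fin ((q i :ℕ))) : ℕ) = (n i : ℕ) + 1 := by
            rw [val_add_one, if_neg hnc]
          have hnextj : (Function.update n i (n i + 1 + 1)) i = n i + 1 + 1 :=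
            Function.update_self _ _ _
          have hih : τ (Function.update n i (n i + 1 + 1))
              = Function.update (Function.update n i (n i + 1 + 1)) i
                  ((Function.update n i (n i + 1 + 1)) i - 1) := by
            apply ih
            rw [hnextj, val_add_one, hv1]
            split_ifs with hv0 <;> omega
          have hτnext : τ (Function.update n i (n i + 1 + 1)) = Function.update n i (n i + 1) := by
            rw [hih, hnextj, add_one_sub_one, Function.update_idem]
          have hpn : Function.update n i (n i + 1 + 1) = n := τ.injective (hτnext.trans hc.symm)
          have hval : n i + 1 + 1 = n i := by
            have := congrFun hpn i
            rwa [Function.update_self] at this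
          have hvv : ((n i + 1 + 1 : Fin ((q i :ℕ))) : ℕ) = (n i : ℕ) := by rw [hval]
          rw [val_add_one, hv1] at hvv
          split_ifs at hvv <;> omega
        · exact (hcontra _ hc (by rw [Function.update_of_ne hij.symm])).elim
      · rcases eq_or_ne i j with rfl | hij
        · exact hc
        · exact (hcontra _ hc (by rw [Function.update_of_ne hij.symm])).elim
  apply Equiv.ext
  intro n
  rw [shiftM_apply]
  exact key ((q j :ℕ)) n (Or.inr (by omega))

lemma ment_shiftM_value (V : (Fin d → ℤ) → ℂ) (j : Fin d) (n : II q) :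
    ment q V n (Function.update n j (n j - 1)) ((Pi.single j (wm q n j) : Fin d → ℤ), (0:ℕ))
      = -1 := by
  have hjlt := (n j).isLt
  rw [ment_apply]
  have hdiag : (if Function.update n j (n j - 1) = n then
      ((if ((0:Fin d → ℤ),(1:ℕ)) = ((Pi.single j (wm q n j) : Fin d → ℤ), (0:ℕ)) then (-1:ℂ) else 0)
        + (if ((0:Fin d → ℤ),(0:ℕ)) = ((Pi.single j (wm q n j) : Fin d → ℤ), (0:ℕ)) then V (nZ q n) else 0)) else 0) = 0 := by
    by_cases hd : Function.update n j (n j - 1) = n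
    · rw [if_pos hd]
      have hq1 := q_one_of_minus_fix q hd
      have hwm1 := wm_neg_one_of_q_one q (n := n) (j := j) hq1
      rw [if_neg (by simp [Prod.ext_iff]), if_neg ?hne]
      · ring
      case hne =>
        intro h
        have h2 : (0 : Fin d → ℤ) j = (Pi.single j (wm q n j) : Fin d → ℤ) j :=
          congrFun (Prod.ext_iff.1 h).1 j
        simp only [Pi.zero_apply, Pi.single_eq_same, hwm1] at h2
        omega
    · rw [if_neg hd]
  rw [hdiag, zero_add]
  rw [Finset.sum_eq_single j]
  · rw [if_pos rfl, if_pos rfl]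
    have hplus : (if Function.update n j (n j - 1) = Function.update n j (n j + 1) then
        (if ((Pi.single j (wp q n j) : Fin d → ℤ), (0:ℕ)) = ((Pi.single j (wm q n j) : Fin d → ℤ), (0:ℕ)) then (-1:ℂ) else 0) else 0) = 0 := by
      by_cases hcc : Function.update n j (n j - 1) = Function.update n j (n j + 1)
      · rw [if_pos hcc, if_neg ?hne2]
        case hne2 =>
          intro h
          have h2 : (Pi.single j (wp q n j) : Fin d → ℤ) j = (Pi.single j (wm q n j) : Fin d → ℤ) j :=
            congrFun (Prod.ext_iff.1 h).1 j
          simp only [Pi.single_eq_same] at h2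
          have h12 := (add_one_eq_sub_one_iff (n j)).1 (update_same_inj q hcc.symm)
          rw [wm, wp] at h2
          rcases h12 with h1 | h1 <;> split_ifs at h2 <;> omega
      · rw [if_neg hcc]
    rw [hplus]
    ring
  · intro i _ hij
    have hplus : (if Function.update n j (n j - 1) = Function.update n i (n i + 1) then
        (if ((Pi.single i (wp q n i) : Fin d → ℤ), (0:ℕ)) = ((Pi.single j (wm q n j) : Fin d → ℤ), (0:ℕ)) then (-1:ℂ) else 0) else 0) = 0 := by
      by_cases hcc : Function.update n j (n j - 1) = Function.update n i (n i + 1)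
      · rw [if_pos hcc, if_neg ?hne3]
        case hne3 =>
          intro h
          have h1' := congrFun hcc i
          rw [Function.update_self, Function.update_of_ne hij] at h1'
          have hqi1 := (add_one_eq_self_iff (n i)).1 h1'.symm
          have h2 : (Pi.single i (wp q n i) : Fin d → ℤ) i = (Pi.single j (wm q n j) : Fin d → ℤ) i :=
            congrFun (Prod.ext_iff.1 h).1 i
          rw [Pi.single_eq_same, Pi.single_eq_of_ne hij] at h2
          have := wp_one_of_q_one q (n := n) (j := i) hqi1
          omega
      · rw [if_neg hcc]
    have hminus : (if Function.update n j (n j - 1) = Function.update n i (n i - 1) then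
        (if ((Pi.single i (wm q n i) : Fin d → ℤ), (0:ℕ)) = ((Pi.single j (wm q n j) : Fin d → ℤ), (0:ℕ)) then (-1:ℂ) else 0) else 0) = 0 := by
      by_cases hcc : Function.update n j (n j - 1) = Function.update n i (n i - 1)
      · rw [if_pos hcc, if_neg ?hne4]
        case hne4 =>
          intro h
          have h1' := congrFun hcc i
          rw [Function.update_self, Function.update_of_ne hij] at h1'
          have hqi1 := (sub_one_eq_self_iff (n i)).1 h1'.symm
          have hwmi := wm_neg_one_of_q_one q (n := n) (j := i) hqi1
          have h2 : (Pi.single i (wm q n i) : Fin d → ℤ) i = (Pi.single j (wm q n j) : Fin d → ℤ) i :=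
            congrFun (Prod.ext_iff.1 h).1 i
          rw [Pi.single_eq_same, Pi.single_eq_of_ne hij] at h2
          omega
      · rw [if_neg hcc]
    rw [hplus, hminus]
    ring
  · intro h
    exact absurd (Finset.mem_univ j) h

lemma sum_ggM (j : Fin d) :
    (∑ n : II q, ((Pi.single j (wm q n j) : Fin d → ℤ), (0:ℕ)))
      = ((Pi.single j (-((QQ q / ((q j : ℕ)) : ℕ) : ℤ)) : Fin d → ℤ), (0:ℕ)) := by
  have hfst : (∑ n : II q, ((Pi.single j (wm q n j) : Fin d → ℤ), (0:ℕ))).1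
      = (Pi.single j (-((QQ q / ((q j : ℕ)) : ℕ) : ℤ)) : Fin d → ℤ) := by
    rw [Prod.fst_sum]
    funext i
    rw [Finset.sum_apply]
    rcases eq_or_ne i j with rfl | hij
    · simp only [Pi.single_eq_same]
      exact sum_wm q i
    · rw [Pi.single_eq_of_ne hij]
      exact Finset.sum_eq_zero fun n _ => Pi.single_eq_of_ne hij _
  have hsnd : (∑ n : II q, ((Pi.single j (wm q n j) : Fin d → ℤ), (0:ℕ))).2 = 0 := by
    rw [Prod.snd_sum]
    exact Finset.sum_const_zero
  exact Prod.ext hfst hsnd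

lemma cdet_zj_bot (V : (Fin d → ℤ) → ℂ) (j : Fin d) :
    cdet q V ((Pi.single j (-((QQ q / ((q j : ℕ)) : ℕ) : ℤ)) : Fin d → ℤ), 0) = 1
      ∨ cdet q V ((Pi.single j (-((QQ q / ((q j : ℕ)) : ℕ) : ℤ)) : Fin d → ℤ), 0) = -1 := by
  classical
  have hb : ∀ n n' : II q, ∀ y ∈ (Matrix.of (ment q V) n n').support, wjm j y ≤ -(wm q n j) := by
    intro n n' y hy
    have := entry_wj_ge q V j n n' hy
    show -(y.1 j) ≤ -(wm q n j)
    omega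
  have hu : ∀ n : II q, ∀ y ∈ (Matrix.of (ment q V) n (shiftM q j n)).support,
      wjm j y = -(wm q n j) → y = ((Pi.single j (wm q n j) : Fin d → ℤ), (0:ℕ)) := by
    intro n y hy hwy
    apply ment_shiftM_unique q V j n hy
    have : -(y.1 j) = -(wm q n j) := hwy
    omega
  have hwgg : ∀ n : II q, wjm j ((Pi.single j (wm q n j) : Fin d → ℤ), (0:ℕ)) = -(wm q n j) := by
    intro n
    show -((Pi.single j (wm q n j) : Fin d → ℤ) j) = _
    rw [Pi.single_eq_same]
  have hforce : ∀ τ : Equiv.Perm (II q),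
      (∀ n, ∃ y ∈ (Matrix.of (ment q V) n (τ n)).support, wjm j y = -(wm q n j)) →
        τ = shiftM q j := by
    intro τ hτ
    apply force_shiftM q V j τ
    intro n
    obtain ⟨y, hy, hwy⟩ := hτ n
    refine ⟨y, hy, ?_⟩
    have : -(y.1 j) = -(wm q n j) := hwy
    omega
  have h := det_apply_top q (wjm j) (Matrix.of (ment q V)) (fun n => -(wm q n j))
    (fun n => ((Pi.single j (wm q n j) : Fin d → ℤ), (0:ℕ))) (shiftM q j) hb hu hwgg hforce
  rw [sum_ggM] at h
  rw [cdet, h]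
  have hv : ∀ n : II q, (Matrix.of (ment q V) n (shiftM q j n))
      ((fun n : II q => ((Pi.single j (wm q n j) : Fin d → ℤ), (0:ℕ))) n) = -1 :=
    fun n => ment_shiftM_value q V j n
  rw [Finset.prod_congr rfl fun n _ => hv n, Finset.prod_const, Finset.card_univ, Q_card]
  apply pm_one_mul
  · rcases Int.units_eq_one_or (Equiv.Perm.sign (shiftM q j)) with hs | hs <;> rw [hs] <;> simp
  · exact neg_one_pow_pm _

-- ## polynomial extension
lemma exists_poly (V : (Fin d → ℤ) → ℂ) :
    ∃ P : MvPolynomial (Fin (d + 1)) ℂ,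
      ∀ (z : Fin d → ℂ), (∀ j, z j ≠ 0) → ∀ lam : ℂ,
        (∏ j, z j ^ ((∏ i, (q i : ℕ)) / ((q j : ℕ)))) * scriptP q V z lam
          = MvPolynomial.eval (Fin.snoc z lam) P := by
  classical
  refine ⟨∑ a ∈ (cdet q V).support, MvPolynomial.monomial
    (Finsupp.equivFunOnFinite.symm
      (Fin.snoc (fun j => ((((QQ q / ((q j : ℕ)) : ℕ)) : ℤ) + a.1 j).toNat) a.2)) (cdet q V a), ?_⟩
  intro z hz lam
  have hQ : (∏ j, z j ^ ((∏ i, (q i : ℕ)) / ((q j : ℕ))))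
      = ∏ j, z j ^ ((QQ q / ((q j : ℕ)) : ℕ)) := rfl
  rw [hQ, scriptP_sum q V z lam hz, AddMonoidAlgebra.sum, Finsupp.sum, Finset.mul_sum, map_sum]
  apply Finset.sum_congr rfl
  intro a ha
  rw [MvPolynomial.eval_monomial]
  rw [Finsupp.prod_fintype _ _ (fun i => pow_zero _)]
  have hco : ∀ i : Fin (d+1),
      (Finsupp.equivFunOnFinite.symm
        (Fin.snoc (fun j => ((((QQ q / ((q j : ℕ)) : ℕ)) : ℤ) + a.1 j).toNat) a.2) : Fin (d+1) →₀ ℕ) i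
      = (Fin.snoc (fun j => ((((QQ q / ((q j : ℕ)) : ℕ)) : ℤ) + a.1 j).toNat) a.2
          : Fin (d+1) → ℕ) i :=
    fun i => rfl
  rw [Fin.prod_univ_castSucc]
  simp only [hco, Fin.snoc_castSucc, Fin.snoc_last]
  have hbound := (cdet_support_bounds q V ha).1
  have hmerge : ∀ j : Fin d,
      z j ^ ((QQ q / ((q j : ℕ)) : ℕ)) * z j ^ (a.1 j)
        = z j ^ (((((QQ q / ((q j : ℕ)) : ℕ)) : ℤ) + a.1 j).toNat) := by
    intro j
    have hb := abs_le.1 (hbound j)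
    rw [← zpow_natCast (z j) (((((QQ q / ((q j : ℕ)) : ℕ)) : ℤ) + a.1 j).toNat),
      Int.toNat_of_nonneg (by omega), ← zpow_natCast (z j) ((QQ q / ((q j : ℕ)) : ℕ)),
      ← zpow_add₀ (hz j)]
  calc (∏ j, z j ^ ((QQ q / ((q j : ℕ)) : ℕ))) * (cdet q V a * (∏ j, z j ^ (a.1 j)) * lam ^ a.2)
      = cdet q V a * ((∏ j, z j ^ ((QQ q / ((q j : ℕ)) : ℕ)) * z j ^ (a.1 j)) * lam ^ a.2) := by
        rw [Finset.prod_mul_distrib]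
        ring
    _ = cdet q V a * ((∏ j, z j ^ (((((QQ q / ((q j : ℕ)) : ℕ)) : ℤ) + a.1 j).toNat)) * lam ^ a.2) := by
        rw [Finset.prod_congr rfl fun j _ => hmerge j]
    _ = _ := by ring

end Stmt1

/-- `𝒫_V(z,λ) = det(D_V(z) - λI)` is a Laurent polynomial in
`z₁, …, z_d` and a polynomial in `λ`: after multiplying by `z₁^{Q/q₁} ⋯ z_d^{Q/q_d}`
it extends to a polynomial on `ℂ^{d+1}`.  As a polynomial in `λ` it has degree
exactly `Q` with leading coefficient `(-1)^Q`, and for each `j` its degree in `z_j`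
and in `z_j⁻¹` is exactly `Q/q_j`, the monomials `z_j^{Q/q_j}` and `z_j^{-Q/q_j}`
appearing with coefficient `±1`. -/
theorem statement1 (d : ℕ) (hd : 1 ≤ d) (q : Fin d → ℕ+)
    (hq : ∀ i j, i ≠ j → Nat.Coprime (q i) (q j))
    (V : (Fin d → ℤ) → ℂ) (hV : IsPeriodic q V) :
    (∃ P : MvPolynomial (Fin (d + 1)) ℂ,
      ∀ (z : Fin d → ℂ), (∀ j, z j ≠ 0) → ∀ lam : ℂ,
        (∏ j, z j ^ ((∏ i, (q i : ℕ)) / (q j : ℕ))) * scriptP q V z lam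
          = MvPolynomial.eval (Fin.snoc z lam) P) ∧
    ∃ c : ((Fin d → ℤ) × ℕ) →₀ ℂ,
      (∀ (z : Fin d → ℂ), (∀ j, z j ≠ 0) → ∀ lam : ℂ,
        scriptP q V z lam = c.sum fun a C => C * (∏ j, z j ^ a.1 j) * lam ^ a.2) ∧
      (∀ a ∈ c.support,
        (∀ j, |a.1 j| ≤ (((∏ i, (q i : ℕ)) / (q j : ℕ) : ℕ) : ℤ)) ∧ a.2 ≤ ∏ i, (q i : ℕ)) ∧
      c (0, ∏ i, (q i : ℕ)) = (-1 : ℂ) ^ (∏ i, (q i : ℕ)) ∧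
      (∀ a ∈ c.support, a.2 = ∏ i, (q i : ℕ) → a = (0, ∏ i, (q i : ℕ))) ∧
      (∀ j : Fin d,
        (c (Pi.single j (((∏ i, (q i : ℕ)) / (q j : ℕ) : ℕ) : ℤ), 0) = 1 ∨
         c (Pi.single j (((∏ i, (q i : ℕ)) / (q j : ℕ) : ℕ) : ℤ), 0) = -1) ∧
        (c (Pi.single j (-(((∏ i, (q i : ℕ)) / (q j : ℕ) : ℕ) : ℤ)), 0) = 1 ∨
         c (Pi.single j (-(((∏ i, (q i : ℕ)) / (q j : ℕ) : ℕ) : ℤ)), 0) = -1)) := by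
  classical
  constructor
  · exact Stmt1.exists_poly q V
  · refine ⟨(Stmt1.cdet q V).coeff, ?_, ?_, ?_, ?_, ?_⟩
    · intro z hz lam
      exact Stmt1.scriptP_sum q V z lam hz
    · intro a ha
      exact Stmt1.cdet_support_bounds q V ha
    · exact Stmt1.cdet_lam_top q V
    · intro a ha h2
      exact Stmt1.cdet_lam_unique q V ha h2
    · intro j
      exact ⟨Stmt1.cdet_zj_top q V j, Stmt1.cdet_zj_bot q V j⟩


end
end

section
/- Let d≥2 and let V:ℤ^d→ℂ be Γ-periodic. Then 𝒫_V(z,λ), regarded as a Laurent polynomial in the d+1 variables z_1,…,z_d,λ (Laurent in z_1,…,z_d and polynomial in λ), is irreducible: there exist no Laurent polynomials f(z,λ), g(z,λ), neither of which is a monomial, with 𝒫_V=fg. In particular, the Bloch variety B(V)={(k,λ)∈ℂ^{d+1} : 𝒫_V(e^{2πik_1},…,e^{2πik_d},λ)=0} is irreducible modulo periodicity. -/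
noncomputable section

/-- A function of `(z, λ) ∈ (ℂ^*)^d × ℂ` given by a polynomial which is Laurent in
`z₁, …, z_d` and polynomial in `λ`. -/
def IsLaurentP {d : ℕ} (f : (Fin d → ℂ) → ℂ → ℂ) : Prop :=
  ∃ c : ((Fin d → ℤ) × ℕ) →₀ ℂ, ∀ z : Fin d → ℂ, (∀ j, z j ≠ 0) → ∀ lam : ℂ,
    f z lam = c.sum fun a C => C * (∏ j, z j ^ a.1 j) * lam ^ a.2

/-- A monomial `C z₁^{a₁} ⋯ z_d^{a_d} λ^{a_{d+1}}` with `C ≠ 0`, `aⱼ ∈ ℤ` for `j ≤ d`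
and `a_{d+1} ∈ ℕ`. -/
def IsMonomialP {d : ℕ} (f : (Fin d → ℂ) → ℂ → ℂ) : Prop :=
  ∃ (C : ℂ) (a : Fin d → ℤ) (m : ℕ), C ≠ 0 ∧
    ∀ z : Fin d → ℂ, (∀ j, z j ≠ 0) → ∀ lam : ℂ,
      f z lam = C * (∏ j, z j ^ a j) * lam ^ m

/-- Irreducibility in the `d + 1` variables `z₁, …, z_d, λ`: there is no
factorization into two non-monomial such polynomials. -/
def LaurentIrreducibleP {d : ℕ} (h : (Fin d → ℂ) → ℂ → ℂ) : Prop :=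
  ¬ ∃ f g : (Fin d → ℂ) → ℂ → ℂ, IsLaurentP f ∧ IsLaurentP g ∧
      ¬ IsMonomialP f ∧ ¬ IsMonomialP g ∧
      ∀ z : Fin d → ℂ, (∀ j, z j ≠ 0) → ∀ lam : ℂ, h z lam = f z lam * g z lam



attribute [-instance] Finsupp.instMul Finsupp.instMulZeroClass Finsupp.instSemigroupWithZero
  Finsupp.instNonUnitalNonAssocSemiring Finsupp.instNonUnitalSemiring
  Finsupp.instNonUnitalCommSemiring Finsupp.instNonUnitalNonAssocRing Finsupp.instNonUnitalRing
  Finsupp.instNonUnitalCommRing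

namespace S5

/-- Exponent monoid: Laurent exponents in `z` and a `ℕ`-exponent in `λ`. -/
abbrev G (d : ℕ) := (Fin d → ℤ) × ℕ

/-- The big Laurent-polynomial ring. -/
abbrev A (d : ℕ) := G d →₀ ℂ

/-- Lex order target. -/
abbrev K (d : ℕ) := Lex (Fin (d + 2) → ℤ)

variable {d : ℕ}

/-- Multiplication of `A d` (convolution). -/
def mulA : Mul (A d) :=
  ⟨fun x y => (AddMonoidAlgebra.ofCoeff x * AddMonoidAlgebra.ofCoeff y : AddMonoidAlgebra ℂ (G d)).coeff⟩
/-- One of `A d`. -/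
def oneA : One (A d) := ⟨(1 : AddMonoidAlgebra ℂ (G d)).coeff⟩
/-- Powers in `A d`. -/
def powA : Pow (A d) ℕ :=
  ⟨fun x n => (AddMonoidAlgebra.ofCoeff x ^ n : AddMonoidAlgebra ℂ (G d)).coeff⟩
/-- Casts into `A d`. -/
def natCastA : NatCast (A d) := ⟨fun n => (n : AddMonoidAlgebra ℂ (G d)).coeff⟩
/-- Casts into `A d`. -/
def intCastA : IntCast (A d) := ⟨fun n => (n : AddMonoidAlgebra ℂ (G d)).coeff⟩

instance instCommRingA : CommRing (A d) :=
  letI := mulA (d := d); letI := oneA (d := d); letI := powA (d := d)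
  letI := natCastA (d := d); letI := intCastA (d := d)
  Function.Injective.commRing (AddMonoidAlgebra.ofCoeff : A d → AddMonoidAlgebra ℂ (G d))
    AddMonoidAlgebra.ofCoeff_injective rfl rfl (fun _ _ => rfl) (fun _ _ => rfl) (fun _ => rfl)
    (fun _ _ => rfl) (fun _ _ => rfl) (fun _ _ => rfl) (fun _ _ => rfl) (fun _ => rfl) (fun _ => rfl)

instance instMulRA : Mul (A d) := (instCommRingA (d := d)).toMul

instance instAlgebraA : Algebra ℂ (A d) :=
  Algebra.ofModule
    (fun r x y => AddMonoidAlgebra.ofCoeff_injective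
      (smul_mul_assoc r (AddMonoidAlgebra.ofCoeff x) (AddMonoidAlgebra.ofCoeff y)))
    (fun r x y => AddMonoidAlgebra.ofCoeff_injective
      (mul_smul_comm r (AddMonoidAlgebra.ofCoeff x) (AddMonoidAlgebra.ofCoeff y)))

/-- The identification of `A d` with the additive monoid algebra. -/
def toAMA : A d →ₐ[ℂ] AddMonoidAlgebra ℂ (G d) where
  toFun := AddMonoidAlgebra.ofCoeff
  map_one' := rfl
  map_mul' _ _ := rfl
  map_zero' := rfl
  map_add' _ _ := rfl
  commutes' r := by
    show AddMonoidAlgebra.ofCoeff (algebraMap ℂ (A d) r) = _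
    rw [Algebra.algebraMap_eq_smul_one, Algebra.algebraMap_eq_smul_one]
    rfl

lemma A_mul_apply [DecidableEq (G d)] (x y : A d) (p : G d) :
    (x * y) p = x.sum fun a₁ b₁ => y.sum fun a₂ b₂ => if a₁ + a₂ = p then b₁ * b₂ else 0 :=
  AddMonoidAlgebra.coeff_mul (AddMonoidAlgebra.ofCoeff x) (AddMonoidAlgebra.ofCoeff y) p

open scoped Pointwise in
lemma A_support_mul [DecidableEq (G d)] (x y : A d) : (x * y).support ⊆ x.support + y.support :=
  AddMonoidAlgebra.support_coeff_mul_subset (AddMonoidAlgebra.ofCoeff x) (AddMonoidAlgebra.ofCoeff y)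

lemma A_one_def : (1 : A d) = Finsupp.single 0 1 := rfl

/-- An additive, injective order key into a lex order. -/
structure OrdKey (d : ℕ) where
  u : G d → K d
  inj : Function.Injective u
  addv : ∀ a b : G d, ofLex (u (a + b)) = ofLex (u a) + ofLex (u b)

namespace OrdKey

variable (O : OrdKey d)

lemma strict {a b : G d} (h : O.u a < O.u b) (c : G d) : O.u (a + c) < O.u (b + c) := by
  obtain ⟨i, hlt, hi⟩ := h
  refine ⟨i, fun j hj => ?_, ?_⟩
  · have := hlt j hj
    show ofLex (O.u (a + c)) j = ofLex (O.u (b + c)) j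
    rw [O.addv, O.addv]
    simpa using congrArg (· + ofLex (O.u c) j) this
  · show ofLex (O.u (a + c)) i < ofLex (O.u (b + c)) i
    rw [O.addv, O.addv]
    exact add_lt_add_left hi _
  
lemma mono {a b : G d} (h : O.u a ≤ O.u b) (c : G d) : O.u (a + c) ≤ O.u (b + c) := by
  rcases lt_or_eq_of_le h with h | h
  · exact le_of_lt (O.strict h c)
  · rw [O.inj h]

lemma forcing {s₁ s₂ t₁ t₂ : G d} (h₁ : O.u s₁ ≤ O.u t₁) (h₂ : O.u s₂ ≤ O.u t₂)
    (h : s₁ + s₂ = t₁ + t₂) : s₁ = t₁ ∧ s₂ = t₂ := by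
  have ha : s₁ = t₁ := by
    by_contra hne
    have hlt : O.u s₁ < O.u t₁ := lt_of_le_of_ne h₁ (fun he => hne (O.inj he))
    have h3 : O.u (s₁ + s₂) < O.u (t₁ + s₂) := O.strict hlt s₂
    have h4 : O.u (t₁ + s₂) ≤ O.u (t₁ + t₂) := by
      rw [add_comm t₁ s₂, add_comm t₁ t₂]; exact O.mono h₂ t₁
    rw [h] at h3
    exact absurd (h3.trans_le h4) (lt_irrefl _)
  refine ⟨ha, ?_⟩
  rw [ha] at h
  exact add_left_cancel h

/-- Key multiplication lemma: the coefficient of the product at the sum of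
maximum points is the product of coefficients. -/
lemma mul_apply_max {x y : A d} {a b : G d}
    (hx : ∀ a' ∈ x.support, O.u a' ≤ O.u a) (hy : ∀ b' ∈ y.support, O.u b' ≤ O.u b) :
    (x * y) (a + b) = x a * y b := by
  classical
  rw [A_mul_apply]
  simp only [Finsupp.sum]
  rw [← Finset.sum_product']
  refine (Finset.sum_eq_single (a, b) ?_ ?_).trans (by simp)
  · rintro ⟨a₁, a₂⟩ hp hne
    simp only [Finset.mem_product] at hp
    by_cases he : a₁ + a₂ = a + b
    · rcases O.forcing (hx _ hp.1) (hy _ hp.2) he with ⟨rfl, rfl⟩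
      exact absurd rfl hne
    · simp [he]
  · intro hab
    simp only [Finset.mem_product, not_and_or, Finsupp.mem_support_iff, not_not] at hab
    rcases hab with h | h <;> simp [h]

end OrdKey

lemma support_mul_exists {x y : A d} {c : G d} (hc : c ∈ (x * y).support) :
    ∃ a ∈ x.support, ∃ b ∈ y.support, a + b = c := by
  classical
  have := A_support_mul x y hc
  rwa [Finset.mem_add] at this

namespace OrdKey
variable (O : OrdKey d)

/-- Product version over a finite index set. -/
lemma prod_key {ι : Type*} (s : Finset ι) (x : ι → A d) (t : ι → G d)
    (h : ∀ i ∈ s, ∀ a' ∈ (x i).support, O.u a' ≤ O.u (t i)) :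
    (∀ c ∈ (∏ i ∈ s, x i).support, O.u c ≤ O.u (∑ i ∈ s, t i)) ∧
      (∏ i ∈ s, x i) (∑ i ∈ s, t i) = ∏ i ∈ s, (x i) (t i) := by
  classical
  induction s using Finset.induction_on with
  | empty =>
      constructor
      · intro c hc
        simp only [Finset.prod_empty, Finset.sum_empty] at *
        have : c ∈ (1 : A d).support := hc
        rw [A_one_def, Finsupp.support_single_ne_zero _ (one_ne_zero)] at this
        simp only [Finset.mem_singleton] at this
        subst this; exact le_refl _
      · simp [A_one_def]
  | insert i s' hi ih =>
      have hh : ∀ i' ∈ s', ∀ a' ∈ (x i').support, O.u a' ≤ O.u (t i') :=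
        fun i' hi' => h i' (Finset.mem_insert_of_mem hi')
      obtain ⟨ih1, ih2⟩ := ih hh
      rw [Finset.prod_insert hi, Finset.sum_insert hi]
      constructor
      · intro c hc
        obtain ⟨a, ha, b, hb, rfl⟩ := support_mul_exists hc
        have h1 : O.u a ≤ O.u (t i) := h i (Finset.mem_insert_self i s') a ha
        have h2 : O.u b ≤ O.u (∑ i' ∈ s', t i') := ih1 b hb
        calc O.u (a + b) ≤ O.u (t i + b) := O.mono h1 b
          _ ≤ O.u (t i + ∑ i' ∈ s', t i') := by
              rw [add_comm (t i) b, add_comm (t i) _]; exact O.mono h2 (t i)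
      · rw [O.mul_apply_max (h i (Finset.mem_insert_self i s')) ih1, ih2,
          Finset.prod_insert hi]

lemma prod_decomp {ι : Type*} [DecidableEq ι] (s : Finset ι) (x : ι → A d) {c : G d}
    (hc : c ∈ (∏ i ∈ s, x i).support) :
    ∃ t : ι → G d, (∀ i ∈ s, t i ∈ (x i).support) ∧ c = ∑ i ∈ s, t i := by
  classical
  induction s using Finset.induction_on generalizing c with
  | empty =>
      refine ⟨fun _ => 0, by simp, ?_⟩
      simp only [Finset.prod_empty] at hc
      rw [A_one_def, Finsupp.support_single_ne_zero _ (one_ne_zero)] at hc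
      simpa using hc
  | insert i s' hi ih =>
      rw [Finset.prod_insert hi] at hc
      obtain ⟨a, ha, b, hb, rfl⟩ := support_mul_exists hc
      obtain ⟨t, ht, rfl⟩ := ih hb
      refine ⟨Function.update t i a, ?_, ?_⟩
      · intro i' hi'
        rcases Finset.mem_insert.1 hi' with rfl | hi'
        · rw [Function.update_self]; exact ha
        · rw [Function.update_of_ne (fun he => hi (by rw [← he]; exact hi'))]
          exact ht i' hi'
      · rw [Finset.sum_insert hi, Function.update_self]
        congr 1
        apply Finset.sum_congr rfl
        intro i' hi'
        rw [Function.update_of_ne (fun he => hi (by rw [← he]; exact hi'))]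

end OrdKey


/-- The weighted functional `Φ_j(α, i) = q_j α_j + i`. -/
def Phi (q : Fin d → ℕ+) (j : Fin d) (a : G d) : ℤ :=
  ((q j : ℕ) : ℤ) * a.1 j + (a.2 : ℤ)

lemma Phi_add (q : Fin d → ℕ+) (j : Fin d) (a b : G d) :
    Phi q j (a + b) = Phi q j a + Phi q j b := by
  simp only [Phi, Prod.fst_add, Prod.snd_add, Pi.add_apply]
  push_cast; ring

/-- Component vector of an order key. -/
def kvec (c₀ c₁ : G d → ℤ) (s : ℤ) (a : G d) : Fin (d + 2) → ℤ :=
  Fin.cons (c₀ a) (Fin.cons (c₁ a) (fun i => s * a.1 i))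

lemma kvec_zero (c₀ c₁ : G d → ℤ) (s : ℤ) (a : G d) :
    kvec c₀ c₁ s a 0 = c₀ a := rfl

lemma kvec_one (c₀ c₁ : G d → ℤ) (s : ℤ) (a : G d) :
    kvec c₀ c₁ s a 1 = c₁ a := rfl

/-- Build an order key from two additive functionals and a coordinate sign. -/
def mkKey (c₀ c₁ : G d → ℤ) (s : ℤ)
    (hadd₀ : ∀ a b, c₀ (a + b) = c₀ a + c₀ b)
    (hadd₁ : ∀ a b, c₁ (a + b) = c₁ a + c₁ b)
    (hs : s ≠ 0)
    (hrec : ∀ a b : G d, c₀ a = c₀ b → a.1 = b.1 → a = b) : OrdKey d where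
  u := fun a => toLex (kvec c₀ c₁ s a)
  inj := by
    intro a b h
    have h' : kvec c₀ c₁ s a = kvec c₀ c₁ s b := h
    have h0 : c₀ a = c₀ b := congrFun h' 0
    have hcoord : a.1 = b.1 := by
      funext i
      have := congrFun h' (Fin.succ (Fin.succ i))
      simp only [kvec, Fin.cons_succ] at this
      exact mul_left_cancel₀ hs this
    exact hrec a b h0 hcoord
  addv := by
    intro a b
    funext i
    show kvec c₀ c₁ s (a + b) i = kvec c₀ c₁ s a i + kvec c₀ c₁ s b i
    refine Fin.cases ?_ (fun i' => ?_) i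
    · simp only [kvec, Fin.cons_zero]; exact hadd₀ a b
    · refine Fin.cases ?_ (fun i'' => ?_) i'
      · simp only [kvec, Fin.cons_succ, Fin.cons_zero]; exact hadd₁ a b
      · simp only [kvec, Fin.cons_succ, Prod.fst_add, Pi.add_apply]; ring

section keys
variable (c₀ c₁ : G d → ℤ) (s : ℤ)
    (hadd₀ : ∀ a b, c₀ (a + b) = c₀ a + c₀ b)
    (hadd₁ : ∀ a b, c₁ (a + b) = c₁ a + c₁ b)
    (hs : s ≠ 0)
    (hrec : ∀ a b : G d, c₀ a = c₀ b → a.1 = b.1 → a = b)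

lemma mkKey_lt_of_first {a b : G d} (h : c₀ a < c₀ b) :
    (mkKey c₀ c₁ s hadd₀ hadd₁ hs hrec).u a < (mkKey c₀ c₁ s hadd₀ hadd₁ hs hrec).u b := by
  refine ⟨0, fun j hj => ?_, ?_⟩
  · exact absurd hj (by simp [Fin.lt_def])
  · exact h

lemma mkKey_lt_of_second {a b : G d} (h0 : c₀ a = c₀ b) (h : c₁ a < c₁ b) :
    (mkKey c₀ c₁ s hadd₀ hadd₁ hs hrec).u a < (mkKey c₀ c₁ s hadd₀ hadd₁ hs hrec).u b := by
  refine ⟨1, fun j hj => ?_, ?_⟩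
  · have : j = 0 := (Fin.lt_one_iff j).mp hj
    subst this
    exact h0
  · exact h

lemma mkKey_le_of_cases {a b : G d}
    (h : c₀ a < c₀ b ∨ (c₀ a = c₀ b ∧ (c₁ a < c₁ b ∨ a = b))) :
    (mkKey c₀ c₁ s hadd₀ hadd₁ hs hrec).u a ≤ (mkKey c₀ c₁ s hadd₀ hadd₁ hs hrec).u b := by
  rcases h with h | ⟨h0, h | rfl⟩
  · exact le_of_lt (mkKey_lt_of_first _ _ _ _ _ _ _ h)
  · exact le_of_lt (mkKey_lt_of_second _ _ _ _ _ _ _ h0 h)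
  · exact le_refl _

lemma mkKey_le_first {a b : G d}
    (h : (mkKey c₀ c₁ s hadd₀ hadd₁ hs hrec).u a ≤ (mkKey c₀ c₁ s hadd₀ hadd₁ hs hrec).u b) :
    c₀ a ≤ c₀ b := by
  rcases lt_or_eq_of_le h with h | h
  · obtain ⟨i, hlt, hi⟩ := h
    rcases Fin.eq_zero_or_eq_succ i with rfl | ⟨i', rfl⟩
    · exact le_of_lt hi
    · have h0 := hlt 0 (by simp [Fin.lt_def])
      exact le_of_eq h0
  · have := (mkKey c₀ c₁ s hadd₀ hadd₁ hs hrec).inj h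
    rw [this]

end keys

lemma psi_rec : ∀ a b : G d, ((a.2 : ℤ) = (b.2 : ℤ)) → a.1 = b.1 → a = b := by
  intro a b h2 h1
  exact Prod.ext h1 (by exact_mod_cast h2)

lemma negpsi_rec : ∀ a b : G d, (-(a.2 : ℤ) = -(b.2 : ℤ)) → a.1 = b.1 → a = b := by
  intro a b h2 h1
  exact Prod.ext h1 (by omega)

/-- The key ordering by `Φ_j` first, then `+λ`-degree, then coordinates. -/
def keyPlus (q : Fin d → ℕ+) (j : Fin d) : OrdKey d :=
  mkKey (Phi q j) (fun a => (a.2 : ℤ)) 1 (Phi_add q j)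
    (fun a b => by simp only [Prod.snd_add]; push_cast; ring) one_ne_zero
    (fun a b h0 h1 => by
      refine Prod.ext h1 ?_
      simp only [Phi, h1] at h0
      omega)

/-- The key ordering by `Φ_j` first, then `-λ`-degree, then coordinates. -/
def keyMinus (q : Fin d → ℕ+) (j : Fin d) : OrdKey d :=
  mkKey (Phi q j) (fun a => -(a.2 : ℤ)) 1 (Phi_add q j)
    (fun a b => by simp only [Prod.snd_add]; push_cast; ring) one_ne_zero
    (fun a b h0 h1 => by
      refine Prod.ext h1 ?_
      simp only [Phi, h1] at h0
      omega)

/-- The key ordering by `λ`-degree first, then coordinates. -/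
def keyPsi : OrdKey d :=
  mkKey (fun a : G d => (a.2 : ℤ)) (fun _ => 0) 1
    (fun a b => by simp only [Prod.snd_add]; push_cast; ring) (fun _ _ => by ring)
    one_ne_zero psi_rec

/-- The reversal of `keyPsi`. -/
def keyNeg : OrdKey d :=
  mkKey (fun a : G d => -(a.2 : ℤ)) (fun _ => 0) (-1)
    (fun a b => by simp only [Prod.snd_add]; push_cast; ring) (fun _ _ => by ring)
    (by norm_num) negpsi_rec

/-- `keyNeg` reverses `keyPsi`. -/
lemma keyNeg_rev {a b : G d} (h : (keyNeg (d := d)).u a ≤ keyNeg.u b) :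
    (keyPsi (d := d)).u b ≤ keyPsi.u a := by
  rcases lt_or_eq_of_le h with h | h
  · obtain ⟨i, hlt, hi⟩ := h
    refine le_of_lt ⟨i, fun j hj => ?_, ?_⟩
    · have := hlt j hj
      -- components of keyNeg are negations of keyPsi's
      have hneg : ∀ x : G d, ∀ i : Fin (d+2),
          kvec (fun a : G d => -(a.2:ℤ)) (fun _ => 0) (-1) x i
            = -(kvec (fun a : G d => (a.2:ℤ)) (fun _ => 0) 1 x i) := by
        intro x i
        refine Fin.cases rfl (fun i' => ?_) i
        refine Fin.cases rfl (fun i'' => ?_) i'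
        simp only [kvec, Fin.cons_succ]; ring
      have h' : -(kvec (fun a : G d => (a.2:ℤ)) (fun _ => 0) 1 a j)
          = -(kvec (fun a : G d => (a.2:ℤ)) (fun _ => 0) 1 b j) := by
        rw [← hneg, ← hneg]; exact this
      have := neg_injective h'
      exact this.symm
    · have hneg : ∀ x : G d, ∀ i : Fin (d+2),
          kvec (fun a : G d => -(a.2:ℤ)) (fun _ => 0) (-1) x i
            = -(kvec (fun a : G d => (a.2:ℤ)) (fun _ => 0) 1 x i) := by
        intro x i
        refine Fin.cases rfl (fun i' => ?_) i
        refine Fin.cases rfl (fun i'' => ?_) i'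
        simp only [kvec, Fin.cons_succ]; ring
      have h' : -(kvec (fun a : G d => (a.2:ℤ)) (fun _ => 0) 1 a i)
          < -(kvec (fun a : G d => (a.2:ℤ)) (fun _ => 0) 1 b i) := by
        rw [← hneg, ← hneg]; exact hi
      exact neg_lt_neg_iff.mp h'
  · rw [keyNeg.inj h]


/-! ### Concrete matrix over the Laurent ring -/

/-- Fundamental domain. -/
abbrev Wt {d : ℕ} (q : Fin d → ℕ+) := ∀ j : Fin d, Fin ((q j : ℕ))

variable (q : Fin d → ℕ+)

lemma fem_val (qq : ℕ+) (a : ℤ) : ((fem qq a : ℕ) : ℤ) = a % ((qq : ℕ) : ℤ) := by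
  have hq : (0:ℤ) < ((qq : ℕ) : ℤ) := by exact_mod_cast qq.pos
  simp only [fem]
  exact Int.toNat_of_nonneg (Int.emod_nonneg a (ne_of_gt hq))

lemma fem_ext_iff (qq : ℕ+) (a : ℤ) (x : Fin (qq : ℕ)) :
    fem qq a = x ↔ a % ((qq : ℕ) : ℤ) = ((x : ℕ) : ℤ) := by
  constructor
  · intro h
    rw [← fem_val, h]
  · intro h
    apply Fin.ext
    have := congrArg Int.toNat h
    simpa [fem] using this

lemma fem_coe (qq : ℕ+) (x : Fin (qq : ℕ)) : fem qq ((x : ℕ) : ℤ) = x := by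
  rw [fem_ext_iff]
  apply Int.emod_eq_of_lt (by positivity)
  exact_mod_cast x.2

lemma fem_shift (qq : ℕ+) (a b : ℤ) :
    fem qq (((fem qq a : ℕ) : ℤ) + b) = fem qq (a + b) := by
  rw [fem_ext_iff, fem_val, Int.emod_add_emod, fem_val]

/-- Forward shift in direction `j` on the fundamental domain. -/
def up (j : Fin d) (n : Wt q) : Wt q :=
  Function.update n j (fem (q j) (((n j : ℕ) : ℤ) + 1))

/-- Backward shift in direction `j` on the fundamental domain. -/
def dn (j : Fin d) (n : Wt q) : Wt q :=
  Function.update n j (fem (q j) (((n j : ℕ) : ℤ) - 1))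

lemma up_apply_self (j : Fin d) (n : Wt q) :
    up q j n j = fem (q j) (((n j : ℕ) : ℤ) + 1) := Function.update_self _ _ _

lemma up_apply_ne (j : Fin d) (n : Wt q) {i : Fin d} (h : i ≠ j) :
    up q j n i = n i := Function.update_of_ne h _ _

lemma dn_apply_self (j : Fin d) (n : Wt q) :
    dn q j n j = fem (q j) (((n j : ℕ) : ℤ) - 1) := Function.update_self _ _ _

lemma dn_apply_ne (j : Fin d) (n : Wt q) {i : Fin d} (h : i ≠ j) :
    dn q j n i = n i := Function.update_of_ne h _ _

lemma dn_up (j : Fin d) (n : Wt q) : dn q j (up q j n) = n := by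
  funext i
  by_cases h : i = j
  · subst h
    rw [dn_apply_self, up_apply_self, sub_eq_add_neg, fem_shift]
    simpa using fem_coe (q i) (n i)
  · rw [dn_apply_ne q _ _ h, up_apply_ne q _ _ h]

lemma up_dn (j : Fin d) (n : Wt q) : up q j (dn q j n) = n := by
  funext i
  by_cases h : i = j
  · subst h
    rw [up_apply_self, dn_apply_self, fem_shift]
    simpa using fem_coe (q i) (n i)
  · rw [up_apply_ne q _ _ h, dn_apply_ne q _ _ h]

/-- The forward shift as a permutation of the fundamental domain. -/
def upE (j : Fin d) : Equiv.Perm (Wt q) :=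
  ⟨up q j, dn q j, dn_up q j, up_dn q j⟩

/-- Monomial exponent of the forward hop. -/
def wp (j : Fin d) (n : Wt q) : Fin d → ℤ :=
  Pi.single j ((((n j : ℕ) : ℤ) + 1) / ((q j : ℕ) : ℤ))

/-- Monomial exponent of the backward hop. -/
def wm (j : Fin d) (n : Wt q) : Fin d → ℤ :=
  Pi.single j ((((n j : ℕ) : ℤ) - 1) / ((q j : ℕ) : ℤ))

lemma div_plus (qq : ℕ+) (x : Fin (qq : ℕ)) :
    (((x : ℕ) : ℤ) + 1) / ((qq : ℕ) : ℤ) = if (x : ℕ) + 1 = (qq : ℕ) then 1 else 0 := by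
  have hx : (x : ℕ) < (qq : ℕ) := x.2
  split_ifs with h
  · have : ((x : ℕ) : ℤ) + 1 = ((qq : ℕ) : ℤ) := by exact_mod_cast h
    rw [this, Int.ediv_self (by exact_mod_cast qq.pos.ne')]
  · exact Int.ediv_eq_zero_of_lt (by positivity) (by omega)

lemma div_minus (qq : ℕ+) (x : Fin (qq : ℕ)) :
    (((x : ℕ) : ℤ) - 1) / ((qq : ℕ) : ℤ) = if (x : ℕ) = 0 then -1 else 0 := by
  have hx : (x : ℕ) < (qq : ℕ) := x.2
  have hq : (0:ℤ) < ((qq : ℕ) : ℤ) := by exact_mod_cast qq.pos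
  split_ifs with h
  · rw [h]
    have key : ((0:ℕ) : ℤ) - 1 = (((qq:ℕ):ℤ) - 1) + -1 * ((qq:ℕ):ℤ) := by ring
    rw [key, Int.add_mul_ediv_right _ _ (ne_of_gt hq),
      Int.ediv_eq_zero_of_lt (by omega) (by omega)]
    ring
  · exact Int.ediv_eq_zero_of_lt (by omega) (by omega)

/-- `up j n = n` iff `q j = 1`. -/
lemma up_eq_self_iff (j : Fin d) (n : Wt q) : up q j n = n ↔ (q j : ℕ) = 1 := by
  constructor
  · intro h
    have := congrFun h j
    rw [up_apply_self] at this
    rw [fem_ext_iff] at this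
    have hx : (n j : ℕ) < (q j : ℕ) := (n j).2
    have h2 : (((n j : ℕ) : ℤ) + 1) % ((q j : ℕ) : ℤ) = ((n j : ℕ) : ℤ) := this
    have h3 : (((n j : ℕ) : ℤ)) % ((q j : ℕ) : ℤ) = ((n j : ℕ) : ℤ) :=
      Int.emod_eq_of_lt (by positivity) (by exact_mod_cast hx)
    have h4 : ((((n j : ℕ) : ℤ) + 1) - ((n j : ℕ) : ℤ)) % ((q j : ℕ) : ℤ) = 0 := by
      rw [← Int.emod_eq_emod_iff_emod_sub_eq_zero, h2, h3]
    simp only [add_sub_cancel_left] at h4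
    have h5 : ((q j : ℕ) : ℤ) ∣ 1 := Int.dvd_of_emod_eq_zero h4
    have h6 : ((q j : ℕ) : ℤ) ≤ 1 := Int.le_of_dvd one_pos h5
    have := (q j).pos
    omega
  · intro h
    funext i
    by_cases hi : i = j
    · subst hi
      apply Fin.ext
      have h1 := (n i).2
      omega
    · rw [up_apply_ne q _ _ hi]

lemma dn_eq_self_iff (j : Fin d) (n : Wt q) : dn q j n = n ↔ (q j : ℕ) = 1 := by
  constructor
  · intro h
    have : up q j n = n := by
      conv_lhs => rw [← h]
      rw [up_dn]
    exact (up_eq_self_iff q j n).1 this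
  · intro h
    funext i
    by_cases hi : i = j
    · subst hi
      apply Fin.ext
      have h1 := (n i).2
      omega
    · rw [dn_apply_ne q _ _ hi]

/-- If `q j = 1` then every coordinate `n j` is `0`. -/
lemma val_eq_zero_of_q_one {j : Fin d} (h : (q j : ℕ) = 1) (n : Wt q) : (n j : ℕ) = 0 := by
  have := (n j).2
  omega

/-- `up j n = dn j n` implies `q j ∣ 2`. -/
lemma up_eq_dn_self (j : Fin d) (n : Wt q) (h : up q j n = dn q j n) :
    (q j : ℕ) = 1 ∨ (q j : ℕ) = 2 := by
  have := congrFun h j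
  rw [up_apply_self, dn_apply_self] at this
  have h2 : (((n j : ℕ) : ℤ) + 1) % ((q j : ℕ) : ℤ)
      = (((n j : ℕ) : ℤ) - 1) % ((q j : ℕ) : ℤ) := by
    rw [← fem_val, ← fem_val, this]
  rw [Int.emod_eq_emod_iff_emod_sub_eq_zero] at h2
  have h3 : (((n j : ℕ) : ℤ) + 1 - (((n j : ℕ) : ℤ) - 1)) = 2 := by ring
  rw [h3] at h2
  have h5 : ((q j : ℕ) : ℤ) ∣ 2 := Int.dvd_of_emod_eq_zero h2
  have h6 : ((q j : ℕ) : ℤ) ≤ 2 := Int.le_of_dvd two_pos h5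
  have h8 : (q j : ℕ) ∣ 2 := by exact_mod_cast h5
  exact (Nat.dvd_prime Nat.prime_two).mp h8

/-! ### Key wrappers -/

lemma keyPlus_le_of_cases {j : Fin d} {a b : G d}
    (h : Phi q j a < Phi q j b ∨ (Phi q j a = Phi q j b ∧ ((a.2:ℤ) < (b.2:ℤ) ∨ a = b))) :
    (keyPlus q j).u a ≤ (keyPlus q j).u b :=
  mkKey_le_of_cases _ _ _ _ _ _ _ h

lemma keyPlus_le_first {j : Fin d} {a b : G d}
    (h : (keyPlus q j).u a ≤ (keyPlus q j).u b) : Phi q j a ≤ Phi q j b :=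
  mkKey_le_first _ _ _ _ _ _ _ h

lemma keyMinus_le_of_cases {j : Fin d} {a b : G d}
    (h : Phi q j a < Phi q j b ∨ (Phi q j a = Phi q j b ∧ (-(a.2:ℤ) < -(b.2:ℤ) ∨ a = b))) :
    (keyMinus q j).u a ≤ (keyMinus q j).u b :=
  mkKey_le_of_cases _ _ _ _ _ _ _ h

lemma keyMinus_le_first {j : Fin d} {a b : G d}
    (h : (keyMinus q j).u a ≤ (keyMinus q j).u b) : Phi q j a ≤ Phi q j b :=
  mkKey_le_first _ _ _ _ _ _ _ h

lemma keyPsi_le_of_cases {a b : G d}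
    (h : (a.2:ℤ) < (b.2:ℤ) ∨ a = b) : (keyPsi (d := d)).u a ≤ keyPsi.u b := by
  refine mkKey_le_of_cases _ _ _ _ _ _ _ ?_
  rcases h with h | rfl
  · exact Or.inl h
  · exact Or.inr ⟨rfl, Or.inr rfl⟩

lemma keyPsi_le_first {a b : G d}
    (h : (keyPsi (d := d)).u a ≤ keyPsi.u b) : (a.2:ℤ) ≤ (b.2:ℤ) :=
  mkKey_le_first _ _ _ _ _ _ _ h

lemma keyNeg_le_of_cases {a b : G d}
    (h : -(a.2:ℤ) < -(b.2:ℤ) ∨ a = b) : (keyNeg (d := d)).u a ≤ keyNeg.u b := by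
  refine mkKey_le_of_cases _ _ _ _ _ _ _ ?_
  rcases h with h | rfl
  · exact Or.inl h
  · exact Or.inr ⟨rfl, Or.inr rfl⟩

/-! ### The Floquet matrix over the Laurent ring -/

variable (V : (Fin d → ℤ) → ℂ)

/-- Coordinates of a point of the fundamental domain, as integers. -/
def nbar (n : Wt q) : Fin d → ℤ := fun j => ((n j : ℕ) : ℤ)

/-- The Floquet matrix `D_V(z) - λ` with entries in the Laurent-polynomial ring `A d`. -/
def Mmat : Matrix (Wt q) (Wt q) (A d) := fun n n' =>
  (if n' = n then Finsupp.single ((0 : Fin d → ℤ), (1:ℕ)) (-1 : ℂ)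
      + Finsupp.single ((0 : Fin d → ℤ), (0:ℕ)) (V (nbar q n)) else 0)
    - ∑ i : Fin d,
      ((if n' = up q i n then Finsupp.single (wp q i n, (0:ℕ)) (1 : ℂ) else 0)
        + (if n' = dn q i n then Finsupp.single (wm q i n, (0:ℕ)) (1 : ℂ) else 0))

lemma entry_cases {n n' : Wt q} {a : G d} (ha : a ∈ (Mmat q V n n').support) :
    (n' = n ∧ a = ((0 : Fin d → ℤ), (1:ℕ))) ∨ (n' = n ∧ a = ((0 : Fin d → ℤ), (0:ℕ))) ∨
    (∃ i, n' = up q i n ∧ a = (wp q i n, (0:ℕ))) ∨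
    (∃ i, n' = dn q i n ∧ a = (wm q i n, (0:ℕ))) := by
  classical
  have h1 := Finsupp.support_sub ha
  rcases Finset.mem_union.1 h1 with h | h
  · by_cases hd : n' = n
    · rw [if_pos hd] at h
      have h2 := Finsupp.support_add h
      rcases Finset.mem_union.1 h2 with h3 | h3
      · left
        exact ⟨hd, Finset.mem_singleton.1 (Finsupp.support_single_subset h3)⟩
      · right; left
        exact ⟨hd, Finset.mem_singleton.1 (Finsupp.support_single_subset h3)⟩
    · rw [if_neg hd] at h
      simp at h
  · have h2 := Finsupp.support_finset_sum h
    rw [Finset.mem_biUnion] at h2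
    obtain ⟨i, -, hi⟩ := h2
    have h3 := Finsupp.support_add hi
    rcases Finset.mem_union.1 h3 with h4 | h4
    · by_cases hu : n' = up q i n
      · rw [if_pos hu] at h4
        right; right; left
        exact ⟨i, hu, Finset.mem_singleton.1 (Finsupp.support_single_subset h4)⟩
      · rw [if_neg hu] at h4; simp at h4
    · by_cases hu : n' = dn q i n
      · rw [if_pos hu] at h4
        right; right; right
        exact ⟨i, hu, Finset.mem_singleton.1 (Finsupp.support_single_subset h4)⟩
      · rw [if_neg hu] at h4; simp at h4

/-! ### Arithmetic facts about `Phi` on hop exponents -/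

lemma neg_one_emod (qq : ℕ+) : ((-1 : ℤ)) % ((qq:ℕ):ℤ) = ((qq:ℕ):ℤ) - 1 := by
  have hq : (0:ℤ) < ((qq : ℕ) : ℤ) := by exact_mod_cast qq.pos
  have key : (-1 : ℤ) = (((qq:ℕ):ℤ) - 1) + (-1) * ((qq:ℕ):ℤ) := by ring
  rw [key, Int.add_mul_emod_self_right]
  exact Int.emod_eq_of_lt (by omega) (by omega)

lemma Phi_wp_self (j : Fin d) (n : Wt q) :
    Phi q j (wp q j n, (0:ℕ)) = 1 + ((n j : ℕ):ℤ) - (((up q j n) j : ℕ):ℤ) := by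
  have h1 : ((up q j n) j : ℕ) = (fem (q j) (((n j : ℕ):ℤ) + 1) : ℕ) := by
    rw [up_apply_self]
  have h2 : (((up q j n) j : ℕ) : ℤ) = (((n j : ℕ):ℤ) + 1) % ((q j : ℕ):ℤ) := by
    rw [h1, fem_val]
  have h3 := Int.mul_ediv_add_emod (((n j : ℕ):ℤ) + 1) ((q j : ℕ):ℤ)
  simp only [Phi, wp, Pi.single_eq_same]
  omega

lemma Phi_wp_ne {i j : Fin d} (h : i ≠ j) (n : Wt q) :
    Phi q j (wp q i n, (0:ℕ)) = 0 := by
  simp only [Phi, wp]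
  rw [Pi.single_eq_of_ne (Ne.symm h)]
  simp

lemma Phi_wm_ne {i j : Fin d} (h : i ≠ j) (n : Wt q) :
    Phi q j (wm q i n, (0:ℕ)) = 0 := by
  simp only [Phi, wm]
  rw [Pi.single_eq_of_ne (Ne.symm h)]
  simp

/-! ### Entry classification -/

/-- Classification of support elements of an entry of `Mmat`: degree bound in `λ`,
`Φ_j`-bound with potential correction, and characterization of tightness. -/
lemma entry_bound (j : Fin d) {n n' : Wt q} {a : G d} (ha : a ∈ (Mmat q V n n').support) :
    a.2 ≤ 1 ∧ Phi q j a ≤ 1 + ((n j : ℕ):ℤ) - ((n' j : ℕ):ℤ) ∧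
    (Phi q j a = 1 + ((n j : ℕ):ℤ) - ((n' j : ℕ):ℤ) →
      (a = ((0:Fin d → ℤ),(1:ℕ)) ∧ n' = n) ∨ (a = (wp q j n, (0:ℕ)) ∧ n' = up q j n)) := by
  have hq : (0:ℤ) < ((q j : ℕ) : ℤ) := by exact_mod_cast (q j).pos
  rcases entry_cases q V ha with ⟨hd, rfl⟩ | ⟨hd, rfl⟩ | ⟨i, hd, rfl⟩ | ⟨i, hd, rfl⟩
  · subst hd
    refine ⟨le_refl _, ?_, fun _ => Or.inl ⟨rfl, rfl⟩⟩
    simp [Phi]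
  · subst hd
    constructor
    · simp
    · constructor
      · simp [Phi]
      · intro h
        simp [Phi] at h
  · subst hd
    by_cases hij : i = j
    · subst hij
      rw [Phi_wp_self]
      exact ⟨by simp, le_refl _, fun _ => Or.inr ⟨rfl, rfl⟩⟩
    · rw [Phi_wp_ne q hij]
      have h1 : ((up q i n) j : ℕ) = (n j : ℕ) := by rw [up_apply_ne q _ _ (Ne.symm hij)]
      rw [h1]
      refine ⟨by simp, by omega, fun h => absurd h (by omega)⟩
  · subst hd
    by_cases hij : i = j
    · subst hij
      have h2 : (((dn q i n) i : ℕ) : ℤ) = (((n i : ℕ):ℤ) - 1) % ((q i : ℕ):ℤ) := by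
        rw [dn_apply_self, fem_val]
      have h4 : Phi q i (wm q i n, (0:ℕ))
          = ((q i:ℕ):ℤ) * ((((n i : ℕ):ℤ) - 1) / ((q i : ℕ):ℤ)) := by
        simp [Phi, wm, Pi.single_eq_same]
      have h3 := Int.mul_ediv_add_emod (((n i : ℕ):ℤ) - 1) ((q i : ℕ):ℤ)
      have hqi : (0:ℤ) < ((q i : ℕ) : ℤ) := by exact_mod_cast (q i).pos
      have h5 : ((((n i : ℕ):ℤ) - 1) % ((q i : ℕ):ℤ)) < ((q i : ℕ):ℤ) :=
        Int.emod_lt_of_pos _ hqi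
      have h6 : (0:ℤ) ≤ (((n i : ℕ):ℤ) - 1) % ((q i : ℕ):ℤ) :=
        Int.emod_nonneg _ (ne_of_gt hqi)
      refine ⟨by simp, by omega, fun h => ?_⟩
      -- tightness is impossible for the backward hop
      exfalso
      omega
    · rw [Phi_wm_ne q hij]
      have h1 : ((dn q i n) j : ℕ) = (n j : ℕ) := by rw [dn_apply_ne q _ _ (Ne.symm hij)]
      rw [h1]
      refine ⟨by simp, by omega, fun h => absurd h (by omega)⟩

/-! ### Entry values at distinguished points -/

lemma fem_succ_eq_self {qq : ℕ+} {x : Fin (qq:ℕ)} (h : fem qq (((x:ℕ):ℤ) + 1) = x) :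
    (qq : ℕ) = 1 := by
  rw [fem_ext_iff] at h
  have h3 : (((x:ℕ):ℤ)) % ((qq:ℕ):ℤ) = ((x:ℕ):ℤ) :=
    Int.emod_eq_of_lt (by positivity) (by exact_mod_cast x.2)
  have h4 : ((((x:ℕ):ℤ) + 1) - ((x:ℕ):ℤ)) % ((qq:ℕ):ℤ) = 0 := by
    rw [← Int.emod_eq_emod_iff_emod_sub_eq_zero, h, h3]
  simp only [add_sub_cancel_left] at h4
  have h5 : ((qq:ℕ):ℤ) ∣ 1 := Int.dvd_of_emod_eq_zero h4
  have h6 : ((qq:ℕ):ℤ) ≤ 1 := Int.le_of_dvd one_pos h5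
  have := qq.pos
  omega

lemma fem_pred_eq_self {qq : ℕ+} {x : Fin (qq:ℕ)} (h : fem qq (((x:ℕ):ℤ) - 1) = x) :
    (qq : ℕ) = 1 := by
  rw [fem_ext_iff] at h
  have h3 : (((x:ℕ):ℤ)) % ((qq:ℕ):ℤ) = ((x:ℕ):ℤ) :=
    Int.emod_eq_of_lt (by positivity) (by exact_mod_cast x.2)
  have h4 : ((((x:ℕ):ℤ) - 1) - ((x:ℕ):ℤ)) % ((qq:ℕ):ℤ) = 0 := by
    rw [← Int.emod_eq_emod_iff_emod_sub_eq_zero, h, h3]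
  simp only [sub_sub_cancel_left] at h4
  have h5 : ((qq:ℕ):ℤ) ∣ (-1 : ℤ) := Int.dvd_of_emod_eq_zero h4
  have h6 : ((qq:ℕ):ℤ) ∣ (1 : ℤ) := (dvd_neg).mp h5
  have h7 : ((qq:ℕ):ℤ) ≤ 1 := Int.le_of_dvd one_pos h6
  have := qq.pos
  omega

/-- If `up i n = up j n` for `i ≠ j`, then `q j = 1`. -/
lemma up_eq_up_q_one {i j : Fin d} (hij : i ≠ j) (n : Wt q) (h : up q i n = up q j n) :
    (q j : ℕ) = 1 := by
  have h1 := congrFun h j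
  rw [up_apply_ne q _ _ (Ne.symm hij), up_apply_self] at h1
  exact fem_succ_eq_self h1.symm

/-- If `up j n = dn i n` for `i ≠ j`, then `q j = 1` and `q i = 1`. -/
lemma up_eq_dn_q_one {i j : Fin d} (hij : i ≠ j) (n : Wt q) (h : up q j n = dn q i n) :
    (q j : ℕ) = 1 ∧ (q i : ℕ) = 1 := by
  constructor
  · have h1 := congrFun h j
    rw [up_apply_self, dn_apply_ne q _ _ hij.symm] at h1
    exact fem_succ_eq_self h1
  · have h1 := congrFun h i
    rw [up_apply_ne q _ _ hij, dn_apply_self] at h1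
    exact fem_pred_eq_self h1.symm

lemma wp_q_one {j : Fin d} (n : Wt q) (h : (q j : ℕ) = 1) : wp q j n = Pi.single j 1 := by
  unfold wp
  have h0 : (n j : ℕ) = 0 := val_eq_zero_of_q_one q h n
  rw [h0, h]
  norm_num

lemma wm_q_one {j : Fin d} (n : Wt q) (h : (q j : ℕ) = 1) : wm q j n = Pi.single j (-1) := by
  unfold wm
  have h0 : (n j : ℕ) = 0 := val_eq_zero_of_q_one q h n
  rw [h0, h]
  norm_num

/-- Under `up j n = dn j n`, the forward and backward exponents differ at `j`. -/
lemma wm_ne_wp {j : Fin d} (n : Wt q) (h : up q j n = dn q j n) :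
    wm q j n j ≠ wp q j n j := by
  rcases up_eq_dn_self q j n h with h1 | h1
  · have h0 : (n j : ℕ) = 0 := val_eq_zero_of_q_one q h1 n
    simp only [wm, wp, Pi.single_eq_same, div_plus, div_minus, h0, h1]
    norm_num
  · simp only [wm, wp, Pi.single_eq_same, div_plus, div_minus, h1]
    have h2 : (n j : ℕ) = 0 ∨ (n j : ℕ) = 1 := by have := (n j).2; omega
    rcases h2 with h0 | h0 <;> rw [h0] <;> norm_num

/-- Value of the diagonal entry at the `λ`-point. -/
lemma diag_val (n : Wt q) : (Mmat q V n n) ((0 : Fin d → ℤ), (1:ℕ)) = -1 := by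
  classical
  unfold Mmat
  rw [if_pos rfl, Finsupp.sub_apply, Finsupp.add_apply, Finsupp.single_eq_same]
  rw [Finsupp.single_eq_of_ne' (by simp [Prod.ext_iff] : ((0:Fin d → ℤ), (0:ℕ)) ≠ ((0:Fin d → ℤ), (1:ℕ)))]
  have hz : (Finset.univ.sum fun i =>
      ((if n = up q i n then Finsupp.single (wp q i n, (0:ℕ)) (1 : ℂ) else 0)
        + (if n = dn q i n then Finsupp.single (wm q i n, (0:ℕ)) (1 : ℂ) else 0)))
      ((0 : Fin d → ℤ), (1:ℕ)) = 0 := by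
    rw [Finsupp.finset_sum_apply]
    apply Finset.sum_eq_zero
    intro i _
    rw [Finsupp.add_apply]
    have e1 : ((if n = up q i n then Finsupp.single (wp q i n, (0:ℕ)) (1 : ℂ) else 0))
        ((0 : Fin d → ℤ), (1:ℕ)) = 0 := by
      split_ifs with h
      · exact Finsupp.single_eq_of_ne' (by simp)
      · rfl
    have e2 : ((if n = dn q i n then Finsupp.single (wm q i n, (0:ℕ)) (1 : ℂ) else 0))
        ((0 : Fin d → ℤ), (1:ℕ)) = 0 := by
      split_ifs with h
      · exact Finsupp.single_eq_of_ne' (by simp)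
      · rfl
    rw [e1, e2, add_zero]
  rw [hz]
  ring

/-- Value of the forward entry at the hop point. -/
lemma up_val (j : Fin d) (n : Wt q) :
    (Mmat q V n (up q j n)) (wp q j n, (0:ℕ)) = -1 := by
  classical
  have hwp1 : ∀ h1 : (q j : ℕ) = 1, wp q j n j = 1 := by
    intro h1
    rw [wp_q_one q n h1, Pi.single_eq_same]
  simp only [Mmat, Finsupp.sub_apply]
  have hdiag : (if up q j n = n then Finsupp.single ((0 : Fin d → ℤ), (1:ℕ)) (-1 : ℂ)
      + Finsupp.single ((0 : Fin d → ℤ), (0:ℕ)) (V (nbar q n)) else 0) (wp q j n, (0:ℕ)) = 0 := by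
    split_ifs with h
    · have h1 : (q j : ℕ) = 1 := (up_eq_self_iff q j n).1 h
      rw [Finsupp.add_apply]
      rw [Finsupp.single_eq_of_ne' (by simp)]
      rw [Finsupp.single_eq_of_ne' ?_]
      · ring
      · intro he
        have : (0 : Fin d → ℤ) = wp q j n := congrArg Prod.fst he
        have := congrFun this j
        rw [hwp1 h1] at this
        simp at this
    · rfl
  rw [hdiag]
  have hsum : (Finset.univ.sum fun i =>
      ((if up q j n = up q i n then Finsupp.single (wp q i n, (0:ℕ)) (1 : ℂ) else 0)
        + (if up q j n = dn q i n then Finsupp.single (wm q i n, (0:ℕ)) (1 : ℂ) else 0)))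
      (wp q j n, (0:ℕ)) = 1 := by
    rw [Finsupp.finset_sum_apply]
    rw [Finset.sum_eq_single j]
    · rw [Finsupp.add_apply, if_pos rfl, Finsupp.single_eq_same]
      have e2 : ((if up q j n = dn q j n then Finsupp.single (wm q j n, (0:ℕ)) (1 : ℂ) else 0))
          (wp q j n, (0:ℕ)) = 0 := by
        split_ifs with h
        · refine Finsupp.single_eq_of_ne' ?_
          intro he
          exact wm_ne_wp q n h (congrFun (congrArg Prod.fst he) j)
        · rfl
      rw [e2, add_zero]
    · intro i _ hij
      rw [Finsupp.add_apply]
      have e1 : ((if up q j n = up q i n then Finsupp.single (wp q i n, (0:ℕ)) (1 : ℂ) else 0))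
          (wp q j n, (0:ℕ)) = 0 := by
        split_ifs with h
        · refine Finsupp.single_eq_of_ne' ?_
          intro he
          have hqj : (q j : ℕ) = 1 := up_eq_up_q_one q hij n h.symm
          have hqi : (q i : ℕ) = 1 := up_eq_up_q_one q (Ne.symm hij) n h
          have hfst : wp q i n = wp q j n := congrArg Prod.fst he
          rw [wp_q_one q n hqi, wp_q_one q n hqj] at hfst
          have := congrFun hfst i
          rw [Pi.single_eq_same, Pi.single_eq_of_ne hij] at this
          norm_num at this
        · rfl
      have e2 : ((if up q j n = dn q i n then Finsupp.single (wm q i n, (0:ℕ)) (1 : ℂ) else 0))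
          (wp q j n, (0:ℕ)) = 0 := by
        split_ifs with h
        · refine Finsupp.single_eq_of_ne' ?_
          intro he
          obtain ⟨hqj, hqi⟩ := up_eq_dn_q_one q hij n h
          have hfst : wm q i n = wp q j n := congrArg Prod.fst he
          rw [wm_q_one q n hqi, wp_q_one q n hqj] at hfst
          have := congrFun hfst i
          rw [Pi.single_eq_same, Pi.single_eq_of_ne hij] at this
          norm_num at this
        · rfl
      rw [e1, e2, add_zero]
    · intro h
      exact absurd (Finset.mem_univ j) h
  rw [hsum]
  ring

/-- Max property of the diagonal entry w.r.t. `keyPsi`. -/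
lemma diag_max (n : Wt q) :
    ∀ b ∈ (Mmat q V n n).support, (keyPsi (d := d)).u b ≤ keyPsi.u ((0:Fin d → ℤ), (1:ℕ)) := by
  intro b hb
  rcases entry_cases q V hb with ⟨-, rfl⟩ | ⟨-, rfl⟩ | ⟨i, -, rfl⟩ | ⟨i, -, rfl⟩
  · exact keyPsi_le_of_cases (Or.inr rfl)
  · exact keyPsi_le_of_cases (Or.inl (by norm_num))
  · exact keyPsi_le_of_cases (Or.inl (by norm_num))
  · exact keyPsi_le_of_cases (Or.inl (by norm_num))

/-- If a support element of a diagonal entry has `λ`-degree 1, it is the `λ`-point. -/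
lemma psi_one_case {n n' : Wt q} {b : G d} (hb : b ∈ (Mmat q V n n').support) (h2 : b.2 = 1) :
    b = ((0:Fin d → ℤ), (1:ℕ)) ∧ n' = n := by
  rcases entry_cases q V hb with ⟨hd, rfl⟩ | ⟨hd, rfl⟩ | ⟨i, hd, rfl⟩ | ⟨i, hd, rfl⟩
  · exact ⟨rfl, hd⟩
  · simp at h2
  · simp at h2
  · simp at h2

/-- Max property of the forward entry w.r.t. `keyMinus`. -/
lemma up_max (j : Fin d) (n : Wt q) :
    ∀ b ∈ (Mmat q V n (up q j n)).support,
      (keyMinus q j).u b ≤ (keyMinus q j).u (wp q j n, (0:ℕ)) := by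
  intro b hb
  obtain ⟨h1, h2, h3⟩ := entry_bound q V j hb
  rw [← Phi_wp_self q j n] at h2 h3
  rcases lt_or_eq_of_le h2 with h | h
  · exact keyMinus_le_of_cases q (Or.inl h)
  · rcases h3 h with ⟨rfl, hd⟩ | ⟨rfl, -⟩
    · exact keyMinus_le_of_cases q (Or.inr ⟨h, Or.inl (by norm_num)⟩)
    · exact keyMinus_le_of_cases q (Or.inr ⟨h, Or.inr rfl⟩)

/-! ### Determinant-level facts -/

/-- The characteristic Laurent polynomial as an element of `A d`. -/
def cP : A d := (Mmat q V).det

/-- `Φ_j` as an additive monoid hom. -/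
def PhiHom (j : Fin d) : G d →+ ℤ where
  toFun := Phi q j
  map_zero' := by simp [Phi]
  map_add' := Phi_add q j

/-- `λ`-degree as an additive monoid hom. -/
def psiHom : G d →+ ℕ where
  toFun := fun a => a.2
  map_zero' := rfl
  map_add' := fun _ _ => rfl

lemma entry_psi_le {n n' : Wt q} {a : G d} (ha : a ∈ (Mmat q V n n').support) : a.2 ≤ 1 := by
  rcases entry_cases q V ha with ⟨-, rfl⟩ | ⟨-, rfl⟩ | ⟨i, -, rfl⟩ | ⟨i, -, rfl⟩ <;> simp

lemma cP_exists_perm {a : G d} (ha : a ∈ (cP q V).support) :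
    ∃ σ : Equiv.Perm (Wt q), a ∈ (∏ i, Mmat q V (σ i) i).support := by
  classical
  by_contra h
  push_neg at h
  have hz : ∀ σ : Equiv.Perm (Wt q), (∏ i, Mmat q V (σ i) i) a = 0 := by
    intro σ
    have := h σ
    rwa [Finsupp.notMem_support_iff] at this
  have : (cP q V) a = 0 := by
    rw [cP, Matrix.det_apply, Finsupp.finset_sum_apply]
    apply Finset.sum_eq_zero
    intro σ _
    rw [Finsupp.smul_apply, hz σ, smul_zero]
  exact (Finsupp.mem_support_iff.1 ha) this

lemma term_decomp {σ : Equiv.Perm (Wt q)} {a : G d}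
    (ha : a ∈ (∏ i, Mmat q V (σ i) i).support) :
    ∃ t : Wt q → G d, (∀ i, t i ∈ (Mmat q V (σ i) i).support) ∧ a = ∑ i, t i := by
  classical
  obtain ⟨t, ht, rfl⟩ := OrdKey.prod_decomp Finset.univ (fun i => Mmat q V (σ i) i) ha
  exact ⟨t, fun i => ht i (Finset.mem_univ i), rfl⟩

/-- Number of sites. -/
abbrev Qc : ℕ := Fintype.card (Wt q)

lemma cP_psi_le {a : G d} (ha : a ∈ (cP q V).support) : a.2 ≤ Qc q := by
  classical
  obtain ⟨σ, hσ⟩ := cP_exists_perm q V ha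
  obtain ⟨t, ht, rfl⟩ := term_decomp q V hσ
  have : (∑ i, t i).2 = ∑ i, (t i).2 := map_sum (psiHom (d := d)) t Finset.univ
  rw [this]
  calc ∑ i, (t i).2 ≤ ∑ _i : Wt q, 1 :=
        Finset.sum_le_sum (fun i _ => entry_psi_le q V (ht i))
    _ = Qc q := by simp [Qc]

lemma cP_phi_le (j : Fin d) {a : G d} (ha : a ∈ (cP q V).support) :
    Phi q j a ≤ (Qc q : ℤ) := by
  classical
  obtain ⟨σ, hσ⟩ := cP_exists_perm q V ha
  obtain ⟨t, ht, rfl⟩ := term_decomp q V hσ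
  have h1 : Phi q j (∑ i, t i) = ∑ i, Phi q j (t i) := map_sum (PhiHom q j) t Finset.univ
  rw [h1]
  have h2 : ∀ i ∈ Finset.univ (α := Wt q),
      Phi q j (t i) ≤ 1 + (((σ i) j : ℕ):ℤ) - ((i j : ℕ):ℤ) :=
    fun i _ => (entry_bound q V j (ht i)).2.1
  calc ∑ i, Phi q j (t i) ≤ ∑ i : Wt q, (1 + (((σ i) j : ℕ):ℤ) - ((i j : ℕ):ℤ)) :=
        Finset.sum_le_sum h2
    _ = (Qc q : ℤ) := by
        rw [Finset.sum_sub_distrib, Finset.sum_add_distrib]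
        rw [Equiv.sum_comp σ (fun n : Wt q => ((n j : ℕ):ℤ))]
        simp [Qc]

/-- The distinguished top point `(0, Q)`. -/
def topPt : G d := ((0 : Fin d → ℤ), Qc q)

lemma sum_lam_const : (∑ _i : Wt q, ((0 : Fin d → ℤ), (1:ℕ))) = topPt q := by
  rw [Finset.sum_const]
  apply Prod.ext
  · simp [topPt]
  · simp [topPt, Qc]

lemma cP_psi_top {a : G d} (ha : a ∈ (cP q V).support) (h2 : a.2 = Qc q) : a = topPt q := by
  classical
  obtain ⟨σ, hσ⟩ := cP_exists_perm q V ha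
  obtain ⟨t, ht, rfl⟩ := term_decomp q V hσ
  have hsum : (∑ i, t i).2 = ∑ i, (t i).2 := map_sum (psiHom (d := d)) t Finset.univ
  have hone : ∀ i ∈ Finset.univ (α := Wt q), (t i).2 = 1 := by
    rw [← Finset.sum_eq_sum_iff_of_le (fun i _ => entry_psi_le q V (ht i))]
    rw [← hsum, h2]
    simp [Qc]
  have hpt : ∀ i : Wt q, t i = ((0 : Fin d → ℤ), (1:ℕ)) := by
    intro i
    exact (psi_one_case q V (ht i) (hone i (Finset.mem_univ i))).1
  rw [Finset.sum_congr rfl (fun i _ => hpt i), sum_lam_const]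

lemma cP_coeff_top : (cP q V) (topPt q) = (-1 : ℂ) ^ (Qc q) := by
  classical
  rw [cP, Matrix.det_apply, Finsupp.finset_sum_apply]
  rw [Finset.sum_eq_single (1 : Equiv.Perm (Wt q))]
  · rw [Finsupp.smul_apply]
    have hmax : ∀ i ∈ Finset.univ (α := Wt q), ∀ b ∈ (Mmat q V ((1 : Equiv.Perm (Wt q)) i) i).support,
        (keyPsi (d := d)).u b ≤ keyPsi.u ((0 : Fin d → ℤ), (1:ℕ)) := by
      intro i _ b hb
      exact diag_max q V i b hb
    obtain ⟨-, hval⟩ := (keyPsi (d := d)).prod_key Finset.univ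
      (fun i => Mmat q V ((1 : Equiv.Perm (Wt q)) i) i) (fun _ => ((0 : Fin d → ℤ), (1:ℕ))) hmax
    rw [sum_lam_const] at hval
    rw [hval]
    have : ∀ i : Wt q, (Mmat q V ((1 : Equiv.Perm (Wt q)) i) i) ((0 : Fin d → ℤ), (1:ℕ)) = -1 :=
      fun i => diag_val q V i
    rw [Finset.prod_congr rfl (fun i _ => this i)]
    simp [Qc]
  · intro σ _ hσ
    rw [Finsupp.smul_apply]
    have hz : (∏ i, Mmat q V (σ i) i) (topPt q) = 0 := by
      rw [← Finsupp.notMem_support_iff]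
      intro hmem
      obtain ⟨t, ht, heq⟩ := term_decomp q V hmem
      have hsum : (topPt q).2 = ∑ i, (t i).2 := by
        rw [heq]; exact map_sum (psiHom (d := d)) t Finset.univ
      have hone : ∀ i ∈ Finset.univ (α := Wt q), (t i).2 = 1 := by
        rw [← Finset.sum_eq_sum_iff_of_le (fun i _ => entry_psi_le q V (ht i))]
        rw [← hsum]
        simp [topPt, Qc]
      have : σ = 1 := by
        apply Equiv.ext
        intro i
        have := (psi_one_case q V (ht i) (hone i (Finset.mem_univ i))).2
        simpa using this.symm
      exact hσ this
    rw [hz, smul_zero]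
  · intro h
    exact absurd (Finset.mem_univ _) h

/-- The distinguished corner point `t₀ = Σ_n (w⁺_j(n), 0)`. -/
def t0 (j : Fin d) : G d := ∑ n : Wt q, (wp q j n, (0:ℕ))

lemma t0_psi (j : Fin d) : (t0 q j).2 = 0 := by
  have : (t0 q j).2 = ∑ n : Wt q, (0:ℕ) :=
    map_sum (psiHom (d := d)) _ Finset.univ
  simp [this]

lemma t0_phi (j : Fin d) : Phi q j (t0 q j) = (Qc q : ℤ) := by
  classical
  have h1 : Phi q j (t0 q j) = ∑ n : Wt q, Phi q j (wp q j n, (0:ℕ)) :=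
    map_sum (PhiHom q j) _ Finset.univ
  rw [h1, Finset.sum_congr rfl (fun n _ => Phi_wp_self q j n)]
  rw [Finset.sum_sub_distrib, Finset.sum_add_distrib]
  have h2 : (∑ n : Wt q, (((up q j n) j : ℕ):ℤ)) = ∑ n : Wt q, ((n j : ℕ):ℤ) :=
    Equiv.sum_comp (upE q j) (fun n : Wt q => ((n j : ℕ):ℤ))
  rw [h2]
  simp [Qc]

lemma cP_phi_top (j : Fin d) {a : G d} (ha : a ∈ (cP q V).support)
    (h1 : Phi q j a = (Qc q : ℤ)) (h2 : a.2 = 0) : a = t0 q j := by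
  classical
  obtain ⟨σ, hσ⟩ := cP_exists_perm q V ha
  obtain ⟨t, ht, rfl⟩ := term_decomp q V hσ
  have hphi : Phi q j (∑ i, t i) = ∑ i, Phi q j (t i) := map_sum (PhiHom q j) t Finset.univ
  have hpsi : (∑ i, t i).2 = ∑ i, (t i).2 := map_sum (psiHom (d := d)) t Finset.univ
  have hzero : ∀ i : Wt q, (t i).2 = 0 := by
    have hsz : ∑ i, (t i).2 = 0 := by rw [← hpsi]; exact h2
    intro i
    exact (Finset.sum_eq_zero_iff).1 hsz i (Finset.mem_univ i)
  have htight : ∀ i ∈ Finset.univ (α := Wt q),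
      Phi q j (t i) = 1 + (((σ i) j : ℕ):ℤ) - ((i j : ℕ):ℤ) := by
    rw [← Finset.sum_eq_sum_iff_of_le (fun i _ => (entry_bound q V j (ht i)).2.1)]
    rw [← hphi, h1]
    rw [Finset.sum_sub_distrib, Finset.sum_add_distrib]
    rw [Equiv.sum_comp σ (fun n : Wt q => ((n j : ℕ):ℤ))]
    simp [Qc]
  have hcase : ∀ i : Wt q, t i = (wp q j (σ i), (0:ℕ)) ∧ i = up q j (σ i) := by
    intro i
    rcases (entry_bound q V j (ht i)).2.2 (htight i (Finset.mem_univ i)) with ⟨hpt, -⟩ | h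
    · exfalso
      have := hzero i
      rw [hpt] at this
      simp at this
    · exact h
  have : ∀ i : Wt q, t i = (fun n : Wt q => (wp q j n, (0:ℕ))) (σ i) := fun i => (hcase i).1
  rw [Finset.sum_congr rfl (fun i _ => this i)]
  rw [Equiv.sum_comp σ (fun n : Wt q => (wp q j n, (0:ℕ)))]
  rfl

lemma cP_coeff_t0 (j : Fin d) : (cP q V) (t0 q j) ≠ 0 := by
  classical
  rw [cP, Matrix.det_apply, Finsupp.finset_sum_apply]
  rw [Finset.sum_eq_single ((upE q j).symm : Equiv.Perm (Wt q))]
  · rw [Finsupp.smul_apply]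
    have hent : ∀ i : Wt q, Mmat q V ((upE q j).symm i) i
        = Mmat q V (dn q j i) (up q j (dn q j i)) := by
      intro i
      have h1 : (upE q j).symm i = dn q j i := rfl
      have h2 : up q j (dn q j i) = i := up_dn q j i
      rw [h1, h2]
    have hmax : ∀ i ∈ Finset.univ (α := Wt q),
        ∀ b ∈ (Mmat q V ((upE q j).symm i) i).support,
          (keyMinus q j).u b ≤ (keyMinus q j).u (wp q j (dn q j i), (0:ℕ)) := by
      intro i _ b hb
      rw [hent i] at hb
      exact up_max q V j (dn q j i) b hb
    obtain ⟨-, hval⟩ := (keyMinus q j).prod_key Finset.univ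
      (fun i => Mmat q V ((upE q j).symm i) i)
      (fun i => (wp q j (dn q j i), (0:ℕ))) hmax
    have hsum : (∑ i : Wt q, (wp q j (dn q j i), (0:ℕ))) = t0 q j := by
      have := Equiv.sum_comp ((upE q j).symm : Equiv.Perm (Wt q))
        (fun n : Wt q => (wp q j n, (0:ℕ)))
      calc (∑ i : Wt q, (wp q j (dn q j i), (0:ℕ)))
          = ∑ i : Wt q, (fun n : Wt q => (wp q j n, (0:ℕ))) ((upE q j).symm i) := rfl
        _ = t0 q j := this
    rw [hsum] at hval
    rw [hval]
    have hv : ∀ i : Wt q, (Mmat q V ((upE q j).symm i) i) (wp q j (dn q j i), (0:ℕ)) = -1 := by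
      intro i
      rw [hent i]
      exact up_val q V j (dn q j i)
    rw [Finset.prod_congr rfl (fun i _ => hv i)]
    rcases Int.units_eq_one_or (Equiv.Perm.sign ((upE q j).symm : Equiv.Perm (Wt q))) with hs | hs
      <;> rw [hs] <;> simp
  · intro σ _ hσ
    rw [Finsupp.smul_apply]
    have hz : (∏ i, Mmat q V (σ i) i) (t0 q j) = 0 := by
      rw [← Finsupp.notMem_support_iff]
      intro hmem
      obtain ⟨t, ht, heq⟩ := term_decomp q V hmem
      have hphi : Phi q j (t0 q j) = ∑ i, Phi q j (t i) := by
        rw [heq]; exact map_sum (PhiHom q j) t Finset.univ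
      have hpsi : (t0 q j).2 = ∑ i, (t i).2 := by
        rw [heq]; exact map_sum (psiHom (d := d)) t Finset.univ
      have hzero : ∀ i : Wt q, (t i).2 = 0 := by
        have hsz : ∑ i, (t i).2 = 0 := by rw [← hpsi, t0_psi]
        intro i
        exact (Finset.sum_eq_zero_iff).1 hsz i (Finset.mem_univ i)
      have htight : ∀ i ∈ Finset.univ (α := Wt q),
          Phi q j (t i) = 1 + (((σ i) j : ℕ):ℤ) - ((i j : ℕ):ℤ) := by
        rw [← Finset.sum_eq_sum_iff_of_le (fun i _ => (entry_bound q V j (ht i)).2.1)]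
        rw [← hphi, t0_phi]
        rw [Finset.sum_sub_distrib, Finset.sum_add_distrib]
        rw [Equiv.sum_comp σ (fun n : Wt q => ((n j : ℕ):ℤ))]
        simp [Qc]
      have : σ = ((upE q j).symm : Equiv.Perm (Wt q)) := by
        apply Equiv.ext
        intro i
        rcases (entry_bound q V j (ht i)).2.2 (htight i (Finset.mem_univ i)) with ⟨hpt, -⟩ | h
        · exfalso
          have := hzero i
          rw [hpt] at this
          simp at this
        · have h2 := h.2
          have : dn q j i = σ i := by
            conv_lhs => rw [h2]
            rw [dn_up]
          exact this.symm
      exact hσ this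
    rw [hz, smul_zero]
  · intro h
    exact absurd (Finset.mem_univ _) h

/-! ### Evaluation at `(z, λ)` -/

section eval
variable (z : Fin d → ℂ) (hz : ∀ j, z j ≠ 0) (lam : ℂ)

/-- The multiplicative character attached to `(z, λ)`. -/
def chmon : Multiplicative (G d) →* ℂ where
  toFun := fun a =>
    (∏ j, z j ^ (Multiplicative.toAdd a).1 j) * lam ^ (Multiplicative.toAdd a).2
  map_one' := by simp
  map_mul' := by
    intro a b
    show (∏ j, z j ^ (Multiplicative.toAdd a + Multiplicative.toAdd b).1 j)
        * lam ^ (Multiplicative.toAdd a + Multiplicative.toAdd b).2 = _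
    rw [Prod.fst_add, Prod.snd_add]
    have h1 : ∀ j, z j ^ ((Multiplicative.toAdd a).1 j + (Multiplicative.toAdd b).1 j)
        = z j ^ (Multiplicative.toAdd a).1 j * z j ^ (Multiplicative.toAdd b).1 j :=
      fun j => zpow_add₀ (hz j) _ _
    simp only [Pi.add_apply]
    rw [Finset.prod_congr rfl (fun j _ => h1 j), Finset.prod_mul_distrib, pow_add]
    ring

/-- Evaluation of a Laurent polynomial at `(z, λ)` as an algebra hom. -/
def evalA : A d →ₐ[ℂ] ℂ := (AddMonoidAlgebra.lift ℂ ℂ (G d) (chmon z hz lam)).comp toAMA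

lemma evalA_apply (c : A d) :
    evalA z hz lam c = c.sum fun a C => C * (∏ j, z j ^ a.1 j) * lam ^ a.2 := by
  rw [evalA, AlgHom.comp_apply, AddMonoidAlgebra.lift_apply]
  apply Finsupp.sum_congr
  intro a _
  show c a • ((∏ j, z j ^ a.1 j) * lam ^ a.2) = _
  rw [smul_eq_mul, mul_assoc]
  rfl

lemma evalA_single (a : G d) (C : ℂ) :
    evalA z hz lam (Finsupp.single a C) = C * (∏ j, z j ^ a.1 j) * lam ^ a.2 := by
  rw [evalA_apply]
  rw [Finsupp.sum_single_index]
  simp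

/-- Closed form for the entries of `DVmat`. -/
lemma DVmat_entry (V : (Fin d → ℤ) → ℂ) (n n' : Wt q) :
    DVmat q V z n n'
      = -(∑ i, ((if n' = up q i n then z i ^ ((((n i:ℕ):ℤ) + 1) / ((q i:ℕ):ℤ)) else 0)
          + (if n' = dn q i n then z i ^ ((((n i:ℕ):ℤ) - 1) / ((q i:ℕ):ℤ)) else 0)))
        + V (nbar q n) * (if n = n' then 1 else 0) := by
  classical
  unfold DVmat discLap
  have key : ∀ (m : Fin d → ℤ),
      extendBC q z (Pi.single n' 1) m
        = (if (fun j => fem (q j) (m j)) = n'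
            then ∏ j, z j ^ (m j / ((q j:ℕ):ℤ))
            else 0) := by
    intro m
    unfold extendBC
    rw [Pi.single_apply]
    split_ifs with h
    · rw [mul_one]
    · rw [mul_zero]
  congr 1
  · rw [neg_inj]
    apply Finset.sum_congr rfl
    intro i _
    congr 1
    · -- forward term
      rw [key _]
      have hfe : (fun j => fem (q j) (Function.update (fun j => ((n j : ℕ):ℤ)) i
          ((fun j => ((n j : ℕ):ℤ)) i + 1) j)) = up q i n := by
        funext j
        by_cases hj : j = i
        · subst hj
          rw [Function.update_self, up_apply_self]
        · rw [Function.update_of_ne hj, up_apply_ne q _ _ hj, fem_coe]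
      rw [hfe]
      have hprod : (∏ j, z j ^ (Function.update (fun j => ((n j : ℕ):ℤ)) i
          ((fun j => ((n j : ℕ):ℤ)) i + 1) j / ((q j:ℕ):ℤ)))
          = z i ^ ((((n i:ℕ):ℤ) + 1) / ((q i:ℕ):ℤ)) := by
        rw [Finset.prod_eq_single i]
        · rw [Function.update_self]
        · intro j _ hj
          rw [Function.update_of_ne hj]
          have : ((n j : ℕ):ℤ) / ((q j:ℕ):ℤ) = 0 :=
            Int.ediv_eq_zero_of_lt (by positivity) (by exact_mod_cast (n j).2)
          rw [this, zpow_zero]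
        · intro h
          exact absurd (Finset.mem_univ i) h
      rw [hprod]
      by_cases h : up q i n = n'
      · rw [if_pos h, if_pos h.symm]
      · rw [if_neg h, if_neg (fun he => h he.symm)]
    · -- backward term
      rw [key _]
      have hfe : (fun j => fem (q j) (Function.update (fun j => ((n j : ℕ):ℤ)) i
          ((fun j => ((n j : ℕ):ℤ)) i - 1) j)) = dn q i n := by
        funext j
        by_cases hj : j = i
        · subst hj
          rw [Function.update_self, dn_apply_self]
        · rw [Function.update_of_ne hj, dn_apply_ne q _ _ hj, fem_coe]
      rw [hfe]
      have hprod : (∏ j, z j ^ (Function.update (fun j => ((n j : ℕ):ℤ)) i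
          ((fun j => ((n j : ℕ):ℤ)) i - 1) j / ((q j:ℕ):ℤ)))
          = z i ^ ((((n i:ℕ):ℤ) - 1) / ((q i:ℕ):ℤ)) := by
        rw [Finset.prod_eq_single i]
        · rw [Function.update_self]
        · intro j _ hj
          rw [Function.update_of_ne hj]
          have : ((n j : ℕ):ℤ) / ((q j:ℕ):ℤ) = 0 :=
            Int.ediv_eq_zero_of_lt (by positivity) (by exact_mod_cast (n j).2)
          rw [this, zpow_zero]
        · intro h
          exact absurd (Finset.mem_univ i) h
      rw [hprod]
      by_cases h : dn q i n = n'
      · rw [if_pos h, if_pos h.symm]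
      · rw [if_neg h, if_neg (fun he => h he.symm)]

/-- Evaluation of a matrix entry. -/
lemma eval_entry (V : (Fin d → ℤ) → ℂ) (n n' : Wt q) :
    evalA z hz lam (Mmat q V n n') = DVmat q V z n n' - lam * (if n = n' then 1 else 0) := by
  classical
  unfold Mmat
  rw [map_sub, map_sum]
  rw [DVmat_entry q z V n n']
  have hdiag : evalA z hz lam (if n' = n then Finsupp.single ((0 : Fin d → ℤ), (1:ℕ)) (-1 : ℂ)
      + Finsupp.single ((0 : Fin d → ℤ), (0:ℕ)) (V (nbar q n)) else 0)
      = V (nbar q n) * (if n = n' then 1 else 0) - lam * (if n = n' then 1 else 0) := by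
    by_cases h : n' = n
    · rw [if_pos h, map_add, evalA_single, evalA_single, if_pos h.symm]
      simp
      ring
    · rw [if_neg h, map_zero, if_neg (fun he => h he.symm)]
      ring
  have hterm : ∀ i : Fin d,
      evalA z hz lam ((if n' = up q i n then Finsupp.single (wp q i n, (0:ℕ)) (1 : ℂ) else 0)
        + (if n' = dn q i n then Finsupp.single (wm q i n, (0:ℕ)) (1 : ℂ) else 0))
      = (if n' = up q i n then z i ^ ((((n i:ℕ):ℤ) + 1) / ((q i:ℕ):ℤ)) else 0)
          + (if n' = dn q i n then z i ^ ((((n i:ℕ):ℤ) - 1) / ((q i:ℕ):ℤ)) else 0) := by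
    intro i
    rw [map_add]
    congr 1
    · split_ifs with h
      · rw [evalA_single]
        have : (∏ j, z j ^ (wp q i n) j) = z i ^ ((((n i:ℕ):ℤ) + 1) / ((q i:ℕ):ℤ)) := by
          rw [Finset.prod_eq_single i]
          · rw [wp, Pi.single_eq_same]
          · intro j _ hj
            rw [wp, Pi.single_eq_of_ne hj, zpow_zero]
          · intro h'
            exact absurd (Finset.mem_univ i) h'
        rw [this]
        simp
      · rw [map_zero]
    · split_ifs with h
      · rw [evalA_single]
        have : (∏ j, z j ^ (wm q i n) j) = z i ^ ((((n i:ℕ):ℤ) - 1) / ((q i:ℕ):ℤ)) := by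
          rw [Finset.prod_eq_single i]
          · rw [wm, Pi.single_eq_same]
          · intro j _ hj
            rw [wm, Pi.single_eq_of_ne hj, zpow_zero]
          · intro h'
            exact absurd (Finset.mem_univ i) h'
        rw [this]
        simp
      · rw [map_zero]
  rw [hdiag, Finset.sum_congr rfl (fun i _ => hterm i)]
  ring

/-- Evaluation of the determinant gives `𝒫_V`. -/
lemma eval_cP (V : (Fin d → ℤ) → ℂ) :
    evalA z hz lam (cP q V) = scriptP q V z lam := by
  classical
  rw [cP]
  rw [show (evalA z hz lam) ((Mmat q V).det)
      = ((evalA z hz lam).toRingHom) ((Mmat q V).det) from rfl]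
  rw [RingHom.map_det]
  rw [scriptP]
  congr 1
  funext n n'
  show evalA z hz lam (Mmat q V n n') = _
  rw [eval_entry q z hz lam V n n']
  simp only [Matrix.sub_apply, Matrix.smul_apply, Matrix.one_apply, smul_eq_mul]

end eval

/-! ### Separation: a Laurent polynomial vanishing on the torus is zero -/

/-- The character monoid. -/
abbrev Mn (d : ℕ) := (Fin d → ℂˣ) × ℂˣ

/-- The unit-valued character attached to an exponent. -/
def chu (a : G d) : Mn d →* ℂˣ where
  toFun := fun p => (∏ j, (p.1 j) ^ (a.1 j)) * p.2 ^ a.2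
  map_one' := by simp
  map_mul' := by
    intro p p'
    show (∏ j, (p.1 j * p'.1 j) ^ (a.1 j)) * (p.2 * p'.2) ^ a.2 = _
    rw [Finset.prod_congr rfl (fun j _ => mul_zpow (p.1 j) (p'.1 j) (a.1 j)),
      Finset.prod_mul_distrib, mul_pow]
    exact mul_mul_mul_comm _ _ _ _

/-- The complex-valued character. -/
def chC (a : G d) : Mn d →* ℂ := (Units.coeHom ℂ).comp (chu a)

lemma chC_apply (a : G d) (p : Mn d) :
    chC a p = (∏ j, ((p.1 j : ℂ)) ^ (a.1 j)) * ((p.2 : ℂ)) ^ a.2 := by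
  show ((( ∏ j, (p.1 j) ^ (a.1 j)) * p.2 ^ a.2 : ℂˣ) : ℂ) = _
  rw [Units.val_mul, Units.val_pow_eq_pow_val]
  congr 1
  rw [← Units.coeHom_apply, map_prod]
  apply Finset.prod_congr rfl
  intro j _
  rw [Units.coeHom_apply, Units.val_zpow_eq_zpow_val]

lemma chC_injective : Function.Injective (chC (d := d)) := by
  intro a b hab
  have habs : ∀ p : Mn d, chC a p = chC b p := fun p => congrFun (congrArg _ hab) p
  have h2 : a.2 = b.2 := by
    have hx := habs (1, Units.mk0 (2:ℂ) (by norm_num))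
    rw [chC_apply, chC_apply] at hx
    have hone : ∀ (e : Fin d → ℤ),
        (∏ j, ((((1 : Fin d → ℂˣ)) j : ℂ)) ^ (e j)) = 1 := by
      intro e
      apply Finset.prod_eq_one
      intro j _
      simp
    rw [hone, hone, one_mul, one_mul] at hx
    have habs2 : ‖(((Units.mk0 (2:ℂ) (by norm_num) : ℂˣ) : ℂ) ^ a.2)‖
        = ‖(((Units.mk0 (2:ℂ) (by norm_num) : ℂˣ) : ℂ) ^ b.2)‖ := by
      rw [hx]
    rw [norm_pow, norm_pow] at habs2
    simp only [Units.val_mk0] at habs2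
    norm_num at habs2
    exact habs2
  have h1 : a.1 = b.1 := by
    funext j₀
    have hx := habs (fun j => if j = j₀ then Units.mk0 (2:ℂ) (by norm_num) else 1, 1)
    rw [chC_apply, chC_apply] at hx
    have hprod : ∀ (e : Fin d → ℤ),
        (∏ j, ((((fun j => if j = j₀ then Units.mk0 (2:ℂ) (by norm_num) else 1)
            : Fin d → ℂˣ) j : ℂ)) ^ (e j)) = (2:ℂ) ^ (e j₀) := by
      intro e
      rw [Finset.prod_eq_single j₀]
      · simp
      · intro j _ hj
        simp [hj]
      · intro h
        exact absurd (Finset.mem_univ j₀) h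
    rw [hprod, hprod] at hx
    simp only [Units.val_one, one_pow, mul_one] at hx
    have habs2 : ‖((2:ℂ) ^ (a.1 j₀))‖ = ‖((2:ℂ) ^ (b.1 j₀))‖ := by
      rw [hx]
    rw [norm_zpow, norm_zpow] at habs2
    norm_num at habs2
    exact habs2
  exact Prod.ext h1 h2

/-- A Laurent polynomial vanishing for all `z ∈ (ℂ^*)^d`, `λ ∈ ℂ` is zero. -/
lemma separation {c : A d}
    (h : ∀ (z : Fin d → ℂ) (lam : ℂ), (∀ j, z j ≠ 0) →
      (c.sum fun a C => C * (∏ j, z j ^ a.1 j) * lam ^ a.2) = 0) : c = 0 := by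
  classical
  have lind : LinearIndependent ℂ (fun a : G d => ⇑(chC a)) :=
    (linearIndependent_monoidHom (Mn d) ℂ).comp chC chC_injective
  have hzero : (∑ a ∈ c.support, c a • (⇑(chC a) : Mn d → ℂ)) = 0 := by
    funext p
    rw [Finset.sum_apply]
    show (∑ a ∈ c.support, (c a • (⇑(chC a) : Mn d → ℂ)) p) = 0
    have hc : ∀ a ∈ c.support, (c a • (⇑(chC a) : Mn d → ℂ)) p = c a * chC a p :=
      fun a _ => rfl
    rw [Finset.sum_congr rfl hc]
    have happ := h (fun j => ((p.1 j : ℂ))) ((p.2 : ℂ)) (fun j => Units.ne_zero _)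
    rw [Finsupp.sum] at happ
    rw [← happ]
    apply Finset.sum_congr rfl
    intro a _
    rw [chC_apply]
    ring
  have hmem := linearIndependent_iff'.1 lind c.support c hzero
  ext a
  by_cases ha : a ∈ c.support
  · exact hmem a ha
  · exact Finsupp.notMem_support_iff.1 ha

/-! ### The main argument -/

lemma K_trichotomy (x y : K d) : x < y ∨ x = y ∨ y < x := by
  have h := (Pi.isTrichotomous_lex (ι := Fin (d+2)) (β := fun _ => ℤ)
    (· < ·) (@fun _ => (· < ·)) IsWellFounded.wf).trichotomous
  exact lt_trichotomy x y

lemma exists_max (O : OrdKey d) {x : A d} (hx : x ≠ 0) :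
    ∃ a ∈ x.support, ∀ b ∈ x.support, O.u b ≤ O.u a := by
  classical
  have hne : (x.support.image O.u).Nonempty :=
    (Finset.image_nonempty).2 (Finsupp.support_nonempty_iff.2 hx)
  obtain ⟨m, hm, hmax⟩ : ∃ m ∈ x.support.image O.u, ∀ y ∈ x.support.image O.u, ¬ m < y := by
    obtain ⟨m, hm⟩ := Finset.exists_maximal hne
    exact ⟨m, hm.prop, fun y hy hlt => absurd (hlt.trans_le (hm.2 hy hlt.le)) (lt_irrefl _)⟩
  obtain ⟨a, ha, rfl⟩ := Finset.mem_image.1 hm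
  refine ⟨a, ha, fun b hb => ?_⟩
  have hbm : O.u b ∈ x.support.image O.u := Finset.mem_image_of_mem _ hb
  rcases K_trichotomy (O.u b) (O.u a) with h | h | h
  · exact le_of_lt h
  · exact le_of_eq h
  · exact absurd h (hmax _ hbm)

lemma pin (O : OrdKey d) {x y : A d} {a b p : G d}
    (ha : a ∈ x.support) (hamax : ∀ a' ∈ x.support, O.u a' ≤ O.u a)
    (hb : b ∈ y.support) (hbmax : ∀ b' ∈ y.support, O.u b' ≤ O.u b)
    (hp : p ∈ (x * y).support) (hpmax : ∀ c' ∈ (x * y).support, O.u c' ≤ O.u p) :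
    a + b = p := by
  have hcoeff : (x * y) (a + b) = x a * y b := O.mul_apply_max hamax hbmax
  have hmem : a + b ∈ (x * y).support := by
    rw [Finsupp.mem_support_iff, hcoeff]
    exact mul_ne_zero (Finsupp.mem_support_iff.1 ha) (Finsupp.mem_support_iff.1 hb)
  have h1 : O.u (a + b) ≤ O.u p := hpmax _ hmem
  obtain ⟨a', ha', b', hb', hab'⟩ := support_mul_exists hp
  have h2 : O.u p ≤ O.u (a + b) := by
    rw [← hab']
    calc O.u (a' + b') ≤ O.u (a + b') := O.mono (hamax a' ha') b'
      _ ≤ O.u (a + b) := by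
          rw [add_comm a b', add_comm a b]
          exact O.mono (hbmax b' hb') a
  exact O.inj (le_antisymm h1 h2)

variable (V : (Fin d → ℤ) → ℂ)

lemma topPt_mem : topPt q ∈ (cP q V).support := by
  rw [Finsupp.mem_support_iff, cP_coeff_top]
  exact pow_ne_zero _ (by norm_num)

lemma topPt_max_psi : ∀ c' ∈ (cP q V).support, (keyPsi (d := d)).u c' ≤ keyPsi.u (topPt q) := by
  intro c' hc
  have h1 := cP_psi_le q V hc
  rcases lt_or_eq_of_le h1 with h | h
  · exact keyPsi_le_of_cases (Or.inl (by
      show (c'.2 : ℤ) < ((topPt q).2 : ℤ)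
      exact_mod_cast h))
  · exact keyPsi_le_of_cases (Or.inr (cP_psi_top q V hc h))

lemma topPt_max_plus (j : Fin d) :
    ∀ c' ∈ (cP q V).support, (keyPlus q j).u c' ≤ (keyPlus q j).u (topPt q) := by
  intro c' hc
  have hPhiTop : Phi q j (topPt q) = (Qc q : ℤ) := by
    simp [Phi, topPt]
  have h1 := cP_phi_le q V j hc
  rw [← hPhiTop] at h1
  rcases lt_or_eq_of_le h1 with h | h
  · exact keyPlus_le_of_cases q (Or.inl h)
  · have h2 := cP_psi_le q V hc
    rcases lt_or_eq_of_le h2 with h' | h'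
    · refine keyPlus_le_of_cases q (Or.inr ⟨h, Or.inl ?_⟩)
      show (c'.2 : ℤ) < ((topPt q).2 : ℤ)
      exact_mod_cast h'
    · exact keyPlus_le_of_cases q (Or.inr ⟨h, Or.inr (cP_psi_top q V hc h')⟩)

lemma t0_mem (j : Fin d) : t0 q j ∈ (cP q V).support :=
  Finsupp.mem_support_iff.2 (cP_coeff_t0 q V j)

lemma t0_max_minus (j : Fin d) :
    ∀ c' ∈ (cP q V).support, (keyMinus q j).u c' ≤ (keyMinus q j).u (t0 q j) := by
  intro c' hc
  have h1 := cP_phi_le q V j hc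
  rw [← t0_phi q j] at h1
  rcases lt_or_eq_of_le h1 with h | h
  · exact keyMinus_le_of_cases q (Or.inl h)
  · by_cases h' : c'.2 = 0
    · exact keyMinus_le_of_cases q (Or.inr ⟨h, Or.inr (cP_phi_top q V j hc (by
        rw [← t0_phi q j]; exact h) h')⟩)
    · refine keyMinus_le_of_cases q (Or.inr ⟨h, Or.inl ?_⟩)
      have hp : 0 < c'.2 := Nat.pos_of_ne_zero h'
      have ht : (t0 q j).2 = 0 := t0_psi q j
      rw [ht]
      have : (0:ℤ) < (c'.2 : ℤ) := by exact_mod_cast hp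
      omega

/-- If the first factor is `λ`-free, it is a monomial. -/
lemma unit_case {x y : A d} (hxy : x * y = cP q V)
    (h0 : ∀ s ∈ x.support, s.2 = 0) :
    ∃ a C, C ≠ 0 ∧ x = Finsupp.single a C := by
  classical
  set Qv := Qc q with hQv
  set yQ : A d := Finsupp.filter (fun t : G d => t.2 = Qv) y with hyQdef
  have hyQ_supp : yQ.support ⊆ y.support := by
    rw [hyQdef, Finsupp.support_filter]
    exact Finset.filter_subset _ _
  have hyQ_psi : ∀ t ∈ yQ.support, t.2 = Qv := by
    intro t ht
    rw [hyQdef, Finsupp.support_filter, Finset.mem_filter] at ht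
    exact ht.2
  have hyQ_eq : ∀ t ∈ yQ.support, yQ t = y t := by
    intro t ht
    rw [hyQdef, Finsupp.filter_apply, if_pos (hyQ_psi t ht)]
  -- the key product identity
  have key : x * yQ = Finsupp.single (topPt q) ((-1:ℂ) ^ Qv) := by
    ext p
    rw [A_mul_apply]
    by_cases hp2 : p.2 = Qv
    · have hxyp : (x * y) p = Finsupp.sum x fun a₁ b₁ =>
          Finsupp.sum y fun a₂ b₂ => if a₁ + a₂ = p then b₁ * b₂ else 0 :=
        A_mul_apply x y p
      have heq : (Finsupp.sum x fun a₁ b₁ =>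
          Finsupp.sum yQ fun a₂ b₂ => if a₁ + a₂ = p then b₁ * b₂ else 0)
          = Finsupp.sum x fun a₁ b₁ =>
          Finsupp.sum y fun a₂ b₂ => if a₁ + a₂ = p then b₁ * b₂ else 0 := by
        apply Finsupp.sum_congr
        intro a₁ ha₁
        rw [Finsupp.sum, Finsupp.sum]
        rw [Finset.sum_subset hyQ_supp ?_]
        · apply Finset.sum_congr rfl
          intro a₂ ha₂
          by_cases hm : a₂ ∈ yQ.support
          · rw [hyQ_eq a₂ hm]
          · rw [Finsupp.notMem_support_iff.1 hm]
            split_ifs with h3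
            · exfalso
              have hs1 : a₁.2 = 0 := h0 a₁ ha₁
              have hs2 : a₁.2 + a₂.2 = p.2 := congrArg Prod.snd h3
              have : ¬ (a₂.2 = Qv) := by
                intro hQ
                rw [hyQdef, Finsupp.support_filter, Finset.mem_filter] at hm
                exact hm ⟨ha₂, hQ⟩
              omega
            · rfl
        · intro a₂ ha₂ hna₂
          split_ifs with h3
          · exfalso
            have hs1 : a₁.2 = 0 := h0 a₁ ha₁
            have hs2 : a₁.2 + a₂.2 = p.2 := congrArg Prod.snd h3
            have : ¬ (a₂.2 = Qv) := by
              intro hQ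
              rw [hyQdef, Finsupp.support_filter, Finset.mem_filter] at hna₂
              exact hna₂ ⟨ha₂, hQ⟩
            omega
          · rfl
      rw [heq, ← hxyp, hxy]
      by_cases hpt : p = topPt q
      · subst hpt
        rw [cP_coeff_top, Finsupp.single_eq_same]
      · have hz : cP q V p = 0 := by
          rw [← Finsupp.notMem_support_iff]
          intro hmem
          exact hpt (cP_psi_top q V hmem hp2)
        rw [hz, Finsupp.single_eq_of_ne' (fun he => hpt he.symm)]
    · have hlhs : (Finsupp.sum x fun a₁ b₁ =>
          Finsupp.sum yQ fun a₂ b₂ => if a₁ + a₂ = p then b₁ * b₂ else 0) = 0 := by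
        rw [Finsupp.sum]
        apply Finset.sum_eq_zero
        intro a₁ ha₁
        rw [Finsupp.sum]
        apply Finset.sum_eq_zero
        intro a₂ ha₂
        rw [if_neg]
        intro h3
        have hs1 : a₁.2 = 0 := h0 a₁ ha₁
        have hs2 : a₁.2 + a₂.2 = p.2 := congrArg Prod.snd h3
        have := hyQ_psi a₂ ha₂
        omega
      rw [hlhs, Finsupp.single_eq_of_ne']
      intro he
      apply hp2
      rw [← he]
      rfl
  have hC : ((-1:ℂ) ^ Qv) ≠ 0 := pow_ne_zero _ (by norm_num)
  have hx0 : x ≠ 0 := by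
    intro h
    rw [h, zero_mul] at key
    have h2 := congrArg (fun c : A d => c (topPt q)) key
    simp only [Finsupp.coe_zero, Pi.zero_apply, Finsupp.single_eq_same] at h2
    exact hC h2.symm
  have hyQ0 : yQ ≠ 0 := by
    intro h
    rw [h, mul_zero] at key
    have h2 := congrArg (fun c : A d => c (topPt q)) key
    simp only [Finsupp.coe_zero, Pi.zero_apply, Finsupp.single_eq_same] at h2
    exact hC h2.symm
  have hsupp : (x * yQ).support = {topPt q} := by
    rw [key]
    exact Finsupp.support_single_ne_zero _ hC
  have hmemtop : topPt q ∈ (x * yQ).support := by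
    rw [hsupp]; exact Finset.mem_singleton_self _
  have hmaxP : ∀ c' ∈ (x * yQ).support, (keyPsi (d := d)).u c' ≤ keyPsi.u (topPt q) := by
    intro c' hc
    rw [hsupp, Finset.mem_singleton] at hc
    rw [hc]
  have hmaxN : ∀ c' ∈ (x * yQ).support, (keyNeg (d := d)).u c' ≤ keyNeg.u (topPt q) := by
    intro c' hc
    rw [hsupp, Finset.mem_singleton] at hc
    rw [hc]
  obtain ⟨ap, hapm, hapx⟩ := exists_max keyPsi hx0
  obtain ⟨bp, hbpm, hbpx⟩ := exists_max keyPsi hyQ0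
  obtain ⟨am, hamm, hamx⟩ := exists_max keyNeg hx0
  obtain ⟨bm, hbmm, hbmx⟩ := exists_max keyNeg hyQ0
  have hpinP : ap + bp = topPt q := pin keyPsi hapm hapx hbpm hbpx hmemtop hmaxP
  have hpinN : am + bm = topPt q := pin keyNeg hamm hamx hbmm hbmx hmemtop hmaxN
  have hforce := (keyPsi (d := d)).forcing (hapx am hamm) (hbpx bm hbmm)
    (hpinN.trans hpinP.symm)
  have ham_eq : am = ap := hforce.1
  have hsub : x.support ⊆ {ap} := by
    intro s hs
    rw [Finset.mem_singleton]
    have hle1 : keyPsi.u s ≤ keyPsi.u ap := hapx s hs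
    have hle2 : keyPsi.u ap ≤ keyPsi.u s := by
      have h3 := keyNeg_rev (hamx s hs)
      rwa [ham_eq] at h3
    exact keyPsi.inj (le_antisymm hle1 hle2)
  refine ⟨ap, x ap, Finsupp.mem_support_iff.1 hapm, ?_⟩
  exact Finsupp.support_subset_singleton.1 hsub

/-- Coprimality: divisibility by all `q j` gives divisibility by the product. -/
lemma coprime_prod_dvd (hq : ∀ i j, i ≠ j → Nat.Coprime ((q i : ℕ)) ((q j : ℕ)))
    {k : ℕ} (h : ∀ j, ((q j : ℕ)) ∣ k) : (∏ j, ((q j : ℕ))) ∣ k := by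
  classical
  have main : ∀ s : Finset (Fin d), (∏ j ∈ s, ((q j : ℕ))) ∣ k := by
    intro s
    induction s using Finset.induction_on with
    | empty => simp
    | insert i s' hi ih =>
        rw [Finset.prod_insert hi]
        have hcop : Nat.Coprime ((q i : ℕ)) (∏ j ∈ s', ((q j : ℕ))) :=
          Nat.Coprime.prod_right (fun j hj => hq i j (fun he => hi (he ▸ hj)))
        exact Nat.Coprime.mul_dvd_of_dvd_of_dvd hcop (h i) ih
  exact main Finset.univ

/-- The central factorization lemma: one of the two factors of `cP` is a monomial. -/
lemma factor_monomial (hq : ∀ i j, i ≠ j → Nat.Coprime ((q i : ℕ)) ((q j : ℕ)))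
    {x y : A d} (hxy : x * y = cP q V) (hx0 : x ≠ 0) (hy0 : y ≠ 0) :
    (∃ a C, C ≠ 0 ∧ x = Finsupp.single a C) ∨ (∃ a C, C ≠ 0 ∧ y = Finsupp.single a C) := by
  classical
  obtain ⟨av, havm, havx⟩ := exists_max keyPsi hx0
  obtain ⟨bv, hbvm, hbvx⟩ := exists_max keyPsi hy0
  have htopmem : topPt q ∈ (x * y).support := by rw [hxy]; exact topPt_mem q V
  have htopmax : ∀ c' ∈ (x * y).support, (keyPsi (d := d)).u c' ≤ keyPsi.u (topPt q) := by
    rw [hxy]; exact topPt_max_psi q V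
  have hv : av + bv = topPt q := pin keyPsi havm havx hbvm hbvx htopmem htopmax
  have hk : av.2 + bv.2 = Qc q := congrArg Prod.snd hv
  have hdvd : ∀ j : Fin d, ((q j : ℕ)) ∣ av.2 := by
    intro j
    obtain ⟨ap, hapm, hapx⟩ := exists_max (keyPlus q j) hx0
    obtain ⟨bp, hbpm, hbpx⟩ := exists_max (keyPlus q j) hy0
    obtain ⟨am, hamm, hamx⟩ := exists_max (keyMinus q j) hx0
    obtain ⟨bm, hbmm, hbmx⟩ := exists_max (keyMinus q j) hy0
    have hpinP : ap + bp = topPt q := by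
      refine pin (keyPlus q j) hapm hapx hbpm hbpx htopmem ?_
      rw [hxy]; exact topPt_max_plus q V j
    have hpinN : am + bm = t0 q j := by
      refine pin (keyMinus q j) hamm hamx hbmm hbmx ?_ ?_
      · rw [hxy]; exact t0_mem q V j
      · rw [hxy]; exact t0_max_minus q V j
    -- λ-degrees of keyPlus maxima agree with the global λ-degrees
    have hap2 : ap.2 = av.2 := by
      have h1 : (ap.2:ℤ) ≤ (av.2:ℤ) := keyPsi_le_first (havx ap hapm)
      have h2 : (bp.2:ℤ) ≤ (bv.2:ℤ) := keyPsi_le_first (hbvx bp hbpm)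
      have h3 : ap.2 + bp.2 = Qc q := congrArg Prod.snd hpinP
      omega
    have ham2 : am.2 = 0 := by
      have h3 : am.2 + bm.2 = (t0 q j).2 := congrArg Prod.snd hpinN
      rw [t0_psi] at h3
      omega
    -- Φ_j values of the two maxima agree
    have hphi : Phi q j ap = Phi q j am := by
      have h1 : Phi q j am ≤ Phi q j ap := keyPlus_le_first q (hapx am hamm)
      have h2 : Phi q j ap ≤ Phi q j am := keyMinus_le_first q (hamx ap hapm)
      omega
    -- conclude divisibility
    have hdvdZ : ((q j : ℕ):ℤ) ∣ (av.2 : ℤ) := by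
      refine ⟨am.1 j - ap.1 j, ?_⟩
      have e1 : Phi q j ap = ((q j : ℕ):ℤ) * ap.1 j + (ap.2:ℤ) := rfl
      have e2 : Phi q j am = ((q j : ℕ):ℤ) * am.1 j + (am.2:ℤ) := rfl
      have e3 : (ap.2 : ℤ) = (av.2 : ℤ) := by exact_mod_cast hap2
      have e4 : (am.2 : ℤ) = 0 := by exact_mod_cast ham2
      rw [e1, e2, e3, e4] at hphi
      rw [mul_sub]
      omega
    exact_mod_cast hdvdZ
  have hQdvd : (∏ j, ((q j : ℕ))) ∣ av.2 := coprime_prod_dvd q hq hdvd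
  have hcard : Qc q = ∏ j, ((q j : ℕ)) := by
    simp [Qc, Fintype.card_pi]
  by_cases hz : av.2 = 0
  · -- x is λ-free
    left
    refine unit_case q V hxy ?_
    intro s hs
    have h1 : (s.2:ℤ) ≤ (av.2:ℤ) := keyPsi_le_first (havx s hs)
    omega
  · -- y is λ-free
    right
    have hpos : 0 < av.2 := Nat.pos_of_ne_zero hz
    have hge : Qc q ≤ av.2 := by
      rw [hcard]
      exact Nat.le_of_dvd hpos hQdvd
    have hbv0 : bv.2 = 0 := by omega
    refine unit_case q V (by rw [mul_comm]; exact hxy) ?_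
    intro s hs
    have h1 : (s.2:ℤ) ≤ (bv.2:ℤ) := keyPsi_le_first (hbvx s hs)
    omega
end S5


/-- Let `d ≥ 2` and `V : ℤ^d → ℂ` be `Γ`-periodic.  Then
`𝒫_V(z, λ)`, regarded as a Laurent polynomial in the `d + 1` variables
`z₁, …, z_d, λ`, is irreducible.  (In particular, the Bloch variety `B(V)` is
irreducible modulo periodicity.) -/
theorem statement5 (d : ℕ) (hd : 2 ≤ d) (q : Fin d → ℕ+)
    (hq : ∀ i j, i ≠ j → Nat.Coprime (q i) (q j))
    (V : (Fin d → ℤ) → ℂ) (hV : IsPeriodic q V) :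
    LaurentIrreducibleP (fun z lam => scriptP q V z lam) := by
  rintro ⟨f, g, ⟨cf, hf⟩, ⟨cg, hg⟩, hnf, hng, hfg⟩
  classical
  set cf' : S5.A d := cf with hcf'
  set cg' : S5.A d := cg with hcg'
  -- identification of the determinant with the product
  have hPeq : S5.cP q V = cf' * cg' := by
    have hvan : ∀ (z : Fin d → ℂ) (lam : ℂ), (∀ j, z j ≠ 0) →
        ((S5.cP q V - cf' * cg').sum fun a C => C * (∏ j, z j ^ a.1 j) * lam ^ a.2) = 0 := by
      intro z lam hz
      have h1 := (S5.evalA_apply z hz lam (S5.cP q V - cf' * cg')).symm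
      rw [h1, map_sub, map_mul, S5.eval_cP q z hz lam V]
      rw [S5.evalA_apply, S5.evalA_apply]
      have h2 : (Finsupp.sum cf' fun a C => C * (∏ j, z j ^ a.1 j) * lam ^ a.2) = f z lam :=
        (hf z hz lam).symm
      have h3 : (Finsupp.sum cg' fun a C => C * (∏ j, z j ^ a.1 j) * lam ^ a.2) = g z lam :=
        (hg z hz lam).symm
      have h4 : scriptP q V z lam = f z lam * g z lam := hfg z hz lam
      rw [h2, h3, h4]
      ring
    have h0 := S5.separation hvan
    have := sub_eq_zero.1 h0
    exact this
  have hcf0 : cf' ≠ 0 := by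
    intro h
    have hmem := S5.topPt_mem q V
    rw [hPeq, h, zero_mul] at hmem
    simp at hmem
  have hcg0 : cg' ≠ 0 := by
    intro h
    have hmem := S5.topPt_mem q V
    rw [hPeq, h, mul_zero] at hmem
    simp at hmem
  rcases S5.factor_monomial q V hq hPeq.symm hcf0 hcg0 with
    ⟨a, C, hC, hfeq⟩ | ⟨a, C, hC, hgeq⟩
  · apply hnf
    refine ⟨C, a.1, a.2, hC, fun z hz lam => ?_⟩
    rw [hf z hz lam, hfeq, Finsupp.sum_single_index (by simp)]
  · apply hng
    refine ⟨C, a.1, a.2, hC, fun z hz lam => ?_⟩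
    rw [hg z hz lam, hgeq, Finsupp.sum_single_index (by simp)]

end
end
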